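/- arXiv:math/0105036 — 14 statements merged into one kernel-verified Lean document; each statement's English description precedes it below -/
import Mathlib

section
/- A configuration B = {b_1 < b_2 < ... < b_n} of distinct nonzero integers is supernormal if and only if either b_1 = 1, or b_n = -1, or both -1 and +1 belong to B. -/
/-- `x ∈ ℝ` lies in the cone (nonnegative real span) of a set `B ⊆ ℤ` of integers. -/
def Cone1 (B : Set ℤ) (x : ℝ) : Prop :=
  ∃ (s : Finset ℤ) (c : ℤ → ℝ), ↑s ⊆ B ∧ (∀ b, 0 ≤ c b) ∧ x = ∑ b ∈ s, c b * (b : ℝ)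

/-- `z` is a nonnegative integer combination of elements of `B ⊆ ℤ`. -/
def NNComb1 (B : Set ℤ) (z : ℤ) : Prop :=
  ∃ (s : Finset ℤ) (c : ℤ → ℕ), ↑s ⊆ B ∧ z = ∑ b ∈ s, (c b : ℤ) * b

/-- A configuration `B ⊆ ℤ` is supernormal if for every subset `B' ⊆ B`, every integer in
`cone(B')` is a nonnegative integer combination of `B ∩ cone(B')`. -/
def Supernormal1 (B : Set ℤ) : Prop :=
  ∀ B' ⊆ B, ∀ z : ℤ, Cone1 B' (z : ℝ) → NNComb1 {b ∈ B | Cone1 B' (b : ℝ)} z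

/-!
In dimension one a cone is determined by the signs of its generators, so supernormality only
asks for the unit `σ = ±1` of each sign occurring in `B`: the integer `σ` lies in every cone
containing an element of that sign, and it is a nonnegative integer combination of elements of
`B` of its own sign only if `σ ∈ B`, since all other such elements `b` have `b * σ ≥ 2`.
Conversely, every integer `z` in a cone is `|z| • sign z`.
-/

lemma Cone1.exists_mem_mul_pos {B' : Set ℤ} {x : ℝ} (h : Cone1 B' x) (σ : ℤ)
    (hx : 0 < x * σ) : ∃ p ∈ B', 0 < p * σ := by
  obtain ⟨s, c, hs, hc, rfl⟩ := h
  by_contra! hB'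
  have hnonpos : ∑ b ∈ s, c b * ((b * σ : ℤ) : ℝ) ≤ 0 :=
    Finset.sum_nonpos fun b hb => mul_nonpos_of_nonneg_of_nonpos (hc b)
      (by exact_mod_cast hB' b (hs hb))
  push_cast at hnonpos
  rw [Finset.sum_mul] at hx
  simp only [mul_assoc] at hx
  linarith

lemma cone1_of_mem {B' : Set ℤ} {p : ℤ} (hp : p ∈ B') {x : ℝ} (hx : 0 < x * p) :
    Cone1 B' x := by
  have hp0 : (p : ℝ) ≠ 0 := by rintro h; simp [h] at hx
  refine ⟨{p}, fun _ => x * p / p ^ 2, by simpa using hp,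
    fun _ => div_nonneg hx.le (sq_nonneg _), ?_⟩
  rw [Finset.sum_singleton]
  field_simp

lemma sum_natCast_mul_ne_one {s : Finset ℤ} {c : ℤ → ℕ} {a : ℤ → ℤ}
    (ha : ∀ b ∈ s, 2 ≤ a b) : ∑ b ∈ s, (c b : ℤ) * a b ≠ 1 := by
  by_cases hc : ∀ b ∈ s, c b = 0
  · rw [Finset.sum_eq_zero fun b hb => by simp [hc b hb]]
    exact zero_ne_one
  push Not at hc
  obtain ⟨b, hb, hcb⟩ := hc
  have hterm : (c b : ℤ) * a b ≤ ∑ b ∈ s, (c b : ℤ) * a b :=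
    Finset.single_le_sum (f := fun b => (c b : ℤ) * a b)
      (fun b' hb' => mul_nonneg (c b').cast_nonneg (by linarith [ha b' hb'])) hb
  have : 1 ≤ (c b : ℤ) := by omega
  nlinarith [ha b hb]

lemma Supernormal1.unit_mem {B : Set ℤ} (h : Supernormal1 B) (h0 : (0 : ℤ) ∉ B)
    {σ : ℤ} (hσ : IsUnit σ) {p : ℤ} (hp : p ∈ B) (hpσ : 0 < p * σ) : σ ∈ B := by
  have hσ_cone : Cone1 {p} (σ : ℝ) :=
    cone1_of_mem (Set.mem_singleton p) (by rw [mul_comm]; exact_mod_cast hpσ)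
  obtain ⟨s, c, hs, hσ_eq⟩ := h {p} (by simpa using hp) σ hσ_cone
  by_contra hσB
  have hge : ∀ b ∈ s, 2 ≤ b * σ := by
    intro b hb
    obtain ⟨hbB, hb_cone⟩ := hs hb
    have hbσ : 0 ≤ b * σ := by
      by_contra! hneg
      obtain ⟨q, rfl, hq⟩ := hb_cone.exists_mem_mul_pos (-σ) (by push_cast; linarith [(by exact_mod_cast hneg : (b * σ : ℝ) < 0)])
      linarith
    have hb0 : b ≠ 0 := fun hb0 => h0 (hb0 ▸ hbB)
    have hbσ' : b ≠ σ := fun hbσ' => hσB (hbσ' ▸ hbB)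
    rcases Int.isUnit_iff.1 hσ with rfl | rfl <;> omega
  refine sum_natCast_mul_ne_one (c := c) hge ?_
  calc ∑ b ∈ s, (c b : ℤ) * (b * σ) = (∑ b ∈ s, (c b : ℤ) * b) * σ := by
        simp only [Finset.sum_mul, mul_assoc]
    _ = 1 := by rw [← hσ_eq, Int.isUnit_mul_self hσ]

lemma Supernormal1.of_unit_mem {B : Set ℤ}
    (hB : ∀ σ : ℤ, IsUnit σ → ∀ p ∈ B, 0 < p * σ → σ ∈ B) : Supernormal1 B := by
  intro B' hB' z hz
  by_cases hz0 : z = 0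
  · exact ⟨∅, fun _ => 0, by simp, by simp [hz0]⟩
  have hsign : IsUnit z.sign :=
    Int.isUnit_iff_natAbs_eq.2 (Int.natAbs_sign_of_ne_zero hz0)
  have hzσ : 0 < z * z.sign := by rw [Int.mul_sign_self]; omega
  obtain ⟨p, hpB', hpσ⟩ := hz.exists_mem_mul_pos z.sign (by exact_mod_cast hzσ)
  refine ⟨{z.sign}, fun _ => z.natAbs, ?_, ?_⟩
  · simp only [Finset.coe_singleton, Set.singleton_subset_iff]
    exact ⟨hB _ hsign p (hB' hpB') hpσ,
      cone1_of_mem hpB' (by rw [mul_comm]; exact_mod_cast hpσ)⟩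
  · rw [Finset.sum_singleton, mul_comm, Int.sign_mul_natAbs]

theorem supernormal1_iff {B : Set ℤ} (h0 : (0 : ℤ) ∉ B) :
    Supernormal1 B ↔ ∀ σ : ℤ, IsUnit σ → ∀ p ∈ B, 0 < p * σ → σ ∈ B :=
  ⟨fun h _ hσ _ hp hpσ => h.unit_mem h0 hσ hp hpσ, Supernormal1.of_unit_mem⟩

theorem stmt0 (B : Finset ℤ) (hne : B.Nonempty) (h0 : (0 : ℤ) ∉ B) :
    Supernormal1 ↑B ↔
      (B.min' hne = 1 ∨ B.max' hne = -1 ∨ ((-1 : ℤ) ∈ B ∧ (1 : ℤ) ∈ B)) := by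
  rw [supernormal1_iff (by exact_mod_cast h0)]
  have hmin := B.min'_mem hne
  have hmax := B.max'_mem hne
  constructor
  · intro h
    have hmax0 : B.max' hne ≠ 0 := fun h' => h0 (h' ▸ hmax)
    have hmin0 : B.min' hne ≠ 0 := fun h' => h0 (h' ▸ hmin)
    rcases hmax0.lt_or_gt with hmax_neg | hmax_pos
    · have := B.le_max' _ (h (-1) isUnit_one.neg _ hmax (by omega))
      omega
    have h1 := h 1 isUnit_one _ hmax (by omega)
    rcases hmin0.lt_or_gt with hmin_neg | hmin_pos
    · exact Or.inr (Or.inr ⟨h (-1) isUnit_one.neg _ hmin (by omega), h1⟩)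
    · have := B.min'_le _ h1
      omega
  · rintro hcond σ hσ p hp hpσ
    have := B.min'_le p hp
    have := B.le_max' p hp
    rcases Int.isUnit_iff.1 hσ with rfl | rfl <;>
      rcases hcond with hcond | hcond | ⟨hneg, hpos⟩
    all_goals first | assumption | (rw [← hcond]; assumption) | omega
end

section
/- A configuration B = {b_1 < ... < b_n} of distinct nonzero integers is normal if and only if either b_1 = 1, or b_n = -1, or (b_1 < 0, b_n > 0 and gcd(b_1,...,b_n) = 1). -/
/-- `B ⊆ ℤ` is normal if every integer in `cone(B)` is a nonnegative integer
combination of elements of `B`. -/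
def Normal1 (B : Set ℤ) : Prop :=
  ∀ z : ℤ, Cone1 B (z : ℝ) → NNComb1 B z

/-!
The cone of `B` is spanned by the signs of its elements, so normality amounts to: the additive
monoid `S` generated by `B` contains `sign b` for every `b ∈ B`. If all elements of `B` have the same sign,
`S` misses `±1` unless `±1 ∈ B`. If `B` has elements of both signs, `S` is closed under negation,
hence is the group generated by `B`, which by Bézout is `gcd(B) ℤ`.
-/

lemma nnComb1_iff_mem_closure {B : Set ℤ} {z : ℤ} : NNComb1 B z ↔ z ∈ AddSubmonoid.closure B := by
  constructor
  · rintro ⟨s, c, hs, rfl⟩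
    exact sum_mem fun b hb => by
      simpa only [nsmul_eq_mul] using nsmul_mem (AddSubmonoid.subset_closure (hs hb)) (c b)
  · rw [AddSubmonoid.mem_closure_iff_exists_finset_subset]
    rintro ⟨c, s, hs, -, rfl⟩
    exact ⟨s, c, hs, by simp only [nsmul_eq_mul]⟩

lemma cone1_mul_of_mem {B : Set ℤ} {b : ℤ} (hb : b ∈ B) {r : ℝ} (hr : 0 ≤ r) :
    Cone1 B (r * b) := by
  classical
  refine ⟨{b}, Pi.single b r, by simpa using hb, fun x => ?_, by simp⟩
  by_cases hx : x = b
  · subst hx; simpa using hr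
  · simp [hx]

lemma Cone1.nonneg {B : Set ℤ} (hB : ∀ b ∈ B, 0 ≤ b) {x : ℝ} (h : Cone1 B x) : 0 ≤ x := by
  obtain ⟨s, c, hs, hc, rfl⟩ := h
  exact Finset.sum_nonneg fun b hb => mul_nonneg (hc b) (by exact_mod_cast hB b (hs hb))

lemma Cone1.nonpos {B : Set ℤ} (hB : ∀ b ∈ B, b ≤ 0) {x : ℝ} (h : Cone1 B x) : x ≤ 0 := by
  obtain ⟨s, c, hs, hc, rfl⟩ := h
  exact Finset.sum_nonpos fun b hb =>
    mul_nonpos_of_nonneg_of_nonpos (hc b) (by exact_mod_cast hB b (hs hb))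

lemma cone1_intCast_sign {B : Set ℤ} {b : ℤ} (hb : b ∈ B) : Cone1 B (b.sign : ℤ) := by
  rcases eq_or_ne b 0 with rfl | hb0
  · simpa using cone1_mul_of_mem hb le_rfl
  · have habs : (|b| : ℝ) ≠ 0 := by exact_mod_cast abs_ne_zero.2 hb0
    convert cone1_mul_of_mem hb (inv_nonneg.2 (abs_nonneg (b : ℝ))) using 1
    rw [inv_mul_eq_div, eq_div_iff habs]
    exact_mod_cast Int.sign_mul_abs b

lemma one_notMem_closure_of_two_le {B : Set ℤ} (hB : ∀ b ∈ B, 2 ≤ b) :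
    (1 : ℤ) ∉ AddSubmonoid.closure B := by
  suffices ∀ z ∈ AddSubmonoid.closure B, z = 0 ∨ 2 ≤ z by simpa using this 1
  intro z hz
  induction hz using AddSubmonoid.closure_induction with
  | mem b hb => exact .inr (hB b hb)
  | zero => exact .inl rfl
  | add x y _ _ hx hy => omega

lemma neg_one_notMem_closure_of_le_neg_two {B : Set ℤ} (hB : ∀ b ∈ B, b ≤ -2) :
    (-1 : ℤ) ∉ AddSubmonoid.closure B := by
  suffices ∀ z ∈ AddSubmonoid.closure B, z = 0 ∨ z ≤ -2 by simpa using this (-1)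
  intro z hz
  induction hz using AddSubmonoid.closure_induction with
  | mem b hb => exact .inr (hB b hb)
  | zero => exact .inl rfl
  | add x y _ _ hx hy => omega

lemma Finset.gcd_dvd_of_mem_addSubmonoidClosure {B : Finset ℤ} {z : ℤ}
    (hz : z ∈ AddSubmonoid.closure (B : Set ℤ)) : B.gcd id ∣ z := by
  induction hz using AddSubmonoid.closure_induction with
  | mem b hb => exact Finset.gcd_dvd hb
  | zero => exact dvd_zero _
  | add x y _ _ hx hy => exact dvd_add hx hy

lemma Finset.gcd_eq_one_of_one_mem_addSubmonoidClosure {B : Finset ℤ}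
    (h : (1 : ℤ) ∈ AddSubmonoid.closure (B : Set ℤ)) : B.gcd id = 1 :=
  Int.eq_one_of_dvd_one (Int.nonneg_of_normalize_eq_self B.normalize_gcd)
    (Finset.gcd_dvd_of_mem_addSubmonoidClosure h)

lemma AddSubgroup.closure_eq_top_of_gcd_eq_one {B : Finset ℤ} (hB : B.gcd id = 1) :
    AddSubgroup.closure (B : Set ℤ) = ⊤ := by
  obtain ⟨g, hg⟩ := B.gcd_eq_sum_mul id
  have hone : (1 : ℤ) ∈ AddSubgroup.closure (B : Set ℤ) := by
    rw [← hB, hg]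
    exact sum_mem fun b hb => by
      simpa [mul_comm] using zsmul_mem (AddSubgroup.subset_closure hb) (g b)
  exact eq_top_iff.2 fun z _ => by simpa using zsmul_mem hone z

lemma AddSubmonoid.neg_mem_of_mul_neg (S : AddSubmonoid ℤ) {a x : ℤ} (ha : a ∈ S) (hx : x ∈ S)
    (hax : a * x < 0) : -x ∈ S := by
  have ha0 : a ≠ 0 := by rintro rfl; simp at hax
  -- `|x| a` and `|a| x` cancel because `a` and `x` have opposite signs.
  have key : -x = x.natAbs • a + (a.natAbs - 1) • x := by
    simp only [nsmul_eq_mul]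
    rw [Nat.cast_sub (Int.natAbs_pos.2 ha0)]
    push_cast [Int.natCast_natAbs]
    rcases mul_neg_iff.1 hax with ⟨ha', hx'⟩ | ⟨ha', hx'⟩
    · rw [abs_of_pos ha', abs_of_neg hx']; ring
    · rw [abs_of_neg ha', abs_of_pos hx']; ring
  rw [key]
  exact add_mem (nsmul_mem ha _) (nsmul_mem hx _)

lemma AddSubmonoid.closure_eq_top_of_gcd_eq_one {B : Finset ℤ} {a c : ℤ} (ha : a ∈ B)
    (hc : c ∈ B) (ha0 : a < 0) (hc0 : 0 < c) (hB : B.gcd id = 1) :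
    AddSubmonoid.closure (B : Set ℤ) = ⊤ := by
  set S := AddSubmonoid.closure (B : Set ℤ)
  have hneg : ∀ x ∈ S, -x ∈ S := by
    intro x hx
    rcases lt_trichotomy x 0 with h | rfl | h
    · exact S.neg_mem_of_mul_neg (subset_closure hc) hx (mul_neg_of_pos_of_neg hc0 h)
    · simp
    · exact S.neg_mem_of_mul_neg (subset_closure ha) hx (mul_neg_of_neg_of_pos ha0 h)
  let G : AddSubgroup ℤ := { S with neg_mem' := hneg _ }
  have hG : AddSubgroup.closure (B : Set ℤ) ≤ G := (AddSubgroup.closure_le G).2 subset_closure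
  rw [AddSubgroup.closure_eq_top_of_gcd_eq_one hB, top_le_iff] at hG
  exact eq_top_iff.2 fun z _ => show z ∈ G by simp [hG]

lemma Normal1.sign_mem_closure {B : Set ℤ} (hN : Normal1 B) {b : ℤ} (hb : b ∈ B) :
    b.sign ∈ AddSubmonoid.closure B :=
  nnComb1_iff_mem_closure.1 (hN _ (cone1_intCast_sign hb))

lemma normal1_of_one_mem {B : Set ℤ} (h1 : 1 ∈ B) (hB : ∀ b ∈ B, 0 ≤ b) : Normal1 B := by
  intro z hz
  lift z to ℕ using (by exact_mod_cast hz.nonneg hB)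
  exact ⟨{1}, fun _ => z, by simpa using h1, by simp⟩

lemma normal1_of_neg_one_mem {B : Set ℤ} (h1 : -1 ∈ B) (hB : ∀ b ∈ B, b ≤ 0) : Normal1 B := by
  intro z hz
  obtain ⟨n, rfl⟩ := Int.exists_eq_neg_ofNat (by exact_mod_cast hz.nonpos hB)
  exact ⟨{-1}, fun _ => n, by simpa using h1, by simp⟩

lemma normal1_of_closure_eq_top {B : Set ℤ} (h : AddSubmonoid.closure B = ⊤) : Normal1 B :=
  fun z _ => nnComb1_iff_mem_closure.2 (h ▸ AddSubmonoid.mem_top z)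

theorem stmt1 (B : Finset ℤ) (hne : B.Nonempty) (h0 : (0 : ℤ) ∉ B) :
    Normal1 ↑B ↔
      (B.min' hne = 1 ∨ B.max' hne = -1 ∨
        (B.min' hne < 0 ∧ 0 < B.max' hne ∧ B.gcd id = 1)) := by
  have hm := B.min'_mem hne
  have hM := B.max'_mem hne
  have hmin : ∀ b ∈ B, B.min' hne ≤ b := fun b hb => B.min'_le b hb
  have hmax : ∀ b ∈ B, b ≤ B.max' hne := fun b hb => B.le_max' b hb
  constructor
  · intro hN
    rcases (ne_of_mem_of_not_mem hm h0).lt_or_gt with hm0 | hm0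
    · rcases (ne_of_mem_of_not_mem hM h0).lt_or_gt with hM0 | hM0
      · refine .inr (.inl (by_contra fun h => neg_one_notMem_closure_of_le_neg_two (B := B) ?_ ?_))
        · exact fun b hb => by have := hmax b hb; omega
        · simpa [Int.sign_eq_neg_one_of_neg hM0] using hN.sign_mem_closure hM
      · refine .inr (.inr ⟨hm0, hM0, Finset.gcd_eq_one_of_one_mem_addSubmonoidClosure ?_⟩)
        simpa [Int.sign_eq_one_of_pos hM0] using hN.sign_mem_closure hM
    · refine .inl (by_contra fun h => one_notMem_closure_of_two_le (B := B) ?_ ?_)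
      · exact fun b hb => by have := hmin b hb; omega
      · simpa [Int.sign_eq_one_of_pos hm0] using hN.sign_mem_closure hm
  · rintro (h | h | ⟨hm0, hM0, hgcd⟩)
    · exact normal1_of_one_mem (h ▸ hm) fun b hb => by have := hmin b hb; omega
    · exact normal1_of_neg_one_mem (h ▸ hM) fun b hb => by have := hmax b hb; omega
    · exact normal1_of_closure_eq_top
        (AddSubmonoid.closure_eq_top_of_gcd_eq_one hm hM hm0 hM0 hgcd)
end

section
/- The configuration B = {-2, 3} ⊆ ℤ is normal but not supernormal. -/
theorem stmt2 : Normal1 ({-2, 3} : Set ℤ) ∧ ¬ Supernormal1 ({-2, 3} : Set ℤ) := by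
  constructor
  · intro z _
    refine ⟨{-2, 3}, fun b => if b = -2 then (z + 3 * |z|).toNat else (z + 2 * |z|).toNat,
      by simp, ?_⟩
    have hne : (3 : ℤ) = -2 ↔ False := by norm_num
    rw [Finset.sum_pair (by decide : (-2 : ℤ) ≠ 3)]
    simp only [reduceIte, hne, if_false]
    rw [Int.toNat_of_nonneg (by rcases abs_cases z with ⟨h, _⟩ | ⟨h, _⟩ <;> omega),
        Int.toNat_of_nonneg (by rcases abs_cases z with ⟨h, _⟩ | ⟨h, _⟩ <;> omega)]
    ring
  · intro h
    obtain ⟨s, c, hs, hz⟩ := h {-2} (by simp) (-1)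
      ⟨{-2}, fun _ => 1/2, by simp, fun b => by norm_num, by norm_num⟩
    have hb : ∀ b ∈ s, b = -2 := by
      intro b hb
      have hmem := hs hb
      simp only [Set.mem_setOf_eq, Set.mem_insert_iff, Set.mem_singleton_iff] at hmem
      rcases hmem.1 with rfl | rfl
      · rfl
      · exfalso
        obtain ⟨s', c', hs', hc', he⟩ := hmem.2
        have hle : (∑ b ∈ s', c' b * (b : ℝ)) ≤ 0 := by
          apply Finset.sum_nonpos
          intro b hb'
          have hb2 : b = -2 := by simpa using hs' hb'
          subst hb2
          have := hc' (-2)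
          push_cast
          nlinarith
        rw [← he] at hle
        norm_num at hle
    have hdvd : (2 : ℤ) ∣ ∑ b ∈ s, (c b : ℤ) * b := by
      apply Finset.dvd_sum
      intro b hb'
      rw [hb b hb']
      exact Dvd.dvd.mul_left ⟨-1, rfl⟩ _
    rw [← hz] at hdvd
    omega
end

section
/- The configuration B = {(1,0), (1,2), (0,1)} ⊆ ℤ² is pointed and normal but not supernormal. -/
/-- `x ∈ ℝ^m` lies in the cone (nonnegative real span) of `B ⊆ ℤ^m`. -/
def ConeM {m : ℕ} (B : Set (Fin m → ℤ)) (x : Fin m → ℝ) : Prop :=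
  ∃ (s : Finset (Fin m → ℤ)) (c : (Fin m → ℤ) → ℝ),
    ↑s ⊆ B ∧ (∀ b, 0 ≤ c b) ∧ ∀ i, x i = ∑ b ∈ s, c b * (b i : ℝ)

/-- `z ∈ ℤ^m` is a nonnegative integer combination of elements of `B ⊆ ℤ^m`. -/
def NNCombM {m : ℕ} (B : Set (Fin m → ℤ)) (z : Fin m → ℤ) : Prop :=
  ∃ (s : Finset (Fin m → ℤ)) (c : (Fin m → ℤ) → ℕ),
    ↑s ⊆ B ∧ ∀ i, z i = ∑ b ∈ s, (c b : ℤ) * b i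

/-- `B ⊆ ℤ^m` is supernormal if for every subset `B' ⊆ B` every lattice point of
`cone(B')` is a nonnegative integer combination of `B ∩ cone(B')`. -/
def SupernormalM {m : ℕ} (B : Set (Fin m → ℤ)) : Prop :=
  ∀ B' ⊆ B, ∀ z : Fin m → ℤ, ConeM B' (fun i => (z i : ℝ)) →
    NNCombM {b ∈ B | ConeM B' (fun i => (b i : ℝ))} z

/-- `B ⊆ ℤ^m` is normal if every lattice point of `cone(B)` is a nonnegative
integer combination of `B`. -/
def NormalM {m : ℕ} (B : Set (Fin m → ℤ)) : Prop :=
  ∀ z : Fin m → ℤ, ConeM B (fun i => (z i : ℝ)) → NNCombM B z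

lemma v_ne : (![1,0] : Fin 2 → ℤ) ≠ ![0,1] := by
  intro h; have := congrFun h 0; simp at this

lemma v_ne' : (![1,0] : Fin 2 → ℤ) ≠ ![1,2] := by
  intro h; have := congrFun h 1; simp at this

/-- (0,1) is not in the cone of {(1,0),(1,2)}. -/
lemma not_cone01 : ¬ ConeM ({![1,0], ![1,2]} : Set (Fin 2 → ℤ))
    (fun i => (((![0,1] : Fin 2 → ℤ)) i : ℝ)) := by
  rintro ⟨t, d, ht, hd, he⟩
  have h0 := he 0
  have h1 := he 1
  simp only [Matrix.cons_val_zero, Matrix.cons_val_one, Matrix.head_cons] at h0 h1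
  push_cast at h0 h1
  have hb0 : ∀ b ∈ t, d b * (b 0 : ℝ) = d b := by
    intro b hb
    rcases ht hb with h | h <;> subst h <;> simp
  rw [Finset.sum_congr rfl hb0] at h0
  have hdz : ∀ b ∈ t, d b = 0 := by
    intro b hb
    have := (Finset.sum_eq_zero_iff_of_nonneg (fun b _ => hd b)).mp h0.symm
    exact this b hb
  have : (1 : ℝ) = 0 := by
    rw [h1, Finset.sum_eq_zero]
    intro b hb; rw [hdz b hb]; ring
  norm_num at this

/-- `B = {(1,0),(1,2),(0,1)}` is pointed and normal but not supernormal. -/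
theorem stmt4 :
    (∃ u : Fin 2 → ℝ, ∀ b ∈ ({![1,0], ![1,2], ![0,1]} : Set (Fin 2 → ℤ)),
        0 < ∑ i, (b i : ℝ) * u i) ∧
    NormalM ({![1,0], ![1,2], ![0,1]} : Set (Fin 2 → ℤ)) ∧
    ¬ SupernormalM ({![1,0], ![1,2], ![0,1]} : Set (Fin 2 → ℤ)) := by
  refine ⟨⟨fun _ => 1, ?_⟩, ?_, ?_⟩
  · rintro b (h | h | h) <;> subst h <;> simp [Fin.sum_univ_two] <;> norm_num
  · -- Normal
    rintro z ⟨s, c, hs, hc, hz⟩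
    have hz' : ∀ i, ((z i : ℤ) : ℝ) = ∑ b ∈ s, c b * (b i : ℝ) := hz
    have key : ∀ i : Fin 2, (0 : ℝ) ≤ (z i : ℝ) := by
      intro i
      rw [hz' i]
      apply Finset.sum_nonneg
      intro b hb
      apply mul_nonneg (hc b)
      rcases hs hb with h | h | h <;> subst h <;> fin_cases i <;> norm_num
    have h0 : 0 ≤ z 0 := by exact_mod_cast key 0
    have h1 : 0 ≤ z 1 := by exact_mod_cast key 1
    refine ⟨{![1,0], ![0,1]}, fun b => if b = ![1,0] then (z 0).toNat else (z 1).toNat,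
      ?_, ?_⟩
    · intro b hb
      simp only [Finset.coe_insert, Finset.coe_singleton, Set.mem_insert_iff,
        Set.mem_singleton_iff] at hb
      rcases hb with h | h <;> subst h <;> simp
    · intro i
      rw [Finset.sum_insert (by simp [v_ne]), Finset.sum_singleton]
      simp only [if_pos rfl, if_neg (Ne.symm v_ne)]
      fin_cases i <;>
        simp [Int.toNat_of_nonneg h0, Int.toNat_of_nonneg h1]
  · -- not supernormal
    intro h
    have hsub : ({![1,0], ![1,2]} : Set (Fin 2 → ℤ)) ⊆ {![1,0], ![1,2], ![0,1]} := by
      intro b hb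
      simp only [Set.mem_insert_iff, Set.mem_singleton_iff] at hb ⊢; tauto
    have hcone : ConeM ({![1,0], ![1,2]} : Set (Fin 2 → ℤ))
        (fun i => (((![1,1] : Fin 2 → ℤ)) i : ℝ)) := by
      refine ⟨{![1,0], ![1,2]}, fun _ => 1/2, by simp, fun _ => by norm_num, ?_⟩
      intro i
      rw [Finset.sum_insert (by simp [v_ne']), Finset.sum_singleton]
      fin_cases i <;> norm_num
    obtain ⟨s, c, hs, hz⟩ := h _ hsub ![1,1] hcone
    have heven : ∀ b ∈ s, (2 : ℤ) ∣ (c b : ℤ) * b 1 := by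
      intro b hb
      have hbmem := hs hb
      simp only [Set.mem_setOf_eq] at hbmem
      obtain ⟨hbB, hbc⟩ := hbmem
      rcases hbB with h | h | h
      · subst h; simp
      · subst h; exact Dvd.dvd.mul_left (by norm_num) _
      · subst h; exact absurd hbc not_cone01
    have : (2 : ℤ) ∣ ![1,1] 1 := by
      rw [hz 1]; exact Finset.dvd_sum heven
    norm_num at this
end

section
/- Every two-dimensional Hilbert basis is supernormal. -/
/-!
Order the elements of `B` by angle in the half-plane `u > 0`. The key fact is that angularly
consecutive elements `p, p'` of a Hilbert basis satisfy `det (p, p') = 1`. Otherwise the triangle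
`0 p p'` contains a lattice point `z` off its edges through `0`. Among the pairs `v, w ∈ B` around
`z`, take one whose chord `vw` meets the ray of `z` closest to `0`. Then all of `B`, hence every
nonzero lattice point of `cone B`, lies beyond that chord, and `z`, being reducible, lies at least
twice as far out. But the irreducible `p` and `p'` lie less than twice as far out, and `z` lies in
the triangle `0 p p'`.

Consequently a lattice point of `cone B'` either lies on the ray of an element of `B'`, or lies
between two consecutive elements of `B ∩ cone B'` and is a nonnegative integer combination of them.
-/

open Finset

local notation "ℤ²" => Fin 2 → ℤ

namespace AddSubmonoid

variable {M : Type*}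

theorem eq_zero_or_of_mem_closure [AddMonoid M] {S : Set M} {P : M → Prop}
    (hS : ∀ b ∈ S, P b) (hadd : ∀ x y, P x → P y → P (x + y)) {x : M}
    (hx : x ∈ AddSubmonoid.closure S) : x = 0 ∨ P x := by
  induction hx using AddSubmonoid.closure_induction with
  | zero => exact .inl rfl
  | mem b hb => exact .inr (hS b hb)
  | add x y _ _ hx hy =>
    rcases hx with rfl | hx
    · simpa using hy
    rcases hy with rfl | hy
    · simpa using Or.inr hx
    exact .inr (hadd x y hx hy)

theorem pos_of_mem_closure [AddMonoid M] {S : Set M} {u : M →+ ℝ} (hu : ∀ b ∈ S, 0 < u b)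
    {x : M} (hx : x ∈ AddSubmonoid.closure S) (hx0 : x ≠ 0) : 0 < u x :=
  (eq_zero_or_of_mem_closure hu (fun x y hx hy => by rw [map_add]; positivity) hx).resolve_left hx0

theorem nonneg_of_mem_closure [AddMonoid M] {S : Set M} {u : M →+ ℝ} (hu : ∀ b ∈ S, 0 < u b)
    {x : M} (hx : x ∈ AddSubmonoid.closure S) : 0 ≤ u x := by
  rcases eq_or_ne x 0 with rfl | hx0
  · simp
  · exact (pos_of_mem_closure hu hx hx0).le

theorem zsmul_mem_closure_of_nonneg [AddGroup M] {S : Set M} {n : ℤ} (hn : 0 ≤ n) {x : M}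
    (hx : x ∈ AddSubmonoid.closure S) : n • x ∈ AddSubmonoid.closure S := by
  lift n to ℕ using hn
  rw [natCast_zsmul]
  exact nsmul_mem hx n

theorem mem_closure_erase_of_lt [AddCommMonoid M] [DecidableEq M] {B : Finset M} {u : M →+ ℝ}
    (hu : ∀ b ∈ B, 0 < u b) {b x : M} (hb : b ∈ B) (hx : x ∈ AddSubmonoid.closure (B : Set M))
    (hxb : u x < u b) : x ∈ AddSubmonoid.closure (B.erase b : Set M) := by
  rw [← insert_erase hb, coe_insert, Set.insert_eq, AddSubmonoid.closure_union,
    AddSubmonoid.mem_sup] at hx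
  obtain ⟨_, hn, y, hy, rfl⟩ := hx
  obtain ⟨n, rfl⟩ := AddSubmonoid.mem_closure_singleton.1 hn
  have hy0 : 0 ≤ u y :=
    nonneg_of_mem_closure (fun c hc => hu c (mem_of_mem_erase hc)) hy
  obtain rfl : n = 0 := by
    by_contra hn0
    have : u b ≤ n • u b := le_smul_of_one_le_left (hu b hb).le (Nat.one_le_iff_ne_zero.2 hn0)
    rw [map_add, map_nsmul] at hxb
    linarith
  simpa using hy

end AddSubmonoid

namespace LatticeCone

theorem nnCombM_iff_mem_closure {m : ℕ} {S : Set (Fin m → ℤ)} {z : Fin m → ℤ} :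
    NNCombM S z ↔ z ∈ AddSubmonoid.closure S := by
  classical
  rw [AddSubmonoid.mem_closure_iff_exists_finset_subset]
  constructor
  · rintro ⟨s, c, hs, hz⟩
    refine ⟨fun b => if b ∈ s then c b else 0, s, hs, fun b hb => ?_, ?_⟩
    · by_contra h
      exact hb (if_neg h)
    · ext i
      simp only [hz i, Finset.sum_apply]
      exact sum_congr rfl fun b hb => by simp [hb]
  · rintro ⟨c, s, hs, -, rfl⟩
    exact ⟨s, c, hs, fun i => by simp [Finset.sum_apply]⟩

noncomputable def weight {m : ℕ} (a : Fin m → ℝ) : (Fin m → ℤ) →+ ℝ where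
  toFun x := ∑ i, (x i : ℝ) * a i
  map_zero' := by simp
  map_add' x y := by simp [add_mul, sum_add_distrib]

lemma weight_apply {m : ℕ} (a : Fin m → ℝ) (x : Fin m → ℤ) :
    weight a x = ∑ i, (x i : ℝ) * a i := rfl

section Cone

variable {m : ℕ} {S : Set (Fin m → ℤ)} {a : Fin m → ℝ} {z : Fin m → ℤ}

lemma eq_zero_of_coneM_of_weight_nonpos (hS : ∀ b ∈ S, 0 < weight a b)
    (hz : ConeM S (fun i => (z i : ℝ))) (hza : weight a z ≤ 0) : z = 0 := by
  obtain ⟨s, c, hsS, hc, hzc⟩ := hz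
  simp only at hzc
  have hterm : ∀ b ∈ s, 0 ≤ c b * weight a b := fun b hb => mul_nonneg (hc b) (hS b (hsS hb)).le
  have hsum : weight a z = ∑ b ∈ s, c b * weight a b := by
    simp only [weight_apply, hzc, sum_mul, mul_sum]
    rw [sum_comm]
    simp only [mul_assoc]
  have hzero := (sum_eq_zero_iff_of_nonneg hterm).1 (le_antisymm (hsum ▸ hza) (sum_nonneg hterm))
  ext i
  have : (z i : ℝ) = 0 := by
    rw [hzc i]
    refine sum_eq_zero fun b hb => ?_
    rcases mul_eq_zero.1 (hzero b hb) with h | h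
    · simp [h]
    · exact absurd h (hS b (hsS hb)).ne'
  exact_mod_cast this

lemma weight_pos_of_coneM (hS : ∀ b ∈ S, 0 < weight a b) (hz : ConeM S (fun i => (z i : ℝ)))
    (hz0 : z ≠ 0) : 0 < weight a z :=
  lt_of_not_ge fun h => hz0 (eq_zero_of_coneM_of_weight_nonpos hS hz h)

lemma coneM_of_nsmul_mem {x : Fin m → ℤ} {k : ℕ} (hk : 0 < k) (hx : k • x ∈ S) :
    ConeM S (fun i => (x i : ℝ)) := by
  refine ⟨{k • x}, fun _ => (k : ℝ)⁻¹, by simpa using hx, fun _ => by positivity, fun i => ?_⟩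
  simp only [nsmul_eq_mul, sum_singleton, Pi.mul_apply, Pi.natCast_apply, Int.cast_mul,
    Int.cast_natCast]
  field_simp

end Cone

def cross (x y : ℤ²) : ℤ := x 0 * y 1 - x 1 * y 0

@[simp] lemma cross_self (x : ℤ²) : cross x x = 0 := by unfold cross; ring

@[simp] lemma cross_zero_right (x : ℤ²) : cross x 0 = 0 := by simp [cross]

lemma cross_anticomm (x y : ℤ²) : cross y x = -cross x y := by unfold cross; ring

@[simp] lemma cross_add_left (x y z : ℤ²) : cross (x + y) z = cross x z + cross y z := by
  simp only [cross, Pi.add_apply]; ring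

@[simp] lemma cross_add_right (x y z : ℤ²) : cross x (y + z) = cross x y + cross x z := by
  simp only [cross, Pi.add_apply]; ring

@[simp] lemma cross_sub_left (x y z : ℤ²) : cross (x - y) z = cross x z - cross y z := by
  simp only [cross, Pi.sub_apply]; ring

@[simp] lemma cross_sub_right (x y z : ℤ²) : cross x (y - z) = cross x y - cross x z := by
  simp only [cross, Pi.sub_apply]; ring

@[simp] lemma cross_smul_left (n : ℤ) (x y : ℤ²) : cross (n • x) y = n * cross x y := by
  simp only [cross, Pi.smul_apply, smul_eq_mul]; ring

@[simp] lemma cross_smul_right (n : ℤ) (x y : ℤ²) : cross x (n • y) = n * cross x y := by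
  simp only [cross, Pi.smul_apply, smul_eq_mul]; ring

lemma cross_smul_eq_add (v w x : ℤ²) : cross v w • x = cross x w • v + cross v x • w := by
  ext i
  fin_cases i <;>
    simp only [Fin.zero_eta, Fin.mk_one, cross, Pi.add_apply, Pi.smul_apply, smul_eq_mul] <;> ring

lemma cross_mul_apply (u : ℤ² →+ ℝ) (x y z : ℤ²) :
    (cross x y : ℝ) * u z = cross z y * u x + cross x z * u y := by
  have h := congrArg u (cross_smul_eq_add x y z)
  rwa [map_add, map_zsmul, map_zsmul, map_zsmul, zsmul_eq_mul, zsmul_eq_mul, zsmul_eq_mul] at h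

lemma exists_eq_smul_of_cross_eq_zero {b x : ℤ²} (hb : IsCoprime (b 0) (b 1))
    (h : cross b x = 0) : ∃ t : ℤ, x = t • b := by
  obtain ⟨p, q, hpq⟩ := hb
  refine ⟨p * x 0 + q * x 1, funext fun i => ?_⟩
  unfold cross at h
  fin_cases i <;> simp only [Fin.zero_eta, Fin.mk_one, Pi.smul_apply, smul_eq_mul]
  · linear_combination (-x 0) * hpq - q * h
  · linear_combination (-x 1) * hpq + p * h

/-- The conclusion says `z = α p + β p'` with `α, β > 0` and `α + β ≤ 1`. -/
lemma exists_mem_triangle {p p' : ℤ²} (hp : IsCoprime (p 0) (p 1))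
    (hp' : IsCoprime (p' 0) (p' 1)) (hpp' : 2 ≤ cross p p') :
    ∃ z, 0 < cross p z ∧ 0 < cross z p' ∧ cross p z + cross z p' ≤ cross p p' := by
  obtain ⟨a, c, hac⟩ := hp
  set d := cross p p'
  set z₀ : ℤ² := ![-c, a]
  have hpz₀ : cross p z₀ = 1 := by
    simp only [cross, z₀, Matrix.cons_val_zero, Matrix.cons_val_one, Matrix.cons_val_fin_one]
    linarith
  set z := z₀ - (cross z₀ p' / d) • p
  have hpz : cross p z = 1 := by
    simp only [z, cross_sub_right, cross_smul_right, cross_self, hpz₀]; ring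
  have hzp' : cross z p' = cross z₀ p' % d := by
    simp only [z, cross_sub_left, cross_smul_left, Int.emod_def]; ring
  have hr : 0 ≤ cross z p' ∧ cross z p' < d := by
    rw [hzp']; exact ⟨Int.emod_nonneg _ (by omega), Int.emod_lt_of_pos _ (by omega)⟩
  have hr0 : cross z p' ≠ 0 := by
    intro h
    obtain ⟨t, ht⟩ := exists_eq_smul_of_cross_eq_zero hp' (by rw [cross_anticomm, h, neg_zero])
    rw [ht, cross_smul_right] at hpz
    have := Int.le_of_dvd one_pos (Dvd.intro_left t hpz)
    omega
  exact ⟨z, by omega, by omega, by omega⟩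

def sector (v w : ℤ²) : Set ℤ² := {x | 0 ≤ cross v x ∧ 0 ≤ cross x w}

/-- The position of the ray through `x` on the line `u = 1`, measured by the determinant
against `a`. -/
noncomputable def rayCoord (u : ℤ² →+ ℝ) (a x : ℤ²) : ℝ := cross a x / u x

section RayCoord

variable {u : ℤ² →+ ℝ} {a x y z : ℤ²}

lemma cross_pos_iff_rayCoord_lt (ha : 0 < u a) (hx : 0 < u x) (hy : 0 < u y) :
    0 < cross x y ↔ rayCoord u a x < rayCoord u a y := by
  have key := cross_mul_apply u x y a
  rw [cross_anticomm a x, Int.cast_neg] at key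
  rw [rayCoord, rayCoord, div_lt_div_iff₀ hx hy, ← Int.cast_pos (R := ℝ)]
  constructor <;> intro h <;> nlinarith

lemma cross_nonneg_iff_rayCoord_le (ha : 0 < u a) (hx : 0 < u x) (hy : 0 < u y) :
    0 ≤ cross x y ↔ rayCoord u a x ≤ rayCoord u a y := by
  have h := cross_pos_iff_rayCoord_lt ha hy hx
  rw [cross_anticomm x y, neg_pos] at h
  rw [← not_lt, h, not_lt]

lemma rayCoord_pos_iff (hx : 0 < u x) : 0 < rayCoord u a x ↔ 0 < cross a x := by
  rw [rayCoord, div_pos_iff_of_pos_right hx, Int.cast_pos]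

lemma rayCoord_neg_iff (hx : 0 < u x) : rayCoord u a x < 0 ↔ 0 < cross x a := by
  rw [rayCoord, div_neg_iff, cross_anticomm x a]
  simp [hx, hx.not_gt]

lemma cross_pos_trans (hx : 0 < u x) (hy : 0 < u y) (hz : 0 < u z) (hxy : 0 < cross x y)
    (hyz : 0 < cross y z) : 0 < cross x z := by
  rw [cross_pos_iff_rayCoord_lt hy hx hy] at hxy
  rw [cross_pos_iff_rayCoord_lt hy hy hz] at hyz
  exact (cross_pos_iff_rayCoord_lt hy hx hz).2 (hxy.trans hyz)

end RayCoord

lemma coneM_of_mem_sector {S : Set ℤ²} {v w x : ℤ²} (hv : v ∈ S) (hw : w ∈ S)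
    (hvw : 0 < cross v w) (hx : x ∈ sector v w) : ConeM S (fun i => (x i : ℝ)) := by
  have hne : v ≠ w := by rintro rfl; simp at hvw
  have hD : (0 : ℝ) < cross v w := by exact_mod_cast hvw
  refine ⟨{v, w}, fun b => if b = v then cross x w / cross v w else cross v x / cross v w,
    by simp [Set.insert_subset_iff, hv, hw], fun b => ?_, fun i => ?_⟩
  · have h₁ : (0 : ℝ) ≤ cross x w := by exact_mod_cast hx.2
    have h₂ : (0 : ℝ) ≤ cross v x := by exact_mod_cast hx.1
    dsimp only
    split_ifs <;> positivity
  · have h := congrFun (cross_smul_eq_add v w x) i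
    simp only [Pi.add_apply, Pi.smul_apply, smul_eq_mul] at h
    dsimp only
    rw [sum_pair hne, if_pos rfl, if_neg hne.symm]
    field_simp
    rw [mul_comm]
    exact_mod_cast h

lemma exists_straddle_of_coneM {S : Set ℤ²} {z : ℤ²} (hz : ConeM S (fun i => (z i : ℝ)))
    (hz0 : z ≠ 0) :
    (∃ b ∈ S, cross b z = 0) ∨ ∃ v ∈ S, ∃ w ∈ S, 0 < cross v z ∧ 0 < cross z w := by
  by_contra! h
  obtain ⟨hpar, hside⟩ := h
  have hweight (s : ℝ) (x : ℤ²) : weight ![s * z 1, -(s * z 0)] x = s * cross x z := by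
    simp only [weight_apply, Fin.sum_univ_two, Matrix.cons_val_zero, Matrix.cons_val_one,
      Matrix.cons_val_fin_one, cross, Int.cast_sub, Int.cast_mul]
    ring
  -- `cross · z` is a weight vanishing at `z`, so it has no strict sign on `S`.
  have hsign : ∀ s : ℝ, (∀ b ∈ S, 0 < s * cross b z) → False := fun s hs =>
    hz0 (eq_zero_of_coneM_of_weight_nonpos (fun b hb => (hweight s b).symm ▸ hs b hb) hz
      (by simp [hweight]))
  by_cases hv : ∃ v ∈ S, 0 < cross v z
  · obtain ⟨v, hv, hvz⟩ := hv
    refine hsign 1 fun b hb => ?_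
    have h1 := hside v hv b hb hvz
    have h2 := hpar b hb
    rw [cross_anticomm] at h1
    have : (0 : ℝ) < cross b z := by exact_mod_cast (by omega : 0 < cross b z)
    linarith
  · simp only [not_exists, not_and, not_lt] at hv
    refine hsign (-1) fun b hb => ?_
    have : (cross b z : ℝ) < 0 := by exact_mod_cast lt_of_le_of_ne (hv b hb) (hpar b hb)
    linarith

lemma exists_supporting_pair {B : Finset ℤ²} {u : ℤ² →+ ℝ} (hu : ∀ b ∈ B, 0 < u b) {z : ℤ²}
    (hz : 0 < u z) (hzB : ∀ b ∈ B, cross b z ≠ 0) {p p' : ℤ²} (hp : p ∈ B) (hp' : p' ∈ B)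
    (hpz : 0 < cross p z) (hzp' : 0 < cross z p') :
    ∃ v ∈ B, ∃ w ∈ B, 0 < cross v z ∧ 0 < cross z w ∧
      ∀ b ∈ B, cross v w ≤ cross v b + cross b w := by
  classical
  set P := (B ×ˢ B).filter fun q => 0 < cross q.1 z ∧ 0 < cross z q.2
  have hP {v w : ℤ²} : (v, w) ∈ P ↔ v ∈ B ∧ w ∈ B ∧ 0 < cross v z ∧ 0 < cross z w := by
    simp [P, and_assoc]
  have hPpos {v w : ℤ²} (h : (v, w) ∈ P) : (0 : ℚ) < cross v w := by
    obtain ⟨hv, hw, hvz, hzw⟩ := hP.1 h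
    exact_mod_cast cross_pos_trans (hu v hv) hz (hu w hw) hvz hzw
  -- `v, w` maximise `α + β` in `z = α v + β w`: their chord crosses the ray of `z` closest to `0`.
  obtain ⟨⟨v, w⟩, hvw, hmax⟩ := P.exists_max_image
    (fun q => ((cross q.1 z + cross z q.2 : ℤ) : ℚ) / cross q.1 q.2)
    ⟨(p, p'), hP.2 ⟨hp, hp', hpz, hzp'⟩⟩
  obtain ⟨hv, hw, hvz, hzw⟩ := hP.1 hvw
  refine ⟨v, hv, w, hw, hvz, hzw, fun b hb => ?_⟩
  rcases (hzB b hb).lt_or_gt with hbz | hbz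
  · have hvb : (v, b) ∈ P := hP.2 ⟨hv, hb, hvz, by rw [cross_anticomm]; omega⟩
    have h := hmax _ hvb
    rw [div_le_div_iff₀ (hPpos hvb) (hPpos hvw)] at h
    have h' : (cross v z + cross z b) * cross v w ≤ (cross v z + cross z w) * cross v b := by
      exact_mod_cast h
    have key : (cross v z + cross z b) * cross v w - (cross v z + cross z w) * cross v b
        = cross v z * (cross v w - cross v b - cross b w) := by unfold cross; ring
    nlinarith
  · have hbw : (b, w) ∈ P := hP.2 ⟨hb, hw, hbz, hzw⟩
    have h := hmax _ hbw
    rw [div_le_div_iff₀ (hPpos hbw) (hPpos hvw)] at h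
    have h' : (cross b z + cross z w) * cross v w ≤ (cross v z + cross z w) * cross b w := by
      exact_mod_cast h
    have key : (cross b z + cross z w) * cross v w - (cross v z + cross z w) * cross b w
        = cross z w * (cross v w - cross v b - cross b w) := by unfold cross; ring
    nlinarith

structure IsPointedHilbertBasis (B : Finset ℤ²) (u : ℤ² →+ ℝ) : Prop where
  pos : ∀ b ∈ B, 0 < u b
  mem_closure_of_coneM : ∀ z : ℤ², ConeM (B : Set ℤ²) (fun i => (z i : ℝ)) →
    z ∈ AddSubmonoid.closure (B : Set ℤ²)
  irreducible : ∀ b ∈ B, ∀ x ∈ AddSubmonoid.closure (B : Set ℤ²),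
    ∀ y ∈ AddSubmonoid.closure (B : Set ℤ²), x + y = b → x = 0 ∨ y = 0

namespace IsPointedHilbertBasis

variable {B : Finset ℤ²} {u : ℤ² →+ ℝ}

theorem of_minimal (hu : ∀ b ∈ B, 0 < u b)
    (hgen : ∀ z : ℤ², ConeM ↑B (fun i => (z i : ℝ)) → NNCombM ↑B z)
    (hmin : ∀ B' : Finset ℤ², B' ⊂ B → ¬ ∀ z : ℤ², ConeM ↑B (fun i => (z i : ℝ)) → NNCombM ↑B' z) :
    IsPointedHilbertBasis B u := by
  refine ⟨hu, fun z hz => nnCombM_iff_mem_closure.1 (hgen z hz), fun b hb x hx y hy hxy => ?_⟩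
  by_contra! h
  have hxb : u x < u b := by
    rw [← hxy, map_add, lt_add_iff_pos_right]; exact AddSubmonoid.pos_of_mem_closure hu hy h.2
  have hyb : u y < u b := by
    rw [← hxy, map_add, lt_add_iff_pos_left]; exact AddSubmonoid.pos_of_mem_closure hu hx h.1
  have hsub : (B : Set ℤ²) ⊆ AddSubmonoid.closure (B.erase b : Set ℤ²) := by
    intro c hc
    rcases eq_or_ne c b with rfl | hcb
    · have := add_mem (AddSubmonoid.mem_closure_erase_of_lt hu hb hx hxb)
        (AddSubmonoid.mem_closure_erase_of_lt hu hb hy hyb)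
      rwa [hxy] at this
    · exact AddSubmonoid.subset_closure (mem_erase.2 ⟨hcb, hc⟩)
  exact hmin _ (erase_ssubset hb) fun z hz =>
    nnCombM_iff_mem_closure.2 <|
      AddSubmonoid.closure_le.2 hsub (nnCombM_iff_mem_closure.1 (hgen z hz))

lemma ne_zero (hB : IsPointedHilbertBasis B u) {b : ℤ²} (hb : b ∈ B) : b ≠ 0 := by
  rintro rfl
  simpa using hB.pos 0 hb

lemma isCoprime (hB : IsPointedHilbertBasis B u) {b : ℤ²} (hb : b ∈ B) :
    IsCoprime (b 0) (b 1) := by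
  rw [Int.isCoprime_iff_gcd_eq_one]
  set g := Int.gcd (b 0) (b 1)
  have hg : ∀ i, (g : ℤ) ∣ b i := by
    intro i; fin_cases i
    exacts [Int.gcd_dvd_left _ _, Int.gcd_dvd_right _ _]
  obtain ⟨q, hq⟩ : ∃ q : ℤ², b = g • q :=
    ⟨fun i => b i / g, funext fun i => by simp [Int.mul_ediv_cancel' (hg i)]⟩
  have hg0 : g ≠ 0 := by rintro h; exact hB.ne_zero hb (by rw [hq, h, zero_smul])
  have hq0 : q ≠ 0 := by rintro rfl; exact hB.ne_zero hb (by rw [hq, smul_zero])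
  have hqB : q ∈ AddSubmonoid.closure (B : Set ℤ²) :=
    hB.mem_closure_of_coneM q (coneM_of_nsmul_mem (Nat.pos_of_ne_zero hg0) (hq ▸ hb))
  by_contra hg1
  have hsplit : q + (g - 1) • q = b := by
    rw [hq, ← succ_nsmul', Nat.sub_add_cancel (Nat.one_le_iff_ne_zero.2 hg0)]
  rcases hB.irreducible b hb q hqB _ (nsmul_mem hqB _) hsplit with h | h
  · exact hq0 h
  · exact hq0 ((smul_eq_zero.1 h).resolve_left (by omega))

lemma mem_closure_singleton_of_cross_eq_zero (hB : IsPointedHilbertBasis B u) {b z : ℤ²}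
    (hb : b ∈ B) (hz : 0 ≤ u z) (hbz : cross b z = 0) :
    z ∈ AddSubmonoid.closure ({b} : Set ℤ²) := by
  obtain ⟨t, rfl⟩ := exists_eq_smul_of_cross_eq_zero (hB.isCoprime hb) hbz
  have ht : 0 ≤ t := by
    rw [map_zsmul, zsmul_eq_mul] at hz
    by_contra! ht
    have ht' : (t : ℝ) < 0 := by exact_mod_cast ht
    exact (mul_neg_of_neg_of_pos ht' (hB.pos b hb)).not_ge hz
  exact AddSubmonoid.zsmul_mem_closure_of_nonneg ht (AddSubmonoid.subset_closure rfl)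

variable {v w : ℤ²}

lemma eq_of_sub_mem_sector (hB : IsPointedHilbertBasis B u) (hv : v ∈ B) (hw : w ∈ B)
    (hvw : 0 < cross v w) {x y : ℤ²} (hx : x ∈ B) (hy : y ∈ B) (h : x - y ∈ sector v w) :
    x = y := by
  have hm := hB.mem_closure_of_coneM _ (coneM_of_mem_sector hv hw hvw h)
  rcases hB.irreducible x hx y (AddSubmonoid.subset_closure hy) _ hm (add_sub_cancel y x)
    with h0 | h0
  · exact absurd h0 (hB.ne_zero hy)
  · exact sub_eq_zero.1 h0

lemma cross_add_cross_lt (hB : IsPointedHilbertBasis B u) (hv : v ∈ B) (hw : w ∈ B)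
    (hvw : 0 < cross v w) {x : ℤ²} (hx : x ∈ B) (hxs : x ∈ sector v w) :
    cross v x + cross x w < 2 * cross v w := by
  obtain ⟨hvx, hxw⟩ := hxs
  have hsub (y : ℤ²) : x - y ∈ sector v w ↔ cross v y ≤ cross v x ∧ cross y w ≤ cross x w := by
    simp only [sector, Set.mem_ofPred_eq, cross_sub_left, cross_sub_right, sub_nonneg]
  by_contra! h
  rcases le_or_gt (cross v w) (cross x w) with hle | hlt
  · obtain rfl := hB.eq_of_sub_mem_sector hv hw hvw hx hv
      ((hsub v).2 ⟨by rwa [cross_self], hle⟩)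
    rw [cross_self] at h
    omega
  · obtain rfl := hB.eq_of_sub_mem_sector hv hw hvw hx hw
      ((hsub w).2 ⟨by omega, by rwa [cross_self]⟩)
    rw [cross_self] at h
    omega

theorem cross_eq_one (hB : IsPointedHilbertBasis B u) {p p' : ℤ²} (hp : p ∈ B) (hp' : p' ∈ B)
    (hpp' : 0 < cross p p') (hcons : ∀ b ∈ B, ¬ (0 < cross p b ∧ 0 < cross b p')) :
    cross p p' = 1 := by
  by_contra hne
  have hpos := hB.pos
  obtain ⟨z, hpz, hzp', htri⟩ :=
    exists_mem_triangle (hB.isCoprime hp) (hB.isCoprime hp') (by omega)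
  have hzB : z ∈ AddSubmonoid.closure (B : Set ℤ²) :=
    hB.mem_closure_of_coneM z (coneM_of_mem_sector hp hp' hpp' ⟨hpz.le, hzp'.le⟩)
  have hz : 0 < u z := AddSubmonoid.pos_of_mem_closure hpos hzB (by rintro rfl; simp at hpz)
  have hzpar : ∀ b ∈ B, cross b z ≠ 0 := by
    intro b hb hbz
    have hb0 : rayCoord u z b = 0 := by simp [rayCoord, cross_anticomm b z, hbz]
    refine hcons b hb ⟨(cross_pos_iff_rayCoord_lt hz (hpos p hp) (hpos b hb)).2 ?_,
      (cross_pos_iff_rayCoord_lt hz (hpos b hb) (hpos p' hp')).2 ?_⟩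
    · rw [hb0]; exact (rayCoord_neg_iff (hpos p hp)).2 hpz
    · rw [hb0]; exact (rayCoord_pos_iff (hpos p' hp')).2 hzp'
  obtain ⟨v, hv, w, hw, hvz, hzw, hsupp⟩ := exists_supporting_pair hpos hz hzpar hp hp' hpz hzp'
  have hvw : 0 < cross v w := cross_pos_trans (hpos v hv) hz (hpos w hw) hvz hzw
  -- Every nonzero element of the monoid lies beyond the chord `vw`, and `z` is reducible.
  have hFz : 2 * cross v w ≤ cross v z + cross z w := by
    rcases AddSubmonoid.eq_zero_or_of_mem_closure
      (P := fun x => cross v w ≤ cross v x + cross x w ∧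
        (x ∈ B ∨ 2 * cross v w ≤ cross v x + cross x w))
      (fun b hb => ⟨hsupp b hb, .inl hb⟩)
      (fun x y hx hy => by simp only [cross_add_left, cross_add_right]; omega) hzB
      with rfl | ⟨-, hzB' | h⟩
    · simp at hpz
    · exact absurd ⟨hpz, hzp'⟩ (hcons z hzB')
    · exact h
  have hvp' : 0 < cross v p' := cross_pos_trans (hpos v hv) hz (hpos p' hp') hvz hzp'
  have hpw : 0 < cross p w := cross_pos_trans (hpos p hp) hz (hpos w hw) hpz hzw
  have hvp : 0 ≤ cross v p := by
    have := not_lt.1 fun h => hcons v hv ⟨h, hvp'⟩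
    linarith [cross_anticomm v p]
  have hp'w : 0 ≤ cross p' w := by
    have := not_lt.1 fun h => hcons w hw ⟨hpw, h⟩
    linarith [cross_anticomm p' w]
  have hFp := hB.cross_add_cross_lt hv hw hvw hp ⟨hvp, hpw.le⟩
  have hFp' := hB.cross_add_cross_lt hv hw hvw hp' ⟨hvp'.le, hp'w⟩
  have hcr := congrArg (fun x => cross v x + cross x w) (cross_smul_eq_add p p' z)
  simp only [cross_add_left, cross_add_right, cross_smul_left, cross_smul_right] at hcr
  nlinarith [mul_le_mul_of_nonneg_left hFz hpp'.le, mul_le_mul_of_nonneg_right htri hvw.le]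

theorem mem_closure_sector (hB : IsPointedHilbertBasis B u) (hv : v ∈ B) (hw : w ∈ B) {z : ℤ²}
    (hz : 0 < u z) (hvz : 0 ≤ cross v z) (hzw : 0 ≤ cross z w) :
    z ∈ AddSubmonoid.closure (↑B ∩ sector v w) := by
  classical
  have hpos := hB.pos
  set κ := rayCoord u z
  have hle {x y : ℤ²} (hx : x ∈ B) (hy : y ∈ B) : 0 ≤ cross x y ↔ κ x ≤ κ y :=
    cross_nonneg_iff_rayCoord_le hz (hpos x hx) (hpos y hy)
  have hlt {x y : ℤ²} (hx : x ∈ B) (hy : y ∈ B) : 0 < cross x y ↔ κ x < κ y :=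
    cross_pos_iff_rayCoord_lt hz (hpos x hx) (hpos y hy)
  have hκv : κ v ≤ 0 := not_lt.1 fun h => by
    linarith [(rayCoord_pos_iff (hpos v hv)).1 h, cross_anticomm v z]
  have hκw : 0 ≤ κ w := div_nonneg (by exact_mod_cast hzw) (hpos w hw).le
  -- `e` is the last element of `B` up to the ray of `z`, `e'` the first one after it.
  set L := B.filter fun b => κ b ≤ 0
  have hvL : v ∈ L := mem_filter.2 ⟨hv, hκv⟩
  obtain ⟨e, heL, hemax⟩ := L.exists_max_image κ ⟨v, hvL⟩
  obtain ⟨he, hκe⟩ := mem_filter.1 heL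
  have heS : e ∈ ↑B ∩ sector v w :=
    ⟨he, (hle hv he).2 (hemax v hvL), (hle he hw).2 (hκe.trans hκw)⟩
  rcases hκe.lt_or_eq with hκe | hκe
  · set R := B.filter fun b => 0 < κ b
    have hwR : w ∈ R := mem_filter.2 ⟨hw, hκw.lt_of_ne fun h =>
      (hemax w (mem_filter.2 ⟨hw, h.symm.le⟩)).not_gt (h ▸ hκe)⟩
    obtain ⟨e', he'R, he'min⟩ := R.exists_min_image κ ⟨w, hwR⟩
    obtain ⟨he', hκe'⟩ := mem_filter.1 he'R
    have hee' : cross e e' = 1 := by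
      refine hB.cross_eq_one he he' ((hlt he he').2 (hκe.trans hκe')) fun b hb ⟨h₁, h₂⟩ => ?_
      rw [hlt he hb] at h₁
      rw [hlt hb he'] at h₂
      rcases le_or_gt (κ b) 0 with hb0 | hb0
      · exact (hemax b (mem_filter.2 ⟨hb, hb0⟩)).not_gt h₁
      · exact (he'min b (mem_filter.2 ⟨hb, hb0⟩)).not_gt h₂
    have he'S : e' ∈ ↑B ∩ sector v w :=
      ⟨he', (hle hv he').2 ((hemax v hvL).trans (hκe.trans hκe').le),
        (hle he' hw).2 (he'min w hwR)⟩
    have hz_eq : z = cross z e' • e + cross e z • e' := by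
      simpa [hee'] using cross_smul_eq_add e e' z
    rw [hz_eq]
    exact add_mem
      (AddSubmonoid.zsmul_mem_closure_of_nonneg ((rayCoord_pos_iff (hpos e' he')).1 hκe').le
        (AddSubmonoid.subset_closure heS))
      (AddSubmonoid.zsmul_mem_closure_of_nonneg ((rayCoord_neg_iff (hpos e he)).1 hκe).le
        (AddSubmonoid.subset_closure he'S))
  · have hze : (cross z e : ℝ) = 0 := by simpa [κ, rayCoord, (hpos e he).ne'] using hκe
    have hez : cross e z = 0 := by
      rw [← neg_eq_zero, ← cross_anticomm]
      exact_mod_cast hze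
    exact AddSubmonoid.closure_mono (Set.singleton_subset_iff.2 heS)
      (hB.mem_closure_singleton_of_cross_eq_zero he hz.le hez)

theorem supernormalM {a : Fin 2 → ℝ} (hB : IsPointedHilbertBasis B (weight a)) :
    SupernormalM (B : Set ℤ²) := by
  intro B' hB' z hz
  rw [nnCombM_iff_mem_closure]
  rcases eq_or_ne z 0 with rfl | hz0
  · exact zero_mem _
  have hpos : ∀ b ∈ B', 0 < weight a b := fun b hb => hB.pos b (hB' hb)
  have hza := weight_pos_of_coneM hpos hz hz0
  rcases exists_straddle_of_coneM hz hz0 with ⟨b, hb, hbz⟩ | ⟨v, hv, w, hw, hvz, hzw⟩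
  · have hbE : b ∈ {b ∈ (B : Set ℤ²) | ConeM B' (fun i => (b i : ℝ))} :=
      ⟨hB' hb, coneM_of_nsmul_mem one_pos (by simpa using hb)⟩
    exact AddSubmonoid.closure_mono (Set.singleton_subset_iff.2 hbE)
      (hB.mem_closure_singleton_of_cross_eq_zero (hB' hb) hza.le hbz)
  · have hvw := cross_pos_trans (hpos v hv) hza (hpos w hw) hvz hzw
    have hsub : ↑B ∩ sector v w ⊆ {b ∈ (B : Set ℤ²) | ConeM B' (fun i => (b i : ℝ))} :=
      fun b hb => ⟨hb.1, coneM_of_mem_sector hv hw hvw hb.2⟩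
    exact AddSubmonoid.closure_mono hsub
      (hB.mem_closure_sector (hB' hv) (hB' hw) hza hvz.le hzw.le)

end IsPointedHilbertBasis

end LatticeCone

/-- Every two-dimensional Hilbert basis is supernormal.  `B` is a Hilbert basis:
it is pointed, generates the monoid `ℤ² ∩ cone(B)`, and no proper subset does. -/
theorem stmt7 (B : Finset (Fin 2 → ℤ))
    (hpointed : ∃ u : Fin 2 → ℝ, ∀ b ∈ B, 0 < ∑ i, (b i : ℝ) * u i)
    (hgen : ∀ z : Fin 2 → ℤ, ConeM ↑B (fun i => (z i : ℝ)) → NNCombM ↑B z)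
    (hmin : ∀ B' : Finset (Fin 2 → ℤ), B' ⊂ B →
      ¬ ∀ z : Fin 2 → ℤ, ConeM ↑B (fun i => (z i : ℝ)) → NNCombM ↑B' z) :
    SupernormalM (↑B : Set (Fin 2 → ℤ)) := by
  obtain ⟨a, ha⟩ := hpointed
  have hB : LatticeCone.IsPointedHilbertBasis B (LatticeCone.weight a) := .of_minimal ha hgen hmin
  exact hB.supernormalM
end

section
/- The configuration B = {(1,0,0), (0,1,0), (1,1,1), (1,1,2), (1,2,3), (1,2,4)} ⊆ ℤ³ is not supernormal; specifically, the point (1,2,2) lies in cone((0,1,0),(1,1,1),(1,2,3)) ∩ ℤ³ but is not a nonnegative integer combination of (0,1,0), (1,1,1), (1,2,3), and no other element of B lies in that cone. -/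
section
variable {m : ℕ}

theorem NNCombM.mono {B C : Set (Fin m → ℤ)} (hBC : B ⊆ C) {z : Fin m → ℤ}
    (hz : NNCombM B z) : NNCombM C z :=
  let ⟨s, c, hs, hsum⟩ := hz
  ⟨s, c, hs.trans hBC, hsum⟩

theorem not_supernormalM_of_witness {B B' : Set (Fin m → ℤ)} (hB' : B' ⊆ B) {z : Fin m → ℤ}
    (hcone : ConeM B' (fun i => (z i : ℝ))) (hcomb : ¬ NNCombM B' z)
    (hB'_cone : ∀ b ∈ B, ConeM B' (fun i => (b i : ℝ)) → b ∈ B') :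
    ¬ SupernormalM B := fun hB =>
  hcomb <| (hB B' hB' z hcone).mono fun b hb => hB'_cone b hb.1 hb.2

theorem coneM_coe_finset_iff (T : Finset (Fin m → ℤ)) (x : Fin m → ℝ) :
    ConeM (T : Set (Fin m → ℤ)) x ↔
      ∃ c : (Fin m → ℤ) → ℝ, (∀ b, 0 ≤ c b) ∧ ∀ i, x i = ∑ b ∈ T, c b * (b i : ℝ) := by
  classical
  constructor
  · rintro ⟨s, c, hsT, hc, hx⟩
    refine ⟨fun b => if b ∈ s then c b else 0,
      fun b => by by_cases hb : b ∈ s <;> simp [hb, hc], fun i => ?_⟩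
    rw [hx i, ← Finset.sum_subset (Finset.coe_subset.mp hsT) fun b _ hb => by simp [hb]]
    exact Finset.sum_congr rfl fun b hb => by simp [hb]
  · rintro ⟨c, hc, hx⟩
    exact ⟨T, c, subset_rfl, hc, hx⟩

theorem nnCombM_coe_finset_iff (T : Finset (Fin m → ℤ)) (z : Fin m → ℤ) :
    NNCombM (T : Set (Fin m → ℤ)) z ↔
      ∃ c : (Fin m → ℤ) → ℕ, ∀ i, z i = ∑ b ∈ T, (c b : ℤ) * b i := by
  classical
  constructor
  · rintro ⟨s, c, hsT, hz⟩
    refine ⟨fun b => if b ∈ s then c b else 0, fun i => ?_⟩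
    rw [hz i, ← Finset.sum_subset (Finset.coe_subset.mp hsT) fun b _ hb => by simp [hb]]
    exact Finset.sum_congr rfl fun b hb => by simp [hb]
  · rintro ⟨c, hz⟩
    exact ⟨T, c, subset_rfl, hz⟩

variable {u v w : Fin m → ℤ}

theorem coneM_triple_iff (huv : u ≠ v) (huw : u ≠ w) (hvw : v ≠ w) (x : Fin m → ℝ) :
    ConeM {u, v, w} x ↔ ∃ a b c : ℝ, 0 ≤ a ∧ 0 ≤ b ∧ 0 ≤ c ∧
      ∀ i, x i = a * u i + b * v i + c * w i := by
  rw [← Finset.coe_pair, ← Finset.coe_insert, coneM_coe_finset_iff]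
  simp only [Finset.sum_insert (by simp [huv, huw] : u ∉ ({v, w} : Finset _)),
    Finset.sum_insert (by simp [hvw] : v ∉ ({w} : Finset _)), Finset.sum_singleton, ← add_assoc]
  constructor
  · rintro ⟨c, hc, hx⟩
    exact ⟨c u, c v, c w, hc u, hc v, hc w, hx⟩
  · rintro ⟨a, b, c, ha, hb, hc, hx⟩
    refine ⟨fun y => if y = u then a else if y = v then b else c, fun y => ?_, fun i => ?_⟩
    · dsimp only
      split_ifs <;> assumption
    · simp [hx i, huv.symm, huw.symm, hvw.symm]

theorem nnCombM_triple_iff (huv : u ≠ v) (huw : u ≠ w) (hvw : v ≠ w) (z : Fin m → ℤ) :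
    NNCombM {u, v, w} z ↔ ∃ a b c : ℕ, ∀ i, z i = a * u i + b * v i + c * w i := by
  rw [← Finset.coe_pair, ← Finset.coe_insert, nnCombM_coe_finset_iff]
  simp only [Finset.sum_insert (by simp [huv, huw] : u ∉ ({v, w} : Finset _)),
    Finset.sum_insert (by simp [hvw] : v ∉ ({w} : Finset _)), Finset.sum_singleton, ← add_assoc]
  constructor
  · rintro ⟨c, hz⟩
    exact ⟨c u, c v, c w, hz⟩
  · rintro ⟨a, b, c, hz⟩
    refine ⟨fun y => if y = u then a else if y = v then b else c, fun i => ?_⟩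
    simp [hz i, huv.symm, huw.symm, hvw.symm]

end

theorem coneM_iff_facets (x : Fin 3 → ℝ) :
    ConeM ({![0,1,0], ![1,1,1], ![1,2,3]} : Set (Fin 3 → ℤ)) x ↔
      x 0 ≤ x 2 ∧ x 2 ≤ 3 * x 0 ∧ x 0 + x 2 ≤ 2 * x 1 := by
  rw [coneM_triple_iff (by decide) (by decide) (by decide)]
  constructor
  · rintro ⟨a, b, c, ha, hb, hc, hx⟩
    simp only [hx 0, hx 1, hx 2]
    norm_num [Matrix.cons_val_two, Matrix.tail_cons]
    refine ⟨?_, ?_, ?_⟩ <;> linarith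
  · rintro ⟨h₁, h₂, h₃⟩
    refine ⟨x 1 - (x 0 + x 2) / 2, (3 * x 0 - x 2) / 2, (x 2 - x 0) / 2,
      by linarith, by linarith, by linarith, fun i => ?_⟩
    fin_cases i <;> simp [Matrix.cons_val_two, Matrix.tail_cons] <;> ring_nf

theorem not_nnCombM_one_two_two :
    ¬ NNCombM ({![0,1,0], ![1,1,1], ![1,2,3]} : Set (Fin 3 → ℤ)) ![1,2,2] := by
  rw [nnCombM_triple_iff (by decide) (by decide) (by decide)]
  rintro ⟨a, b, c, hz⟩
  have h₀ := hz 0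
  have h₂ := hz 2
  norm_num [Matrix.cons_val_two, Matrix.tail_cons] at h₀ h₂
  omega

/-- The configuration `B = {(1,0,0),(0,1,0),(1,1,1),(1,1,2),(1,2,3),(1,2,4)}` is not
supernormal: `(1,2,2)` lies in `cone((0,1,0),(1,1,1),(1,2,3)) ∩ ℤ³`, is not a
nonnegative integer combination of these three vectors, and no other element of `B`
lies in that cone. -/
theorem stmt8 :
    ConeM ({![0,1,0], ![1,1,1], ![1,2,3]} : Set (Fin 3 → ℤ)) (fun i => ((![1,2,2] : Fin 3 → ℤ) i : ℝ)) ∧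
    ¬ NNCombM ({![0,1,0], ![1,1,1], ![1,2,3]} : Set (Fin 3 → ℤ)) ![1,2,2] ∧
    (∀ v ∈ ({![1,0,0], ![0,1,0], ![1,1,1], ![1,1,2], ![1,2,3], ![1,2,4]} : Set (Fin 3 → ℤ)),
      ConeM ({![0,1,0], ![1,1,1], ![1,2,3]} : Set (Fin 3 → ℤ)) (fun i => (v i : ℝ)) →
        v ∈ ({![0,1,0], ![1,1,1], ![1,2,3]} : Set (Fin 3 → ℤ))) ∧
    ¬ SupernormalM ({![1,0,0], ![0,1,0], ![1,1,1], ![1,1,2], ![1,2,3], ![1,2,4]} : Set (Fin 3 → ℤ)) := by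
  have hcone : ConeM ({![0,1,0], ![1,1,1], ![1,2,3]} : Set (Fin 3 → ℤ))
      (fun i => ((![1,2,2] : Fin 3 → ℤ) i : ℝ)) := by
    rw [coneM_iff_facets]
    norm_num [Matrix.cons_val_two, Matrix.tail_cons]
  have honly : ∀ v ∈ ({![1,0,0], ![0,1,0], ![1,1,1], ![1,1,2], ![1,2,3], ![1,2,4]} : Set (Fin 3 → ℤ)),
      ConeM ({![0,1,0], ![1,1,1], ![1,2,3]} : Set (Fin 3 → ℤ)) (fun i => (v i : ℝ)) →
        v ∈ ({![0,1,0], ![1,1,1], ![1,2,3]} : Set (Fin 3 → ℤ)) := by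
    intro v hv
    rw [coneM_iff_facets]
    simp only [Set.mem_insert_iff, Set.mem_singleton_iff] at hv
    rcases hv with rfl | rfl | rfl | rfl | rfl | rfl <;>
      norm_num [Matrix.cons_val_two, Matrix.tail_cons]
  have hsub : ({![0,1,0], ![1,1,1], ![1,2,3]} : Set (Fin 3 → ℤ)) ⊆
      {![1,0,0], ![0,1,0], ![1,1,1], ![1,1,2], ![1,2,3], ![1,2,4]} := by
    simp [Set.insert_subset_iff]
  exact ⟨hcone, not_nnCombM_one_two_two, honly,
    not_supernormalM_of_witness hsub hcone not_nnCombM_one_two_two honly⟩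
end

section
/- The configuration B = {(1,0,0), (0,1,0), (1,1,1), (1,1,2), (1,2,3), (1,2,4)} is a Hilbert basis for the cone spanned by (1,0,0), (0,1,0) and (1,2,4): it minimally generates the monoid of lattice points of this cone. -/
/-!
The cone spanned by `(1,0,0), (0,1,0), (1,2,4)` is `{x | 0 ≤ x₂ ≤ 4 x₀, x₂ ≤ 2 x₁}`. A lattice
point `z` of it is `⌊z₂ / 4⌋ • (1,2,4)`, plus the residue vector `0, (1,1,1), (1,1,2)` or
`(1,2,3)` according to `z₂ mod 4`, plus nonnegative multiples of `(1,0,0)` and `(0,1,0)`.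
Minimality is a finite check: comparing coordinates, no element of `B` is a nonnegative
integer combination of the other five.
-/

section

variable {m : ℕ}

lemma nnCombM_iff_mem_closure {B : Set (Fin m → ℤ)} {z : Fin m → ℤ} :
    NNCombM B z ↔ z ∈ AddSubmonoid.closure B := by
  have hsum : ∀ (s : Finset (Fin m → ℤ)) (c : (Fin m → ℤ) → ℕ),
      (∑ b ∈ s, c b • b) = fun i => ∑ b ∈ s, (c b : ℤ) * b i := by
    intro s c; ext i; simp [Finset.sum_apply]
  constructor
  · rintro ⟨s, c, hs, hz⟩
    have : z = ∑ b ∈ s, c b • b := by rw [hsum]; exact funext hz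
    exact this ▸ AddSubmonoid.sum_mem _ fun b hb =>
      AddSubmonoid.nsmul_mem _ (AddSubmonoid.subset_closure (hs hb)) _
  · intro hz
    obtain ⟨c, s, hs, -, rfl⟩ := AddSubmonoid.mem_closure_iff_exists_finset_subset.1 hz
    exact ⟨s, c, hs, fun i => by rw [hsum]⟩

lemma NNCombM.exists_sum_eq {B : Set (Fin m → ℤ)} {t : Finset (Fin m → ℤ)} (hB : B ⊆ t)
    {z : Fin m → ℤ} (hz : NNCombM B z) :
    ∃ n : (Fin m → ℤ) → ℕ, (∀ b ∉ B, n b = 0) ∧ ∀ i, z i = ∑ b ∈ t, (n b : ℤ) * b i := by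
  classical
  obtain ⟨s, c, hs, hz⟩ := hz
  refine ⟨fun b => if b ∈ s then c b else 0, fun b hb => if_neg fun h => hb (hs h), fun i => ?_⟩
  rw [hz, ← Finset.sum_subset (hs.trans hB) (fun b _ hb => by simp [hb])]
  exact Finset.sum_congr rfl fun b hb => by simp [hb]

lemma ConeM.sum_mul_nonneg {B : Set (Fin m → ℤ)} {x : Fin m → ℝ} (hx : ConeM B x)
    (u : Fin m → ℝ) (hu : ∀ b ∈ B, 0 ≤ ∑ i, u i * b i) : 0 ≤ ∑ i, u i * x i := by
  obtain ⟨s, c, hs, hc, hx⟩ := hx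
  simp_rw [hx, Finset.mul_sum, mul_left_comm (u _)]
  rw [Finset.sum_comm]
  exact Finset.sum_nonneg fun b hb => by
    rw [← Finset.mul_sum]; exact mul_nonneg (hc b) (hu b (hs hb))

end

abbrev coneRays : Set (Fin 3 → ℤ) := {![1,0,0], ![0,1,0], ![1,2,4]}

abbrev hilbertBasisB : Set (Fin 3 → ℤ) :=
  {![1,0,0], ![0,1,0], ![1,1,1], ![1,1,2], ![1,2,3], ![1,2,4]}

lemma coneM_coneRays_iff (x : Fin 3 → ℝ) :
    ConeM coneRays x ↔ 0 ≤ x 2 ∧ x 2 ≤ 4 * x 0 ∧ x 2 ≤ 2 * x 1 := by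
  constructor
  · intro hx
    have hu : ∀ a b c : ℝ, 0 ≤ a → 0 ≤ b → 0 ≤ a + 2 * b + 4 * c →
        0 ≤ a * x 0 + b * x 1 + c * x 2 := fun a b c ha hb hc => by
      simpa [Fin.sum_univ_three] using hx.sum_mul_nonneg ![a, b, c] (by
        rintro v (rfl | rfl | rfl) <;> simp [Fin.sum_univ_three] <;> linarith)
    refine ⟨?_, ?_, ?_⟩
    · simpa using hu 0 0 1 le_rfl le_rfl (by norm_num)
    · linarith [hu 4 0 (-1) (by norm_num) le_rfl (by norm_num)]
    · linarith [hu 0 2 (-1) le_rfl (by norm_num) (by norm_num)]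
  · rintro ⟨h0, h1, h2⟩
    refine ⟨{![1,0,0], ![0,1,0], ![1,2,4]},
      fun b => if b = ![1,0,0] then x 0 - x 2 / 4 else if b = ![0,1,0] then x 1 - x 2 / 2
        else x 2 / 4, by simp, fun b => ?_, fun i => ?_⟩
    · dsimp only; split_ifs <;> linarith
    · rw [Finset.sum_insert (by decide), Finset.sum_insert (by decide), Finset.sum_singleton]
      fin_cases i <;> simp
      ring

lemma coneM_coneRays_of_mem_hilbertBasisB {b : Fin 3 → ℤ} (hb : b ∈ hilbertBasisB) :
    ConeM coneRays fun i => (b i : ℝ) := by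
  rw [coneM_coneRays_iff]
  rcases hb with rfl | rfl | rfl | rfl | rfl | rfl <;> norm_num [Matrix.cons_val_two]

lemma mem_closure_hilbertBasisB {z : Fin 3 → ℤ} (h0 : 0 ≤ z 2) (h1 : z 2 ≤ 4 * z 0)
    (h2 : z 2 ≤ 2 * z 1) : z ∈ AddSubmonoid.closure hilbertBasisB := by
  have hgen : ∀ v ∈ hilbertBasisB, v ∈ AddSubmonoid.closure hilbertBasisB :=
    fun v hv => AddSubmonoid.subset_closure hv
  have hres : ![min 1 (z 2 % 4), (z 2 % 4 + 1) / 2, z 2 % 4] ∈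
      AddSubmonoid.closure hilbertBasisB := by
    have hr : z 2 % 4 = 0 ∨ z 2 % 4 = 1 ∨ z 2 % 4 = 2 ∨ z 2 % 4 = 3 := by omega
    rcases hr with hr | hr | hr | hr <;> rw [hr]
    · convert (AddSubmonoid.closure hilbertBasisB).zero_mem using 1; decide
    all_goals exact hgen _ (by norm_num)
  have hz : z = (z 0 - z 2 / 4 - min 1 (z 2 % 4)).toNat • ![1,0,0]
      + (z 1 - 2 * (z 2 / 4) - (z 2 % 4 + 1) / 2).toNat • ![0,1,0]
      + (z 2 / 4).toNat • ![1,2,4] + ![min 1 (z 2 % 4), (z 2 % 4 + 1) / 2, z 2 % 4] := by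
    ext i; fin_cases i <;> simp <;> omega
  rw [hz]
  refine add_mem (add_mem (add_mem ?_ ?_) ?_) hres <;>
    exact AddSubmonoid.nsmul_mem _ (hgen _ (by simp)) _

lemma not_nnCombM_diff_self {b : Fin 3 → ℤ} (hb : b ∈ hilbertBasisB) :
    ¬ NNCombM (hilbertBasisB \ {b}) b := by
  intro h
  obtain ⟨n, hn, hsum⟩ := h.exists_sum_eq
    (t := {![1,0,0], ![0,1,0], ![1,1,1], ![1,1,2], ![1,2,3], ![1,2,4]})
    (fun x hx => by simpa using hx.1)
  have hnb : n b = 0 := hn b fun h => h.2 rfl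
  have e0 := hsum 0
  have e1 := hsum 1
  have e2 := hsum 2
  rcases hb with rfl | rfl | rfl | rfl | rfl | rfl <;>
    simp [Finset.sum_insert] at e0 e1 e2 <;> omega

/-- `B = {(1,0,0),(0,1,0),(1,1,1),(1,1,2),(1,2,3),(1,2,4)}` is a Hilbert basis for the
cone `C` spanned by `(1,0,0),(0,1,0),(1,2,4)`: it is pointed, consists of lattice points
of `C`, generates the monoid `C ∩ ℤ³`, and no proper subset generates it. -/
theorem stmt9 :
    (∃ u : Fin 3 → ℝ, ∀ b ∈ ({![1,0,0], ![0,1,0], ![1,1,1], ![1,1,2], ![1,2,3], ![1,2,4]} : Set (Fin 3 → ℤ)),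
        0 < ∑ i, (b i : ℝ) * u i) ∧
    (∀ b ∈ ({![1,0,0], ![0,1,0], ![1,1,1], ![1,1,2], ![1,2,3], ![1,2,4]} : Set (Fin 3 → ℤ)),
      ConeM ({![1,0,0], ![0,1,0], ![1,2,4]} : Set (Fin 3 → ℤ)) (fun i => (b i : ℝ))) ∧
    (∀ z : Fin 3 → ℤ, ConeM ({![1,0,0], ![0,1,0], ![1,2,4]} : Set (Fin 3 → ℤ)) (fun i => (z i : ℝ)) →
      NNCombM ({![1,0,0], ![0,1,0], ![1,1,1], ![1,1,2], ![1,2,3], ![1,2,4]} : Set (Fin 3 → ℤ)) z) ∧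
    (∀ b ∈ ({![1,0,0], ![0,1,0], ![1,1,1], ![1,1,2], ![1,2,3], ![1,2,4]} : Set (Fin 3 → ℤ)),
      ¬ ∀ z : Fin 3 → ℤ,
        ConeM ({![1,0,0], ![0,1,0], ![1,2,4]} : Set (Fin 3 → ℤ)) (fun i => (z i : ℝ)) →
        NNCombM (({![1,0,0], ![0,1,0], ![1,1,1], ![1,1,2], ![1,2,3], ![1,2,4]} : Set (Fin 3 → ℤ)) \ {b}) z) := by
  refine ⟨⟨![1,1,0], ?_⟩, fun b hb => coneM_coneRays_of_mem_hilbertBasisB hb, fun z hz => ?_,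
    fun b hb H => not_nnCombM_diff_self hb (H b (coneM_coneRays_of_mem_hilbertBasisB hb))⟩
  · rintro b (rfl | rfl | rfl | rfl | rfl | rfl) <;>
      norm_num [Fin.sum_univ_three, Matrix.cons_val_two]
  · obtain ⟨h0, h1, h2⟩ := (coneM_coneRays_iff _).1 hz
    exact nnCombM_iff_mem_closure.2 <| mem_closure_hilbertBasisB
      (by exact_mod_cast h0) (by exact_mod_cast h1) (by exact_mod_cast h2)
end

section
/- The monoid of lattice points in the three-dimensional cone spanned by P_0 = (-1,1,2), P_1 = (1,-1,1), P_2 = (0,1,0), P_3 = (1,0,0) is not generated by any finite supernormal subset of itself. -/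
/-!
Let `B` be a finite supernormal set generating the monoid of lattice points of
`C = cone(P₀, P₁, P₂, P₃)`. Each `Pᵢ` is irreducible in that monoid, so `Pᵢ ∈ B`. Induction on
`k ≥ 0` then puts every `(0, 1, k)` in `B`, contradicting finiteness: `(1, 0, k)` is an irreducible
lattice point of `cone(P₁, P₃, (0, 1, k))`, so supernormality forces it into `B`, and likewise
`(0, 1, k + 1)` is an irreducible lattice point of `cone(P₀, P₂, (1, 0, k))`.

Irreducibility is read off from facet inequalities `0 ≤ w ⬝ᵥ x`: the point has height one over
some facet, so in a decomposition `z = u + v` one summand lies on that facet, and the other facet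
inequalities force it to vanish.
-/

open Matrix

section

variable {α : Type*} [AddCommMonoid α]

def IsIrreducibleIn (M : AddSubmonoid α) (z : α) : Prop :=
  z ∈ M ∧ z ≠ 0 ∧ ∀ u ∈ M, ∀ v ∈ M, u + v = z → u = 0 ∨ v = 0

lemma IsIrreducibleIn.eq_of_nsmul_eq {M : AddSubmonoid α} {z a : α} (hz : IsIrreducibleIn M z)
    (ha : a ∈ M) {n : ℕ} (h : n • a = z) : a = z := by
  induction n with
  | zero => exact absurd (h.symm.trans (zero_nsmul a)) hz.2.1
  | succ n ih =>
    rw [succ_nsmul] at h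
    rcases hz.2.2 _ (AddSubmonoid.nsmul_mem M ha n) a ha h with hn | ha0
    · simpa [hn] using h
    · exact absurd (by simpa [ha0] using h.symm) hz.2.1

lemma IsIrreducibleIn.mem_of_sum_eq {M : AddSubmonoid α} {z : α} (hz : IsIrreducibleIn M z)
    {s : Finset α} (hs : ∀ b ∈ s, b ∈ M) {c : α → ℕ} (h : ∑ b ∈ s, c b • b = z) : z ∈ s := by
  classical
  induction s using Finset.induction_on with
  | empty => exact absurd (by simpa using h.symm) hz.2.1
  | insert a s ha ih =>
    rw [Finset.sum_insert ha] at h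
    have hsM : ∀ b ∈ s, b ∈ M := fun b hb => hs b (Finset.mem_insert_of_mem hb)
    have haM : a ∈ M := hs a (Finset.mem_insert_self a s)
    rcases hz.2.2 _ (AddSubmonoid.nsmul_mem M haM _) _
        (AddSubmonoid.sum_mem M fun b hb => AddSubmonoid.nsmul_mem M (hsM b hb) _) h with h0 | h0
    · exact Finset.mem_insert_of_mem (ih hsM (by simpa [h0] using h))
    · rw [← hz.eq_of_nsmul_eq haM (by simpa [h0] using h)]
      exact Finset.mem_insert_self a s

end

section

variable {m : ℕ}

lemma ConeM.of_mem {B : Set (Fin m → ℤ)} {b : Fin m → ℤ} (hb : b ∈ B) :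
    ConeM B (fun i => (b i : ℝ)) :=
  ⟨{b}, fun _ => 1, by simpa, fun _ => zero_le_one, fun i => by simp⟩

lemma ConeM.of_sum {ι : Type*} [Fintype ι] {B : Set (Fin m → ℤ)} {g : ι → Fin m → ℤ}
    {t : ι → ℝ} (hg : ∀ j, g j ∈ B) (ht : ∀ j, 0 ≤ t j) :
    ConeM B (fun i => ∑ j, t j * (g j i : ℝ)) := by
  classical
  refine ⟨Finset.univ.image g, fun b => ∑ j with g j = b, t j, ?_,
    fun b => Finset.sum_nonneg fun j _ => ht j, fun i => ?_⟩
  · simpa [Set.subset_def] using hg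
  · simp_rw [Finset.sum_mul]
    rw [← Finset.sum_fiberwise_of_maps_to fun j _ => Finset.mem_image_of_mem g (Finset.mem_univ j)]
    refine Finset.sum_congr rfl fun b _ => Finset.sum_congr rfl fun j hj => ?_
    rw [(Finset.mem_filter.mp hj).2]

lemma ConeM.dotProduct_nonneg {B : Set (Fin m → ℤ)} {w v : Fin m → ℤ}
    (hv : ConeM B (fun i => (v i : ℝ))) (hB : ∀ b ∈ B, 0 ≤ w ⬝ᵥ b) : 0 ≤ w ⬝ᵥ v := by
  obtain ⟨s, c, hsB, hc, hsum⟩ := hv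
  have key : ((w ⬝ᵥ v : ℤ) : ℝ) = ∑ b ∈ s, c b * ((w ⬝ᵥ b : ℤ) : ℝ) := by
    simp only [dotProduct, Int.cast_sum, Int.cast_mul, hsum, Finset.mul_sum]
    rw [Finset.sum_comm]
    exact Finset.sum_congr rfl fun _ _ => Finset.sum_congr rfl fun _ _ => by ring
  have : (0 : ℝ) ≤ ((w ⬝ᵥ v : ℤ) : ℝ) := key ▸
    Finset.sum_nonneg fun b hb => mul_nonneg (hc b) (by exact_mod_cast hB b (hsB hb))
  exact_mod_cast this

def polyhedralMonoid (W : Set (Fin m → ℤ)) : AddSubmonoid (Fin m → ℤ) where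
  carrier := {u | ∀ w ∈ W, 0 ≤ w ⬝ᵥ u}
  add_mem' {u v} hu hv w hw := by rw [dotProduct_add]; exact add_nonneg (hu w hw) (hv w hw)
  zero_mem' w _ := by rw [dotProduct_zero]

@[simp]
lemma mem_polyhedralMonoid {W : Set (Fin m → ℤ)} {u : Fin m → ℤ} :
    u ∈ polyhedralMonoid W ↔ ∀ w ∈ W, 0 ≤ w ⬝ᵥ u :=
  Iff.rfl

lemma ConeM.mem_polyhedralMonoid {B W : Set (Fin m → ℤ)} {v : Fin m → ℤ}
    (hv : ConeM B (fun i => (v i : ℝ))) (hB : B ⊆ polyhedralMonoid W) :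
    v ∈ polyhedralMonoid W :=
  fun w hw => hv.dotProduct_nonneg fun _ hb => hB hb w hw

lemma isIrreducibleIn_polyhedralMonoid_of_dotProduct_eq_one {W : Set (Fin m → ℤ)}
    {w z : Fin m → ℤ} (hw : w ∈ W) (hzW : z ∈ polyhedralMonoid W) (hz : w ⬝ᵥ z = 1)
    (hface : ∀ u ∈ polyhedralMonoid W, ∀ v ∈ polyhedralMonoid W,
      u + v = z → w ⬝ᵥ u = 0 → u = 0) :
    IsIrreducibleIn (polyhedralMonoid W) z := by
  refine ⟨hzW, fun h => by simp [h] at hz, fun u hu v hv huv => ?_⟩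
  have hsum : w ⬝ᵥ u + w ⬝ᵥ v = 1 := by rw [← dotProduct_add, huv, hz]
  rcases (by have := hu w hw; have := hv w hw; omega : w ⬝ᵥ u = 0 ∨ w ⬝ᵥ v = 0) with h | h
  · exact .inl (hface u hu v hv huv h)
  · exact .inr (hface v hv u hu (by rw [add_comm, huv]) h)

lemma NNCombM.mem_of_isIrreducibleIn {S : Set (Fin m → ℤ)} {M : AddSubmonoid (Fin m → ℤ)}
    {z : Fin m → ℤ} (h : NNCombM S z) (hS : S ⊆ M) (hz : IsIrreducibleIn M z) : z ∈ S := by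
  obtain ⟨s, c, hsS, hsum⟩ := h
  refine hsS (hz.mem_of_sum_eq (c := c) (fun b hb => hS (hsS hb)) ?_)
  ext i
  simp [Finset.sum_apply, hsum i]

lemma SupernormalM.mem_of_isIrreducibleIn {S B' W : Set (Fin m → ℤ)} {z : Fin m → ℤ}
    (hS : SupernormalM S) (hB'S : B' ⊆ S) (hB'W : B' ⊆ polyhedralMonoid W)
    (hz : ConeM B' (fun i => (z i : ℝ))) (hirr : IsIrreducibleIn (polyhedralMonoid W) z) :
    z ∈ S :=
  ((hS B' hB'S z hz).mem_of_isIrreducibleIn (fun _ hb => hb.2.mem_polyhedralMonoid hB'W) hirr).1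

end

lemma Int.eq_zero_of_mul_nonneg_of_mul_lt {n x : ℤ} (hn : 0 < n) (h₀ : 0 ≤ n * x)
    (h₁ : n * x < n) : x = 0 := by
  have : 0 ≤ x := nonneg_of_mul_nonneg_right h₀ hn
  have : x < 1 := lt_of_mul_lt_mul_left (by simpa using h₁) hn.le
  omega

abbrev coneGenerators : Set (Fin 3 → ℤ) := {![-1, 1, 2], ![1, -1, 1], ![0, 1, 0], ![1, 0, 0]}

abbrev coneFacets : Set (Fin 3 → ℤ) := {![1, 1, 0], ![2, 0, 1], ![0, 0, 1], ![0, 1, 1]}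

lemma coneGenerators_subset_polyhedralMonoid : coneGenerators ⊆ polyhedralMonoid coneFacets := by
  simp [Set.insert_subset_iff, dotProduct, Fin.sum_univ_three]

lemma isIrreducibleIn_of_mem_coneGenerators {z : Fin 3 → ℤ} (hz : z ∈ coneGenerators) :
    IsIrreducibleIn (polyhedralMonoid coneFacets) z := by
  refine ⟨coneGenerators_subset_polyhedralMonoid hz, ?_, fun u hu v hv huv => ?_⟩
  · rcases hz with rfl | rfl | rfl | rfl <;> simp [funext_iff, Fin.forall_fin_succ]
  · have hv_eq : ∀ i, v i = z i - u i := fun i => by rw [← huv]; simp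
    simp [dotProduct, Fin.sum_univ_three, hv_eq] at hu hv
    simp only [funext_iff, Fin.forall_fin_succ, hv_eq]
    rcases hz with rfl | rfl | rfl | rfl <;> simp at * <;> omega

lemma coneGenerators_subset_of_generates {S : Set (Fin 3 → ℤ)}
    (hS : ∀ b ∈ S, ConeM coneGenerators (fun i => (b i : ℝ)))
    (hgen : ∀ z : Fin 3 → ℤ, ConeM coneGenerators (fun i => (z i : ℝ)) → NNCombM S z) :
    coneGenerators ⊆ S := fun z hz =>
  (hgen z (.of_mem hz)).mem_of_isIrreducibleIn
    (fun b hb => (hS b hb).mem_polyhedralMonoid coneGenerators_subset_polyhedralMonoid)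
    (isIrreducibleIn_of_mem_coneGenerators hz)

lemma SupernormalM.mem_one_zero_of_mem_zero_one {S : Set (Fin 3 → ℤ)} (hS : SupernormalM S)
    {k : ℤ} (hk : 0 ≤ k) (h₁ : ![1, -1, 1] ∈ S) (h₂ : ![1, 0, 0] ∈ S) (h₃ : ![0, 1, k] ∈ S) :
    ![1, 0, k] ∈ S := by
  set B' : Set (Fin 3 → ℤ) := {![1, -1, 1], ![1, 0, 0], ![0, 1, k]}
  -- the inner facet normals of `cone B'`
  set W : Set (Fin 3 → ℤ) := {![0, 1, 1], ![0, -k, 1], ![k + 1, k, -1]}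
  have hB'W : B' ⊆ polyhedralMonoid W := by
    simp [B', W, Set.insert_subset_iff, dotProduct, Fin.sum_univ_three]
    omega
  have hkR : (0 : ℝ) ≤ k := by exact_mod_cast hk
  have hz : ConeM B' (fun i => ((![1, 0, k] : Fin 3 → ℤ) i : ℝ)) := by
    convert ConeM.of_sum (g := ![![1, -1, 1], ![1, 0, 0], ![0, 1, k]])
      (t := ![k / (k + 1), 1 / (k + 1), k / (k + 1)]) ?_ ?_ using 1
    · ext i; fin_cases i <;> simp [Fin.sum_univ_three] <;> grind
    · simp [B', Fin.forall_fin_succ]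
    · simp only [Fin.forall_fin_succ]
      simp
      exact ⟨by positivity, by positivity, by positivity⟩
  have hface : ∀ u ∈ polyhedralMonoid W, ∀ v ∈ polyhedralMonoid W,
      u + v = ![1, 0, k] → ![k + 1, k, -1] ⬝ᵥ u = 0 → u = 0 := by
    rintro u hu v hv huv hu_face
    have hv_eq : ∀ i, v i = ![1, 0, k] i - u i := fun i => by rw [← huv]; simp
    simp [W, dotProduct, Fin.sum_univ_three, hv_eq] at hu hv hu_face
    have hk1 : 0 < k + 1 := by omega
    have h₀ : u 0 = 0 := Int.eq_zero_of_mul_nonneg_of_mul_lt hk1 (by linarith) (by linarith)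
    have h₂ : u 2 = k * u 1 := by rw [h₀] at hu_face; linarith
    have h₁ : u 1 = 0 := Int.eq_zero_of_mul_nonneg_of_mul_lt hk1 (by linarith) (by linarith)
    ext i
    fin_cases i <;> simp [h₀, h₁, h₂]
  exact hS.mem_of_isIrreducibleIn (by simp [B', Set.insert_subset_iff, *]) hB'W hz
    (isIrreducibleIn_polyhedralMonoid_of_dotProduct_eq_one (by simp [W])
      (hz.mem_polyhedralMonoid hB'W) (by simp [dotProduct, Fin.sum_univ_three]) hface)

lemma SupernormalM.mem_zero_one_succ_of_mem_one_zero {S : Set (Fin 3 → ℤ)}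
    (hS : SupernormalM S) {k : ℤ} (hk : 0 ≤ k) (h₁ : ![-1, 1, 2] ∈ S) (h₂ : ![0, 1, 0] ∈ S)
    (h₃ : ![1, 0, k] ∈ S) :
    ![0, 1, k + 1] ∈ S := by
  set B' : Set (Fin 3 → ℤ) := {![-1, 1, 2], ![0, 1, 0], ![1, 0, k]}
  set W : Set (Fin 3 → ℤ) := {![2, 0, 1], ![k, k + 2, -1], ![-k, 0, 1]}
  have hB'W : B' ⊆ polyhedralMonoid W := by
    simp [B', W, Set.insert_subset_iff, dotProduct, Fin.sum_univ_three]
    omega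
  have hkR : (0 : ℝ) ≤ k := by exact_mod_cast hk
  have hz : ConeM B' (fun i => ((![0, 1, k + 1] : Fin 3 → ℤ) i : ℝ)) := by
    convert ConeM.of_sum (g := ![![-1, 1, 2], ![0, 1, 0], ![1, 0, k]])
      (t := ![(k + 1) / (k + 2), 1 / (k + 2), (k + 1) / (k + 2)]) ?_ ?_ using 1
    · ext i; fin_cases i <;> simp [Fin.sum_univ_three] <;> grind
    · simp [B', Fin.forall_fin_succ]
    · simp only [Fin.forall_fin_succ]
      simp
      exact ⟨by positivity, by positivity, by positivity⟩
  have hface : ∀ u ∈ polyhedralMonoid W, ∀ v ∈ polyhedralMonoid W,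
      u + v = ![0, 1, k + 1] → ![k, k + 2, -1] ⬝ᵥ u = 0 → u = 0 := by
    rintro u hu v hv huv hu_face
    have hv_eq : ∀ i, v i = ![0, 1, k + 1] i - u i := fun i => by rw [← huv]; simp
    simp [W, dotProduct, Fin.sum_univ_three, hv_eq] at hu hv hu_face
    have hk2 : 0 < k + 2 := by omega
    have h₁ : u 1 = 0 := Int.eq_zero_of_mul_nonneg_of_mul_lt hk2 (by linarith) (by linarith)
    have h₂ : u 2 = k * u 0 := by rw [h₁] at hu_face; linarith
    have h₀ : u 0 = 0 := Int.eq_zero_of_mul_nonneg_of_mul_lt hk2 (by linarith) (by linarith)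
    ext i
    fin_cases i <;> simp [h₀, h₁, h₂]
  exact hS.mem_of_isIrreducibleIn (by simp [B', Set.insert_subset_iff, *]) hB'W hz
    (isIrreducibleIn_polyhedralMonoid_of_dotProduct_eq_one (by simp [W])
      (hz.mem_polyhedralMonoid hB'W) (by simp [dotProduct, Fin.sum_univ_three]; ring) hface)

/-- The monoid of lattice points of the cone spanned by
`P₀=(-1,1,2), P₁=(1,-1,1), P₂=(0,1,0), P₃=(1,0,0)` is not generated by any finite
supernormal subset of itself. -/
theorem stmt10 :
    ¬ ∃ B : Finset (Fin 3 → ℤ),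
      (∀ b ∈ B, ConeM ({![-1,1,2], ![1,-1,1], ![0,1,0], ![1,0,0]} : Set (Fin 3 → ℤ))
        (fun i => (b i : ℝ))) ∧
      SupernormalM (↑B : Set (Fin 3 → ℤ)) ∧
      (∀ z : Fin 3 → ℤ,
        ConeM ({![-1,1,2], ![1,-1,1], ![0,1,0], ![1,0,0]} : Set (Fin 3 → ℤ)) (fun i => (z i : ℝ)) →
        NNCombM ↑B z) := by
  rintro ⟨B, hBcone, hBsup, hBgen⟩
  have hgens := coneGenerators_subset_of_generates hBcone hBgen
  have hcolumn : ∀ n : ℕ, ![0, 1, (n : ℤ)] ∈ B := by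
    intro n
    induction n with
    | zero => simpa using hgens (by simp)
    | succ n ih =>
      have h₁₀ := hBsup.mem_one_zero_of_mem_zero_one n.cast_nonneg
        (hgens (by simp)) (hgens (by simp)) ih
      simpa using hBsup.mem_zero_one_succ_of_mem_one_zero n.cast_nonneg
        (hgens (by simp)) (hgens (by simp)) h₁₀
  refine Set.infinite_of_injective_forall_mem (fun a b h => ?_) hcolumn B.finite_toSet
  simpa using congrFun h 2
end

section
/- The configuration B = {-1,0,1}³ \ {(0,0,0)} of all nonzero vectors in ℤ³ with all coordinates of absolute value at most one is supernormal. -/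
section Helpers

abbrev V3 := Fin 3 → ℤ

/-- Carathéodory-type reduction: any nonnegative combination can be rewritten to use
at most 3 of the vectors. -/
lemma cara : ∀ (n : ℕ) (s : Finset V3) (c : V3 → ℝ) (x : Fin 3 → ℝ),
    s.card ≤ n → (∀ b, 0 ≤ c b) → (∀ i, x i = ∑ b ∈ s, c b * (b i : ℝ)) →
    ∃ (t : Finset V3) (d : V3 → ℝ), t ⊆ s ∧ t.card ≤ 3 ∧
      (∀ b, 0 ≤ d b) ∧ (∀ i, x i = ∑ b ∈ t, d b * (b i : ℝ)) := by
  intro n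
  induction n with
  | zero =>
    intro s c x hcard hc hx
    exact ⟨s, c, subset_rfl, by omega, hc, hx⟩
  | succ n ih =>
    intro s c x hcard hc hx
    by_cases hle : s.card ≤ 3
    · exact ⟨s, c, subset_rfl, hle, hc, hx⟩
    push_neg at hle
    -- the family of vectors of s in ℝ³ is linearly dependent
    have hnli : ¬ LinearIndependent ℝ (fun b : ↥s => (fun i => ((b : V3) i : ℝ) : Fin 3 → ℝ)) := by
      intro hli
      have := hli.fintype_card_le_finrank
      rw [Module.finrank_fin_fun, Fintype.card_coe] at this
      omega
    rw [Fintype.not_linearIndependent_iff] at hnli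
    obtain ⟨g, hgsum, ⟨b₀, hb₀⟩⟩ := hnli
    -- extend g to all of V3
    set G : V3 → ℝ := fun b => if h : b ∈ s then g ⟨b, h⟩ else 0 with hG
    have hGsum : ∀ i, ∑ b ∈ s, G b * (b i : ℝ) = 0 := by
      intro i
      have h1 : ∑ b ∈ s, G b * (b i : ℝ) = ∑ b ∈ s.attach, G b * ((b : V3) i : ℝ) :=
        (Finset.sum_attach s _).symm
      have h2 : ∑ b ∈ s.attach, G (b : V3) * ((b : V3) i : ℝ)
          = ∑ b : ↥s, g b * ((b : V3) i : ℝ) := by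
        apply Finset.sum_congr rfl
        intro b _
        simp [hG, b.2]
      rw [h1, h2]
      have := congrFun hgsum i
      simpa [Finset.sum_apply] using this
    have hGb₀ : G (b₀ : V3) ≠ 0 := by simp [hG, b₀.2, hb₀]
    -- make the relation have a positive coefficient somewhere
    have key : ∃ g' : V3 → ℝ, (∀ i, ∑ b ∈ s, g' b * (b i : ℝ) = 0) ∧ ∃ b ∈ s, 0 < g' b := by
      rcases lt_or_gt_of_ne hGb₀ with h | h
      · refine ⟨fun b => - G b, ?_, ⟨b₀, b₀.2, by simp only []; linarith⟩⟩
        intro i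
        have := hGsum i
        simp only [neg_mul, Finset.sum_neg_distrib]
        linarith
      · exact ⟨G, hGsum, ⟨b₀, b₀.2, h⟩⟩
    obtain ⟨g', hg'sum, hg'pos⟩ := key
    set T : Finset V3 := s.filter (fun b => 0 < g' b) with hT
    have hTne : T.Nonempty := by
      obtain ⟨b, hbs, hbp⟩ := hg'pos
      exact ⟨b, Finset.mem_filter.2 ⟨hbs, hbp⟩⟩
    obtain ⟨bm, hbmT, hmin⟩ := T.exists_min_image (fun b => c b / g' b) hTne
    have hbms : bm ∈ s := (Finset.mem_filter.1 hbmT).1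
    have hgbm : 0 < g' bm := (Finset.mem_filter.1 hbmT).2
    set ρ : ℝ := c bm / g' bm with hρ
    have hρ0 : 0 ≤ ρ := div_nonneg (hc bm) hgbm.le
    set d : V3 → ℝ := fun b => if b ∈ s.erase bm then c b - ρ * g' b else 0 with hd
    have hd0 : ∀ b, 0 ≤ d b := by
      intro b
      by_cases hb : b ∈ s.erase bm
      · obtain ⟨hbne, hbs⟩ := Finset.mem_erase.1 hb
        simp only [hd, if_pos hb]
        by_cases hpos : 0 < g' b
        · have hbT : b ∈ T := Finset.mem_filter.2 ⟨hbs, hpos⟩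
          have h1 : ρ ≤ c b / g' b := hmin b hbT
          have h2 : ρ * g' b ≤ c b := (le_div_iff₀ hpos).1 h1
          linarith
        · push_neg at hpos
          have h2 : ρ * g' b ≤ 0 := mul_nonpos_of_nonneg_of_nonpos hρ0 hpos
          have := hc b
          linarith
      · simp only [hd]
        rw [if_neg hb]
    have hdsum : ∀ i, x i = ∑ b ∈ s.erase bm, d b * (b i : ℝ) := by
      intro i
      have h1 : ∑ b ∈ s.erase bm, d b * (b i : ℝ)
          = ∑ b ∈ s.erase bm, (c b - ρ * g' b) * (b i : ℝ) := by
        apply Finset.sum_congr rfl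
        intro b hb
        simp only [hd, if_pos hb]
      have h2 : ∑ b ∈ s.erase bm, (c b - ρ * g' b) * (b i : ℝ)
          = (∑ b ∈ s, (c b - ρ * g' b) * (b i : ℝ)) - (c bm - ρ * g' bm) * (bm i : ℝ) :=
        Finset.sum_erase_eq_sub hbms
      have h3 : c bm - ρ * g' bm = 0 := by
        rw [hρ, div_mul_cancel₀ _ (ne_of_gt hgbm)]
        ring
      have h4 : ∑ b ∈ s, (c b - ρ * g' b) * (b i : ℝ)
          = (∑ b ∈ s, c b * (b i : ℝ)) - ρ * ∑ b ∈ s, g' b * (b i : ℝ) := by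
        rw [Finset.mul_sum, ← Finset.sum_sub_distrib]
        apply Finset.sum_congr rfl
        intro b _
        ring
      rw [h1, h2, h3, h4, hg'sum i, hx i]
      ring
    have hcard' : (s.erase bm).card ≤ n := by
      have := Finset.card_erase_of_mem hbms
      omega
    obtain ⟨t, dd, hts, htc, hdd0, hddsum⟩ := ih (s.erase bm) d x hcard' hd0 hdsum
    exact ⟨t, dd, hts.trans (Finset.erase_subset _ _), htc, hdd0, hddsum⟩


lemma sum3 {M : Type*} [AddCommMonoid M] (u v w : V3) (huv : u ≠ v) (huw : u ≠ w)
    (hvw : v ≠ w) (f : V3 → M) :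
    ∑ b ∈ ({u, v, w} : Finset V3), f b = f u + f v + f w := by
  rw [Finset.sum_insert (by simp [huv, huw]), Finset.sum_insert (by simp [hvw]),
    Finset.sum_singleton, add_assoc]

lemma sum2 {M : Type*} [AddCommMonoid M] (u v : V3) (huv : u ≠ v) (f : V3 → M) :
    ∑ b ∈ ({u, v} : Finset V3), f b = f u + f v := by
  rw [Finset.sum_insert (by simp [huv]), Finset.sum_singleton]

lemma cone3 (B' : Set V3) (u v w : V3) (hu : u ∈ B') (hv : v ∈ B') (hw : w ∈ B')
    (huv : u ≠ v) (huw : u ≠ w) (hvw : v ≠ w) (a b c : ℝ) (ha : 0 ≤ a) (hb : 0 ≤ b)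
    (hc : 0 ≤ c) (x : Fin 3 → ℝ) (hx : ∀ i, x i = a * u i + b * v i + c * w i) :
    ConeM B' x := by
  refine ⟨{u, v, w}, fun t => if t = u then a else if t = v then b else if t = w then c else 0,
    ?_, ?_, ?_⟩
  · intro t ht
    simp only [Finset.coe_insert, Finset.coe_singleton, Set.mem_insert_iff,
      Set.mem_singleton_iff] at ht
    rcases ht with rfl | rfl | rfl <;> assumption
  · intro t
    dsimp only
    split_ifs <;> first | exact ha | exact hb | exact hc | exact le_refl 0
  · intro i
    rw [sum3 u v w huv huw hvw]
    dsimp only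
    rw [if_pos rfl, if_neg huv.symm, if_pos rfl,
      if_neg huw.symm, if_neg hvw.symm, if_pos rfl]
    exact hx i

lemma cone2 (B' : Set V3) (u v : V3) (hu : u ∈ B') (hv : v ∈ B') (huv : u ≠ v)
    (a b : ℝ) (ha : 0 ≤ a) (hb : 0 ≤ b) (x : Fin 3 → ℝ)
    (hx : ∀ i, x i = a * u i + b * v i) : ConeM B' x := by
  refine ⟨{u, v}, fun t => if t = u then a else if t = v then b else 0, ?_, ?_, ?_⟩
  · intro t ht
    simp only [Finset.coe_insert, Finset.coe_singleton, Set.mem_insert_iff,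
      Set.mem_singleton_iff] at ht
    rcases ht with rfl | rfl <;> assumption
  · intro t
    dsimp only
    split_ifs <;> first | exact ha | exact hb | exact le_refl 0
  · intro i
    rw [sum2 u v huv]
    dsimp only
    rw [if_pos rfl, if_neg huv.symm, if_pos rfl]
    exact hx i

lemma cone1 (B' : Set V3) (u : V3) (hu : u ∈ B') : ConeM B' (fun i => (u i : ℝ)) := by
  refine ⟨{u}, fun _ => 1, by simpa using hu, fun _ => zero_le_one, ?_⟩
  intro i
  simp

lemma nn_single (S : Set V3) (b : V3) (hb : b ∈ S) : NNCombM S b := by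
  refine ⟨{b}, fun _ => 1, by simpa using hb, ?_⟩
  intro i
  simp

lemma nn_add (S : Set V3) (x y z : V3) (hxy : ∀ i, z i = x i + y i)
    (hx : NNCombM S x) (hy : NNCombM S y) : NNCombM S z := by
  obtain ⟨s₁, c₁, hs₁, h₁⟩ := hx
  obtain ⟨s₂, c₂, hs₂, h₂⟩ := hy
  refine ⟨s₁ ∪ s₂,
    fun b => (if b ∈ s₁ then c₁ b else 0) + (if b ∈ s₂ then c₂ b else 0), ?_, ?_⟩
  · rw [Finset.coe_union]
    exact Set.union_subset hs₁ hs₂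
  · intro i
    have e1 : ∀ (s' : Finset V3) (c' : V3 → ℕ), s' ⊆ s₁ ∪ s₂ →
        ∑ b ∈ s₁ ∪ s₂, ((if b ∈ s' then (c' b : ℤ) else 0)) * b i
          = ∑ b ∈ s', (c' b : ℤ) * b i := by
      intro s' c' hsub
      rw [← Finset.sum_subset hsub]
      · apply Finset.sum_congr rfl
        intro b hb
        rw [if_pos hb]
      · intro b _ hb
        rw [if_neg hb, zero_mul]
    rw [hxy i, h₁ i, h₂ i]
    rw [← e1 s₁ c₁ Finset.subset_union_left, ← e1 s₂ c₂ Finset.subset_union_right,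
      ← Finset.sum_add_distrib]
    apply Finset.sum_congr rfl
    intro b _
    push_cast
    split_ifs <;> ring

lemma nn3 (S : Set V3) (u v w : V3) (hu : u ∈ S) (hv : v ∈ S) (hw : w ∈ S)
    (huv : u ≠ v) (huw : u ≠ w) (hvw : v ≠ w) (n₁ n₂ n₃ : ℕ) (z : V3)
    (hz : ∀ i, z i = n₁ * u i + n₂ * v i + n₃ * w i) : NNCombM S z := by
  refine ⟨{u, v, w}, fun t => if t = u then n₁ else if t = v then n₂ else if t = w then n₃ else 0,
    ?_, ?_⟩
  · intro t ht
    simp only [Finset.coe_insert, Finset.coe_singleton, Set.mem_insert_iff,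
      Set.mem_singleton_iff] at ht
    rcases ht with rfl | rfl | rfl <;> assumption
  · intro i
    rw [sum3 u v w huv huw hvw]
    dsimp only
    rw [if_pos rfl, if_neg huv.symm, if_pos rfl,
      if_neg huw.symm, if_neg hvw.symm, if_pos rfl]
    exact hz i

lemma nn2 (S : Set V3) (u v : V3) (hu : u ∈ S) (hv : v ∈ S) (huv : u ≠ v)
    (n₁ n₂ : ℕ) (z : V3) (hz : ∀ i, z i = n₁ * u i + n₂ * v i) : NNCombM S z := by
  refine ⟨{u, v}, fun t => if t = u then n₁ else if t = v then n₂ else 0, ?_, ?_⟩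
  · intro t ht
    simp only [Finset.coe_insert, Finset.coe_singleton, Set.mem_insert_iff,
      Set.mem_singleton_iff] at ht
    rcases ht with rfl | rfl <;> assumption
  · intro i
    rw [sum2 u v huv]
    dsimp only
    rw [if_pos rfl, if_neg huv.symm, if_pos rfl]
    exact hz i

lemma nn1 (S : Set V3) (u : V3) (hu : u ∈ S) (n₁ : ℕ) (z : V3)
    (hz : ∀ i, z i = n₁ * u i) : NNCombM S z := by
  refine ⟨{u}, fun _ => n₁, by simpa using hu, ?_⟩
  intro i
  simpa using hz i

end Helpers

section Coord

/-- sign function -/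
def sg (x : ℤ) : ℤ := if 0 < x then 1 else if x < 0 then -1 else 0

lemma sg_abs (x : ℤ) : |x| ≤ 2 → |x - sg x| ≤ 1 := by
  intro h
  rw [abs_le] at h ⊢
  unfold sg; split_ifs <;> omega

lemma L2 (fa fb fc : ℝ) (a b c : ℤ) (h0a : 0 ≤ fa) (h1a : fa < 1) (h0b : 0 ≤ fb)
    (h1b : fb < 1) (h0c : 0 ≤ fc) (h1c : fc < 1) (ha : |a| ≤ 1) (hb : |b| ≤ 1)
    (hc : |c| ≤ 1) (h : (2:ℝ) = fa * a + fb * b + fc * c) : a = 1 ∧ b = 1 ∧ c = 1 := by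
  have ha' : a = -1 ∨ a = 0 ∨ a = 1 := by rw [abs_le] at ha; omega
  have hb' : b = -1 ∨ b = 0 ∨ b = 1 := by rw [abs_le] at hb; omega
  have hc' : c = -1 ∨ c = 0 ∨ c = 1 := by rw [abs_le] at hc; omega
  rcases ha' with rfl | rfl | rfl <;> rcases hb' with rfl | rfl | rfl <;>
    rcases hc' with rfl | rfl | rfl <;> push_cast at h <;>
    first
      | exact ⟨rfl, rfl, rfl⟩
      | (exfalso; linarith)

lemma L1 (fa fb fc : ℝ) (a b c : ℤ) (h0a : 0 ≤ fa) (h1a : fa < 1) (h0b : 0 ≤ fb)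
    (h1b : fb < 1) (h0c : 0 ≤ fc) (h1c : fc < 1) (hS : fa + fb + fc = 2)
    (ha : |a| ≤ 1) (hb : |b| ≤ 1) (hc : |c| ≤ 1)
    (h : (1:ℝ) = fa * a + fb * b + fc * c) :
    (a = -1 ∧ b = 1 ∧ c = 1 ∧ fa = 1/2) ∨ (a = 1 ∧ b = -1 ∧ c = 1 ∧ fb = 1/2) ∨
    (a = 1 ∧ b = 1 ∧ c = -1 ∧ fc = 1/2) := by
  have ha' : a = -1 ∨ a = 0 ∨ a = 1 := by rw [abs_le] at ha; omega
  have hb' : b = -1 ∨ b = 0 ∨ b = 1 := by rw [abs_le] at hb; omega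
  have hc' : c = -1 ∨ c = 0 ∨ c = 1 := by rw [abs_le] at hc; omega
  rcases ha' with rfl | rfl | rfl <;> rcases hb' with rfl | rfl | rfl <;>
    rcases hc' with rfl | rfl | rfl <;> push_cast at h <;>
    first
      | exact Or.inl ⟨rfl, rfl, rfl, by linarith⟩
      | exact Or.inr (Or.inl ⟨rfl, rfl, rfl, by linarith⟩)
      | exact Or.inr (Or.inr ⟨rfl, rfl, rfl, by linarith⟩)
      | (exfalso; linarith)

lemma L0 (fa fb fc : ℝ) (a b c : ℤ) (h0a : 0 ≤ fa) (h1a : fa < 1) (h0b : 0 ≤ fb)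
    (h1b : fb < 1) (h0c : 0 ≤ fc) (h1c : fc < 1) (hS : fa + fb + fc = 2)
    (hfc : fc = 1/2) (ha : |a| ≤ 1) (hb : |b| ≤ 1) (hc : |c| ≤ 1)
    (h : (0:ℝ) = fa * a + fb * b + fc * c) : a + b = 0 := by
  have ha' : a = -1 ∨ a = 0 ∨ a = 1 := by rw [abs_le] at ha; omega
  have hb' : b = -1 ∨ b = 0 ∨ b = 1 := by rw [abs_le] at hb; omega
  have hc' : c = -1 ∨ c = 0 ∨ c = 1 := by rw [abs_le] at hc; omega
  rcases ha' with rfl | rfl | rfl <;> rcases hb' with rfl | rfl | rfl <;>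
    rcases hc' with rfl | rfl | rfl <;> push_cast at h <;>
    first
      | rfl
      | (exfalso; linarith)

/-- the key coordinate computation in the case where the special coefficient is `fc = 1/2`:
the sign vector coordinate is `(a+b)/2`. -/
lemma coordD (fa fb fc : ℝ) (a b c x : ℤ) (h0a : 0 ≤ fa) (h1a : fa < 1) (h0b : 0 ≤ fb)
    (h1b : fb < 1) (h0c : 0 ≤ fc) (h1c : fc < 1) (hS : fa + fb + fc = 2)
    (hfc : fc = 1/2) (ha : |a| ≤ 1) (hb : |b| ≤ 1) (hc : |c| ≤ 1) (hx : |x| ≤ 2)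
    (h : (x:ℝ) = fa * a + fb * b + fc * c) : 2 * sg x = a + b := by
  have hx' : x = -2 ∨ x = -1 ∨ x = 0 ∨ x = 1 ∨ x = 2 := by rw [abs_le] at hx; omega
  rcases hx' with rfl | rfl | rfl | rfl | rfl
  · -- x = -2
    have h' : (2:ℝ) = fa * ((-a : ℤ) : ℝ) + fb * ((-b : ℤ) : ℝ) + fc * ((-c : ℤ) : ℝ) := by
      push_cast at h ⊢; linarith
    obtain ⟨ea, eb, ec⟩ := L2 fa fb fc (-a) (-b) (-c) h0a h1a h0b h1b h0c h1c
      (by rwa [abs_neg]) (by rwa [abs_neg]) (by rwa [abs_neg]) h'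
    have : sg (-2) = -1 := by decide
    omega
  · -- x = -1
    have h' : (1:ℝ) = fa * ((-a : ℤ) : ℝ) + fb * ((-b : ℤ) : ℝ) + fc * ((-c : ℤ) : ℝ) := by
      push_cast at h ⊢; linarith
    have hsg : sg (-1) = -1 := by decide
    rcases L1 fa fb fc (-a) (-b) (-c) h0a h1a h0b h1b h0c h1c hS
      (by rwa [abs_neg]) (by rwa [abs_neg]) (by rwa [abs_neg]) h' with ⟨e1, e2, e3, hf⟩ | ⟨e1, e2, e3, hf⟩ | ⟨e1, e2, e3, hf⟩
    · exfalso; linarith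
    · exfalso; linarith
    · omega
  · -- x = 0
    have := L0 fa fb fc a b c h0a h1a h0b h1b h0c h1c hS hfc ha hb hc (by push_cast at h ⊢; linarith)
    have hsg : sg 0 = 0 := by decide
    omega
  · -- x = 1
    have hsg : sg 1 = 1 := by decide
    rcases L1 fa fb fc a b c h0a h1a h0b h1b h0c h1c hS ha hb hc
      (by push_cast at h ⊢; linarith) with ⟨e1, e2, e3, hf⟩ | ⟨e1, e2, e3, hf⟩ | ⟨e1, e2, e3, hf⟩
    · exfalso; linarith
    · exfalso; linarith
    · omega
  · -- x = 2
    obtain ⟨ea, eb, ec⟩ := L2 fa fb fc a b c h0a h1a h0b h1b h0c h1c ha hb hc (by push_cast at h ⊢; linarith)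
    have : sg 2 = 1 := by decide
    omega

end Coord

section Main

/-- Common final assembly for the three-generator case. -/
lemma finish3 (B' C : Set V3) (u v w : V3) (hu : u ∈ B') (hv : v ∈ B') (hw : w ∈ B')
    (huv : u ≠ v) (huw : u ≠ w) (hvw : v ≠ w) (z r σ : V3) (n₁ n₂ n₃ : ℕ)
    (hrdef : ∀ i, r i = z i - ((n₁ : ℤ) * u i + (n₂ : ℤ) * v i + (n₃ : ℤ) * w i))
    (fa fb fc μa μb μc : ℝ)
    (hμa0 : 0 ≤ μa) (hμb0 : 0 ≤ μb) (hμc0 : 0 ≤ μc)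
    (hμa : μa ≤ fa) (hμb : μb ≤ fb) (hμc : μc ≤ fc)
    (hr : ∀ i, ((r i : ℤ) : ℝ) = fa * u i + fb * v i + fc * w i)
    (hσreal : ∀ i, ((σ i : ℤ) : ℝ) = μa * u i + μb * v i + μc * w i)
    (hσabs : ∀ i, |σ i| ≤ 1) (hρabs : ∀ i, |r i - σ i| ≤ 1)
    (j₀ : Fin 3) (hσ0 : σ j₀ ≠ 0) (hρ0 : r j₀ - σ j₀ ≠ 0)
    (hCmem : ∀ b, b ∈ B' → b ∈ C)
    (hmkC : ∀ x : V3, x ≠ 0 → (∀ j, |x j| ≤ 1) → ConeM B' (fun i => (x i : ℝ)) → x ∈ C) :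
    NNCombM C z := by
  have hσC : σ ∈ C := by
    apply hmkC
    · intro hcon
      exact hσ0 (by rw [hcon]; rfl)
    · exact hσabs
    · exact cone3 B' u v w hu hv hw huv huw hvw μa μb μc hμa0 hμb0 hμc0 _ hσreal
  set ρ : V3 := fun i => r i - σ i with hρdef
  have hρreal : ∀ i, ((ρ i : ℤ) : ℝ) = (fa - μa) * u i + (fb - μb) * v i + (fc - μc) * w i := by
    intro i
    have h1 : ((ρ i : ℤ) : ℝ) = ((r i : ℤ) : ℝ) - ((σ i : ℤ) : ℝ) := by
      simp only [hρdef]; push_cast; ring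
    rw [h1, hr i, hσreal i]; ring
  have hρC : ρ ∈ C := by
    apply hmkC
    · intro hcon
      have := congrFun hcon j₀
      exact hρ0 this
    · exact hρabs
    · exact cone3 B' u v w hu hv hw huv huw hvw (fa - μa) (fb - μb) (fc - μc)
        (by linarith) (by linarith) (by linarith) _ hρreal
  set natp : V3 := fun i => (n₁ : ℤ) * u i + (n₂ : ℤ) * v i + (n₃ : ℤ) * w i with hnatp
  have hnat : NNCombM C natp :=
    nn3 C u v w (hCmem u hu) (hCmem v hv) (hCmem w hw) huv huw hvw n₁ n₂ n₃ natp
      (fun i => by simp only [hnatp])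
  have hsum : NNCombM C (fun i => σ i + ρ i) :=
    nn_add C σ ρ _ (fun i => rfl) (nn_single C σ hσC) (nn_single C ρ hρC)
  apply nn_add C natp (fun i => σ i + ρ i) z _ hnat hsum
  intro i
  have h1 := hrdef i
  simp only [hnatp, hρdef]
  linarith

end Main

/-- The configuration of all nonzero vectors in `ℤ³` with coordinates of absolute
value at most one is supernormal. -/
theorem stmt13 :
    SupernormalM {v : Fin 3 → ℤ | v ≠ 0 ∧ ∀ j, |v j| ≤ 1} := by
  classical
  intro B' hB' z hz
  obtain ⟨s₀, c₀, hs₀B, hc₀, hx₀⟩ := hz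
  obtain ⟨t, d, hts, htcard, hd0, hxd⟩ := cara s₀.card s₀ c₀ _ le_rfl hc₀ hx₀
  have htB' : ∀ b ∈ t, b ∈ B' := fun b hb => hs₀B (hts hb)
  set C : Set V3 :=
    {b ∈ {v : Fin 3 → ℤ | v ≠ 0 ∧ ∀ j, |v j| ≤ 1} | ConeM B' (fun i => (b i : ℝ))} with hCdef
  show NNCombM C z
  have hCmem : ∀ b, b ∈ B' → b ∈ C := by
    intro b hb
    exact ⟨hB' hb, cone1 B' b hb⟩
  have hmkC : ∀ x : V3, x ≠ 0 → (∀ j, |x j| ≤ 1) → ConeM B' (fun i => (x i : ℝ)) → x ∈ C := by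
    intro x h1 h2 h3
    exact ⟨⟨h1, h2⟩, h3⟩
  have hBs : ∀ b, b ∈ B' → b ≠ 0 ∧ ∀ j, |b j| ≤ 1 := fun b hb => hB' hb
  have hcard4 : t.card = 0 ∨ t.card = 1 ∨ t.card = 2 ∨ t.card = 3 := by omega
  rcases hcard4 with h0 | h1 | h2 | h3
  · -- zero generators
    have ht : t = ∅ := Finset.card_eq_zero.1 h0
    rw [ht] at hxd
    simp only [Finset.sum_empty] at hxd
    refine ⟨∅, fun _ => 0, by simp, ?_⟩
    intro i
    simp only [Finset.sum_empty]
    exact_mod_cast hxd i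
  · -- one generator
    obtain ⟨u, htu⟩ := Finset.card_eq_one.1 h1
    have hu : u ∈ B' := htB' u (by rw [htu]; exact Finset.mem_singleton_self u)
    have hub := (hBs u hu).2
    have hxd' : ∀ i, (z i : ℝ) = d u * u i := by
      intro i
      have := hxd i
      rwa [htu, Finset.sum_singleton] at this
    set n := ⌊d u⌋₊ with hn
    have hf0 : 0 ≤ d u - n := by
      have := Nat.floor_le (hd0 u); linarith
    have hf1 : d u - n < 1 := by
      have := Nat.lt_floor_add_one (d u); push_cast at this ⊢; linarith
    apply nn1 C u (hCmem u hu) n z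
    intro i
    have hcast : ((z i - (n : ℤ) * u i : ℤ) : ℝ) = (d u - n) * (u i : ℝ) := by
      push_cast
      rw [hxd' i]; ring
    have hur : |(u i : ℝ)| ≤ 1 := by exact_mod_cast hub i
    have habs : |((z i - (n : ℤ) * u i : ℤ) : ℝ)| < 1 := by
      rw [hcast, abs_mul, abs_of_nonneg hf0]
      nlinarith [abs_nonneg ((u i : ℝ))]
    have habs' : |z i - (n : ℤ) * u i| < 1 := by exact_mod_cast habs
    have : z i - (n : ℤ) * u i = 0 := by
      rw [abs_lt] at habs'; omega
    linarith
  · -- two generators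
    obtain ⟨u, v, huv, htuv⟩ := Finset.card_eq_two.1 h2
    have hu : u ∈ B' := htB' u (by rw [htuv]; simp)
    have hv : v ∈ B' := htB' v (by rw [htuv]; simp)
    have hub := (hBs u hu).2
    have hvb := (hBs v hv).2
    have hxd' : ∀ i, (z i : ℝ) = d u * u i + d v * v i := by
      intro i
      have := hxd i
      rw [htuv, sum2 u v huv] at this
      simpa using this
    set n₁ := ⌊d u⌋₊ with hn₁
    set n₂ := ⌊d v⌋₊ with hn₂
    set fa := d u - n₁ with hfa
    set fb := d v - n₂ with hfb
    have hfa0 : 0 ≤ fa := by have := Nat.floor_le (hd0 u); simp only [hfa]; linarith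
    have hfb0 : 0 ≤ fb := by have := Nat.floor_le (hd0 v); simp only [hfb]; linarith
    have hfa1 : fa < 1 := by
      have := Nat.lt_floor_add_one (d u); simp only [hfa]; push_cast at this ⊢; linarith
    have hfb1 : fb < 1 := by
      have := Nat.lt_floor_add_one (d v); simp only [hfb]; push_cast at this ⊢; linarith
    set r : V3 := fun i => z i - ((n₁ : ℤ) * u i + (n₂ : ℤ) * v i) with hrdef
    have hr : ∀ i, ((r i : ℤ) : ℝ) = fa * u i + fb * v i := by
      intro i
      simp only [hrdef]
      push_cast
      rw [hxd' i]
      simp only [hfa, hfb]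
      push_cast
      ring
    have hrabs : ∀ i, |r i| ≤ 1 := by
      intro i
      have hur : |(u i : ℝ)| ≤ 1 := by exact_mod_cast hub i
      have hvr : |(v i : ℝ)| ≤ 1 := by exact_mod_cast hvb i
      have habs : |((r i : ℤ) : ℝ)| < 2 := by
        rw [hr i]
        calc |fa * u i + fb * v i| ≤ |fa * (u i : ℝ)| + |fb * (v i : ℝ)| := abs_add_le _ _
        _ = fa * |(u i : ℝ)| + fb * |(v i : ℝ)| := by
            rw [abs_mul, abs_mul, abs_of_nonneg hfa0, abs_of_nonneg hfb0]
        _ < 2 := by nlinarith [abs_nonneg ((u i : ℝ)), abs_nonneg ((v i : ℝ))]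
      have habs' : |r i| < 2 := by exact_mod_cast habs
      omega
    by_cases hr0 : ∀ i, r i = 0
    · apply nn2 C u v (hCmem u hu) (hCmem v hv) huv n₁ n₂ z
      intro i
      have := hr0 i
      simp only [hrdef] at this
      linarith
    · push_neg at hr0
      obtain ⟨i₀, hi₀⟩ := hr0
      have hrC : r ∈ C := by
        apply hmkC
        · intro hcon
          exact hi₀ (by rw [hcon]; rfl)
        · exact hrabs
        · exact cone2 B' u v hu hv huv fa fb hfa0 hfb0 _ hr
      apply nn_add C (fun i => (n₁ : ℤ) * u i + (n₂ : ℤ) * v i) r z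
        (fun i => by simp only [hrdef]; ring)
        (nn2 C u v (hCmem u hu) (hCmem v hv) huv n₁ n₂ _ (fun i => rfl))
        (nn_single C r hrC)
  · -- three generators
    obtain ⟨u, v, w, huv, huw, hvw, htuvw⟩ := Finset.card_eq_three.1 h3
    have hu : u ∈ B' := htB' u (by rw [htuvw]; simp)
    have hv : v ∈ B' := htB' v (by rw [htuvw]; simp)
    have hw : w ∈ B' := htB' w (by rw [htuvw]; simp)
    have hub := (hBs u hu).2
    have hvb := (hBs v hv).2
    have hwb := (hBs w hw).2
    have hubn : ∀ j, |(-(u j) : ℤ)| ≤ 1 := fun j => by rw [abs_neg]; exact hub j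
    have hvbn : ∀ j, |(-(v j) : ℤ)| ≤ 1 := fun j => by rw [abs_neg]; exact hvb j
    have hwbn : ∀ j, |(-(w j) : ℤ)| ≤ 1 := fun j => by rw [abs_neg]; exact hwb j
    have hxd' : ∀ i, (z i : ℝ) = d u * u i + d v * v i + d w * w i := by
      intro i
      have := hxd i
      rw [htuvw, sum3 u v w huv huw hvw] at this
      simpa using this
    set n₁ := ⌊d u⌋₊ with hn₁
    set n₂ := ⌊d v⌋₊ with hn₂
    set n₃ := ⌊d w⌋₊ with hn₃
    set fa := d u - n₁ with hfa
    set fb := d v - n₂ with hfb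
    set fc := d w - n₃ with hfc
    have hfa0 : 0 ≤ fa := by have := Nat.floor_le (hd0 u); simp only [hfa]; linarith
    have hfb0 : 0 ≤ fb := by have := Nat.floor_le (hd0 v); simp only [hfb]; linarith
    have hfc0 : 0 ≤ fc := by have := Nat.floor_le (hd0 w); simp only [hfc]; linarith
    have hfa1 : fa < 1 := by
      have := Nat.lt_floor_add_one (d u); simp only [hfa]; push_cast at this ⊢; linarith
    have hfb1 : fb < 1 := by
      have := Nat.lt_floor_add_one (d v); simp only [hfb]; push_cast at this ⊢; linarith
    have hfc1 : fc < 1 := by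
      have := Nat.lt_floor_add_one (d w); simp only [hfc]; push_cast at this ⊢; linarith
    set r : V3 := fun i => z i - ((n₁ : ℤ) * u i + (n₂ : ℤ) * v i + (n₃ : ℤ) * w i) with hrdef
    have hr : ∀ i, ((r i : ℤ) : ℝ) = fa * u i + fb * v i + fc * w i := by
      intro i
      simp only [hrdef]
      push_cast
      rw [hxd' i]
      simp only [hfa, hfb, hfc]
      push_cast
      ring
    have hrabs : ∀ i, |r i| ≤ 2 := by
      intro i
      have hur : |(u i : ℝ)| ≤ 1 := by exact_mod_cast hub i
      have hvr : |(v i : ℝ)| ≤ 1 := by exact_mod_cast hvb i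
      have hwr : |(w i : ℝ)| ≤ 1 := by exact_mod_cast hwb i
      have habs : |((r i : ℤ) : ℝ)| < 3 := by
        rw [hr i]
        calc |fa * u i + fb * v i + fc * w i|
            ≤ |fa * (u i : ℝ) + fb * (v i : ℝ)| + |fc * (w i : ℝ)| := abs_add_le _ _
        _ ≤ |fa * (u i : ℝ)| + |fb * (v i : ℝ)| + |fc * (w i : ℝ)| := by
            have := abs_add_le (fa * (u i : ℝ)) (fb * (v i : ℝ)); linarith
        _ = fa * |(u i : ℝ)| + fb * |(v i : ℝ)| + fc * |(w i : ℝ)| := by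
            rw [abs_mul, abs_mul, abs_mul, abs_of_nonneg hfa0, abs_of_nonneg hfb0,
              abs_of_nonneg hfc0]
        _ < 3 := by
            nlinarith [abs_nonneg ((u i : ℝ)), abs_nonneg ((v i : ℝ)), abs_nonneg ((w i : ℝ))]
      have habs' : |r i| < 3 := by exact_mod_cast habs
      omega
    by_cases hsmall : ∀ i, |r i| ≤ 1
    · by_cases hr0 : ∀ i, r i = 0
      · apply nn3 C u v w (hCmem u hu) (hCmem v hv) (hCmem w hw) huv huw hvw n₁ n₂ n₃ z
        intro i
        have := hr0 i
        simp only [hrdef] at this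
        linarith
      · push_neg at hr0
        obtain ⟨i₀, hi₀⟩ := hr0
        have hrC : r ∈ C := by
          apply hmkC
          · intro hcon
            exact hi₀ (by rw [hcon]; rfl)
          · exact hsmall
          · exact cone3 B' u v w hu hv hw huv huw hvw fa fb fc hfa0 hfb0 hfc0 _ hr
        apply nn_add C (fun i => (n₁ : ℤ) * u i + (n₂ : ℤ) * v i + (n₃ : ℤ) * w i) r z
          (fun i => by simp only [hrdef]; ring)
          (nn3 C u v w (hCmem u hu) (hCmem v hv) (hCmem w hw) huv huw hvw n₁ n₂ n₃ _
            (fun i => rfl))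
          (nn_single C r hrC)
    · -- some coordinate of r equals ±2
      push_neg at hsmall
      obtain ⟨j₀, hj₀⟩ := hsmall
      have h2 : r j₀ = 2 ∨ r j₀ = -2 := by
        have habs2 : |r j₀| = 2 := le_antisymm (hrabs j₀) hj₀
        rw [abs_eq (by norm_num : (0:ℤ) ≤ 2)] at habs2
        tauto
      -- derive the coefficient sum
      have hS : fa + fb + fc = 2 := by
        rcases h2 with he | he
        · have hh := hr j₀
          rw [he] at hh
          push_cast at hh
          obtain ⟨e1, e2, e3⟩ := L2 fa fb fc (u j₀) (v j₀) (w j₀) hfa0 hfa1 hfb0 hfb1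
            hfc0 hfc1 (hub j₀) (hvb j₀) (hwb j₀) (by linarith)
          rw [e1, e2, e3] at hh
          push_cast at hh
          linarith
        · have hh := hr j₀
          rw [he] at hh
          push_cast at hh
          have hh' : (2:ℝ) = fa * ((-(u j₀) : ℤ) : ℝ) + fb * ((-(v j₀) : ℤ) : ℝ)
              + fc * ((-(w j₀) : ℤ) : ℝ) := by push_cast; linarith
          obtain ⟨e1, e2, e3⟩ := L2 fa fb fc (-(u j₀)) (-(v j₀)) (-(w j₀)) hfa0 hfa1 hfb0 hfb1
            hfc0 hfc1 (hubn _) (hvbn _) (hwbn _) hh'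
          have eu : u j₀ = -1 := by omega
          have ev : v j₀ = -1 := by omega
          have ew : w j₀ = -1 := by omega
          rw [eu, ev, ew] at hh
          push_cast at hh
          linarith
      set σ : V3 := fun i => sg (r i) with hσdef
      have hσabs : ∀ i, |σ i| ≤ 1 := by
        intro i
        simp only [hσdef, sg]
        split_ifs <;> decide
      have hρabs : ∀ i, |r i - σ i| ≤ 1 := fun i => sg_abs (r i) (hrabs i)
      have hσj₀ : σ j₀ = 1 ∨ σ j₀ = -1 := by
        rcases h2 with he | he <;> simp only [hσdef, he] <;> [left; right] <;> decide
      have hσ0 : σ j₀ ≠ 0 := by omega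
      have hρ0 : r j₀ - σ j₀ ≠ 0 := by omega
      -- case analysis on where the special coefficient 1/2 sits
      by_cases hD1 : ∃ j, |r j| = 1 ∧ u j = - r j
      · obtain ⟨j, hj1, hju⟩ := hD1
        have hj' : r j = 1 ∨ r j = -1 := by
          rw [abs_eq (by norm_num : (0:ℤ) ≤ 1)] at hj1
          tauto
        have hfah : fa = 1/2 := by
          rcases hj' with he | he
          · have hh := hr j
            rw [he] at hh
            push_cast at hh
            rcases L1 fa fb fc (u j) (v j) (w j) hfa0 hfa1 hfb0 hfb1 hfc0 hfc1 hS
              (hub j) (hvb j) (hwb j) (by linarith) with hd | hd | hd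
            · exact hd.2.2.2
            · exfalso; omega
            · exfalso; omega
          · have hh := hr j
            rw [he] at hh
            push_cast at hh
            have hh' : (1:ℝ) = fa * ((-(u j) : ℤ) : ℝ) + fb * ((-(v j) : ℤ) : ℝ)
                + fc * ((-(w j) : ℤ) : ℝ) := by push_cast; linarith
            rcases L1 fa fb fc (-(u j)) (-(v j)) (-(w j)) hfa0 hfa1 hfb0 hfb1 hfc0 hfc1 hS
              (hubn _) (hvbn _) (hwbn _) hh' with hd | hd | hd
            · exact hd.2.2.2
            · exfalso; omega
            · exfalso; omega
        have hcoord : ∀ i, 2 * σ i = v i + w i := by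
          intro i
          have hh : ((r i : ℤ) : ℝ) = fb * v i + fc * w i + fa * u i := by rw [hr i]; ring
          exact coordD fb fc fa (v i) (w i) (u i) (r i) hfb0 hfb1 hfc0 hfc1 hfa0 hfa1
            (by linarith) hfah (hvb i) (hwb i) (hub i) (hrabs i) hh
        have hσreal : ∀ i, ((σ i : ℤ) : ℝ) = 0 * u i + (1/2) * v i + (1/2) * w i := by
          intro i
          have h1 := hcoord i
          have h2 : ((2 * σ i : ℤ) : ℝ) = ((v i + w i : ℤ) : ℝ) := by exact_mod_cast h1
          push_cast at h2
          linarith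
        exact finish3 B' C u v w hu hv hw huv huw hvw z r σ n₁ n₂ n₃
          (fun i => by simp only [hrdef]) fa fb fc 0 (1/2) (1/2)
          le_rfl (by norm_num) (by norm_num) hfa0 (by linarith) (by linarith)
          hr hσreal hσabs hρabs j₀ hσ0 hρ0 hCmem hmkC
      by_cases hD2 : ∃ j, |r j| = 1 ∧ v j = - r j
      · obtain ⟨j, hj1, hjv⟩ := hD2
        have hj' : r j = 1 ∨ r j = -1 := by
          rw [abs_eq (by norm_num : (0:ℤ) ≤ 1)] at hj1
          tauto
        have hfbh : fb = 1/2 := by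
          rcases hj' with he | he
          · have hh := hr j
            rw [he] at hh
            push_cast at hh
            rcases L1 fa fb fc (u j) (v j) (w j) hfa0 hfa1 hfb0 hfb1 hfc0 hfc1 hS
              (hub j) (hvb j) (hwb j) (by linarith) with hd | hd | hd
            · exfalso; omega
            · exact hd.2.2.2
            · exfalso; omega
          · have hh := hr j
            rw [he] at hh
            push_cast at hh
            have hh' : (1:ℝ) = fa * ((-(u j) : ℤ) : ℝ) + fb * ((-(v j) : ℤ) : ℝ)
                + fc * ((-(w j) : ℤ) : ℝ) := by push_cast; linarith
            rcases L1 fa fb fc (-(u j)) (-(v j)) (-(w j)) hfa0 hfa1 hfb0 hfb1 hfc0 hfc1 hS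
              (hubn _) (hvbn _) (hwbn _) hh' with hd | hd | hd
            · exfalso; omega
            · exact hd.2.2.2
            · exfalso; omega
        have hcoord : ∀ i, 2 * σ i = u i + w i := by
          intro i
          have hh : ((r i : ℤ) : ℝ) = fa * u i + fc * w i + fb * v i := by rw [hr i]; ring
          exact coordD fa fc fb (u i) (w i) (v i) (r i) hfa0 hfa1 hfc0 hfc1 hfb0 hfb1
            (by linarith) hfbh (hub i) (hwb i) (hvb i) (hrabs i) hh
        have hσreal : ∀ i, ((σ i : ℤ) : ℝ) = (1/2) * u i + 0 * v i + (1/2) * w i := by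
          intro i
          have h1 := hcoord i
          have h2 : ((2 * σ i : ℤ) : ℝ) = ((u i + w i : ℤ) : ℝ) := by exact_mod_cast h1
          push_cast at h2
          linarith
        exact finish3 B' C u v w hu hv hw huv huw hvw z r σ n₁ n₂ n₃
          (fun i => by simp only [hrdef]) fa fb fc (1/2) 0 (1/2)
          (by norm_num) le_rfl (by norm_num) (by linarith) hfb0 (by linarith)
          hr hσreal hσabs hρabs j₀ hσ0 hρ0 hCmem hmkC
      by_cases hD3 : ∃ j, |r j| = 1 ∧ w j = - r j
      · obtain ⟨j, hj1, hjw⟩ := hD3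
        have hj' : r j = 1 ∨ r j = -1 := by
          rw [abs_eq (by norm_num : (0:ℤ) ≤ 1)] at hj1
          tauto
        have hfch : fc = 1/2 := by
          rcases hj' with he | he
          · have hh := hr j
            rw [he] at hh
            push_cast at hh
            rcases L1 fa fb fc (u j) (v j) (w j) hfa0 hfa1 hfb0 hfb1 hfc0 hfc1 hS
              (hub j) (hvb j) (hwb j) (by linarith) with hd | hd | hd
            · exfalso; omega
            · exfalso; omega
            · exact hd.2.2.2
          · have hh := hr j
            rw [he] at hh
            push_cast at hh
            have hh' : (1:ℝ) = fa * ((-(u j) : ℤ) : ℝ) + fb * ((-(v j) : ℤ) : ℝ)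
                + fc * ((-(w j) : ℤ) : ℝ) := by push_cast; linarith
            rcases L1 fa fb fc (-(u j)) (-(v j)) (-(w j)) hfa0 hfa1 hfb0 hfb1 hfc0 hfc1 hS
              (hubn _) (hvbn _) (hwbn _) hh' with hd | hd | hd
            · exfalso; omega
            · exfalso; omega
            · exact hd.2.2.2
        have hcoord : ∀ i, 2 * σ i = u i + v i := by
          intro i
          exact coordD fa fb fc (u i) (v i) (w i) (r i) hfa0 hfa1 hfb0 hfb1 hfc0 hfc1
            hS hfch (hub i) (hvb i) (hwb i) (hrabs i) (hr i)
        have hσreal : ∀ i, ((σ i : ℤ) : ℝ) = (1/2) * u i + (1/2) * v i + 0 * w i := by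
          intro i
          have h1 := hcoord i
          have h2 : ((2 * σ i : ℤ) : ℝ) = ((u i + v i : ℤ) : ℝ) := by exact_mod_cast h1
          push_cast at h2
          linarith
        exact finish3 B' C u v w hu hv hw huv huw hvw z r σ n₁ n₂ n₃
          (fun i => by simp only [hrdef]) fa fb fc (1/2) (1/2) 0
          (by norm_num) (by norm_num) le_rfl (by linarith) (by linarith) hfc0
          hr hσreal hσabs hρabs j₀ hσ0 hρ0 hCmem hmkC
      · -- no coordinate of r is ±1
        have hno1 : ∀ j, r j ≠ 1 ∧ r j ≠ -1 := by
          intro j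
          constructor <;> intro he
          · have hh := hr j
            rw [he] at hh
            push_cast at hh
            rcases L1 fa fb fc (u j) (v j) (w j) hfa0 hfa1 hfb0 hfb1 hfc0 hfc1 hS
              (hub j) (hvb j) (hwb j) (by linarith) with hd | hd | hd
            · exact hD1 ⟨j, by rw [he]; decide, by omega⟩
            · exact hD2 ⟨j, by rw [he]; decide, by omega⟩
            · exact hD3 ⟨j, by rw [he]; decide, by omega⟩
          · have hh := hr j
            rw [he] at hh
            push_cast at hh
            have hh' : (1:ℝ) = fa * ((-(u j) : ℤ) : ℝ) + fb * ((-(v j) : ℤ) : ℝ)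
                + fc * ((-(w j) : ℤ) : ℝ) := by push_cast; linarith
            rcases L1 fa fb fc (-(u j)) (-(v j)) (-(w j)) hfa0 hfa1 hfb0 hfb1 hfc0 hfc1 hS
              (hubn _) (hvbn _) (hwbn _) hh' with hd | hd | hd
            · exact hD1 ⟨j, by rw [he]; decide, by omega⟩
            · exact hD2 ⟨j, by rw [he]; decide, by omega⟩
            · exact hD3 ⟨j, by rw [he]; decide, by omega⟩
        have hσreal : ∀ i, ((σ i : ℤ) : ℝ) = (fa/2) * u i + (fb/2) * v i + (fc/2) * w i := by
          intro i
          have hval : r i = -2 ∨ r i = 0 ∨ r i = 2 := by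
            have h1 := hrabs i
            have h2 := hno1 i
            rw [abs_le] at h1
            omega
          have hhr := hr i
          rcases hval with he | he | he <;> rw [he] at hhr <;> push_cast at hhr <;>
            [skip; skip; skip]
          · have hσv : σ i = -1 := by simp only [hσdef, he]; decide
            rw [hσv]; push_cast; linear_combination hhr / 2
          · have hσv : σ i = 0 := by simp only [hσdef, he]; decide
            rw [hσv]; push_cast; linear_combination hhr / 2
          · have hσv : σ i = 1 := by simp only [hσdef, he]; decide
            rw [hσv]; push_cast; linear_combination hhr / 2
        exact finish3 B' C u v w hu hv hw huv huw hvw z r σ n₁ n₂ n₃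
          (fun i => by simp only [hrdef]) fa fb fc (fa/2) (fb/2) (fc/2)
          (by linarith) (by linarith) (by linarith) (by linarith) (by linarith) (by linarith)
          hr hσreal hσabs hρabs j₀ hσ0 hρ0 hCmem hmkC
end

section
/- Let B ⊆ ℤ^m be supernormal, and let Δ be a triangulation of B using all vectors. Then every maximal cell σ of Δ (consisting of m elements of B) is a lattice basis of ℤ^m. -/
section Stmt15Aux

/-- The coordinatewise cast `ℤ^m → ℝ^m` as a `ℤ`-linear map. -/
def intCastLM (m : ℕ) : (Fin m → ℤ) →ₗ[ℤ] (Fin m → ℝ) where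
  toFun := fun v i => (v i : ℝ)
  map_add' := by
    intro x y; funext i
    simp only [Pi.add_apply, Int.cast_add]
  map_smul' := by
    intro n x; funext i
    simp only [Pi.smul_apply, smul_eq_mul, RingHom.id_apply, Int.cast_mul, zsmul_eq_mul]

/-- The cast of an element of `S` lies in `ConeM S`. -/
lemma coneM_single {m : ℕ} {S : Set (Fin m → ℤ)} {v : Fin m → ℤ} (hv : v ∈ S) :
    ConeM S (fun i => (v i : ℝ)) := by
  classical
  refine ⟨{v}, fun x => if x = v then 1 else 0, by simpa using hv, ?_, ?_⟩
  · intro b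
    dsimp only
    split <;> norm_num
  · intro i; simp

/-- If `v ∈ τ`, the casts of `τ` are `ℝ`-linearly independent, and `v` is a nonnegative real
combination of a subset `s ⊆ τ`, then `v ∈ s`. -/
lemma mem_of_cone_rep {m : ℕ} (τ : Finset (Fin m → ℤ))
    (hτ : LinearIndependent ℝ (fun v : ((τ : Set (Fin m → ℤ))) => fun i => ((v : Fin m → ℤ) i : ℝ)))
    (v : Fin m → ℤ) (hv : v ∈ τ) (s : Finset (Fin m → ℤ)) (c : (Fin m → ℤ) → ℝ)
    (hs : s ⊆ τ) (heq : ∀ i, (v i : ℝ) = ∑ b ∈ s, c b * (b i : ℝ)) : v ∈ s := by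
  classical
  set g : ((τ : Set (Fin m → ℤ))) → ℝ :=
    fun b => (if (b : Fin m → ℤ) = v then 1 else 0) - (if (b : Fin m → ℤ) ∈ s then c b else 0)
    with hg
  have hsum : ∑ b : ((τ : Set (Fin m → ℤ))), g b • (fun i => (((b : Fin m → ℤ)) i : ℝ)) = 0 := by
    funext i
    simp only [Finset.sum_apply, Pi.smul_apply, smul_eq_mul, Pi.zero_apply, hg, sub_mul]
    rw [Finset.sum_sub_distrib]
    have h1 : ∑ b : ((τ : Set (Fin m → ℤ))),
        (if (b : Fin m → ℤ) = v then (1:ℝ) else 0) * ((b : Fin m → ℤ) i : ℝ) = (v i : ℝ) := by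
      rw [Finset.sum_finset_coe (fun b => (if b = v then (1:ℝ) else 0) * ((b i : ℤ) : ℝ)) τ]
      have : ∀ b ∈ τ, (if b = v then (1:ℝ) else 0) * ((b i : ℤ) : ℝ)
          = if b = v then ((b i : ℤ) : ℝ) else 0 := by
        intro b _; split <;> ring
      rw [Finset.sum_congr rfl this, Finset.sum_ite_eq' τ v (fun b => ((b i : ℤ) : ℝ)),
        if_pos hv]
    have h2 : ∑ b : ((τ : Set (Fin m → ℤ))),
        (if (b : Fin m → ℤ) ∈ s then c b else 0) * ((b : Fin m → ℤ) i : ℝ) = (v i : ℝ) := by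
      rw [Finset.sum_finset_coe (fun b => (if b ∈ s then c b else 0) * ((b i : ℤ) : ℝ)) τ]
      have : ∀ b ∈ τ, (if b ∈ s then c b else 0) * ((b i : ℤ) : ℝ)
          = if b ∈ s then c b * ((b i : ℤ) : ℝ) else 0 := by
        intro b _; split <;> ring
      rw [Finset.sum_congr rfl this, Finset.sum_ite_mem τ s (fun b => c b * ((b i : ℤ) : ℝ)),
        Finset.inter_eq_right.mpr hs]
      exact (heq i).symm
    rw [h1, h2, sub_self]
  have := (Fintype.linearIndependent_iff.mp hτ) g hsum ⟨v, hv⟩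
  by_contra hvs
  simp only [hg, if_pos rfl, if_neg hvs, sub_zero] at this
  exact one_ne_zero this

end Stmt15Aux

/-- If `B ⊆ ℤ^m` is supernormal and `Δ` (given by its set `cells` of maximal cells) is a
triangulation of `B` using all vectors, then every maximal cell is a lattice basis of `ℤ^m`.
A triangulation: each cell is an `m`-element subset of `B` spanning a simplicial cone, the
cones cover `cone(B)`, any two cells intersect in the cone of their common face, and every
vector of `B` is used (spans a ray, i.e. belongs to some cell). -/
theorem stmt15 (m : ℕ) (B : Set (Fin m → ℤ)) (hsuper : SupernormalM B)
    (cells : Set (Finset (Fin m → ℤ)))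
    (hsub : ∀ σ ∈ cells, ↑σ ⊆ B)
    (hcard : ∀ σ ∈ cells, σ.card = m)
    (hindep : ∀ σ ∈ cells,
      LinearIndependent ℝ (fun v : (σ : Set (Fin m → ℤ)) => fun i => ((v : Fin m → ℤ) i : ℝ)))
    (hcover : ∀ x : Fin m → ℝ, ConeM B x ↔ ∃ σ ∈ cells, ConeM ↑σ x)
    (hglue : ∀ σ ∈ cells, ∀ τ ∈ cells, ∀ x : Fin m → ℝ,
      ConeM ↑σ x → ConeM ↑τ x → ConeM (↑(σ ∩ τ) : Set (Fin m → ℤ)) x)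
    (husesAll : ∀ v ∈ B, ∃ σ ∈ cells, v ∈ σ) :
    ∀ σ ∈ cells,
      LinearIndependent ℤ (fun v : (σ : Set (Fin m → ℤ)) => (v : Fin m → ℤ)) ∧
      Submodule.span ℤ (↑σ : Set (Fin m → ℤ)) = ⊤ := by
  classical
  intro σ hσ
  have hσB : (σ : Set (Fin m → ℤ)) ⊆ B := hsub σ hσ
  -- ℤ-linear independence from ℝ-linear independence
  have hindZ : LinearIndependent ℤ (fun v : (σ : Set (Fin m → ℤ)) => (v : Fin m → ℤ)) := by
    have hR := hindep σ hσ
    have hZ : LinearIndependent ℤ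
        (fun v : (σ : Set (Fin m → ℤ)) => fun i => ((v : Fin m → ℤ) i : ℝ)) :=
      hR.restrict_scalars (by intro a b h; simpa using h)
    exact LinearIndependent.of_comp (intCastLM m) hZ
  refine ⟨hindZ, ?_⟩
  -- B ∩ cone(σ) = σ
  have hcap : {b ∈ B | ConeM (↑σ) (fun i => (b i : ℝ))} = (σ : Set (Fin m → ℤ)) := by
    ext b
    constructor
    · rintro ⟨hbB, hbc⟩
      obtain ⟨τ, hτ, hbτ⟩ := husesAll b hbB
      have h2 : ConeM (↑τ) (fun i => (b i : ℝ)) := coneM_single hbτ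
      obtain ⟨s, c, hs, hc, heq⟩ := hglue σ hσ τ hτ _ hbc h2
      have hssub : s ⊆ σ ∩ τ := by exact_mod_cast hs
      have hbs : b ∈ s :=
        mem_of_cone_rep τ (hindep τ hτ) b hbτ s c
          (hssub.trans (Finset.inter_subset_right)) heq
      exact (Finset.mem_inter.mp (hssub hbs)).1
    · intro hb
      exact ⟨hσB hb, coneM_single hb⟩
  have hNN : ∀ z : Fin m → ℤ, ConeM (↑σ) (fun i => (z i : ℝ)) → NNCombM (↑σ) z := by
    intro z hz
    have := hsuper (↑σ) hσB z hz
    rwa [hcap] at this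
  -- span = ⊤
  by_cases hemp : σ = ∅
  · have hm : m = 0 := by rw [← hcard σ hσ, hemp]; simp
    subst hm
    rw [eq_top_iff]
    intro x _
    have hx0 : x = 0 := funext fun i => i.elim0
    rw [hx0]
    exact Submodule.zero_mem _
  · have hne : Nonempty ((σ : Set (Fin m → ℤ))) := by
      obtain ⟨x, hx⟩ := Finset.nonempty_of_ne_empty hemp
      exact ⟨⟨x, hx⟩⟩
    set bas := basisOfLinearIndependentOfCardEqFinrank (hindep σ hσ)
      (by simp [hcard σ hσ]) with hbas
    rw [eq_top_iff]
    intro z _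
    set S : Fin m → ℤ := ∑ b ∈ σ, b with hS
    have hSspan : S ∈ Submodule.span ℤ (↑σ : Set (Fin m → ℤ)) :=
      Submodule.sum_mem _ fun b hb => Submodule.subset_span hb
    -- real coordinates of z
    set r : ((σ : Set (Fin m → ℤ))) → ℝ := fun v => bas.repr (fun i => (z i : ℝ)) v with hr
    obtain ⟨N, hN⟩ := exists_nat_ge (∑ v : ((σ : Set (Fin m → ℤ))), |r v|)
    have hNr : ∀ v : ((σ : Set (Fin m → ℤ))), 0 ≤ r v + N := by
      intro v
      have h1 : -r v ≤ |r v| := neg_le_abs _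
      have h2 : |r v| ≤ ∑ w : ((σ : Set (Fin m → ℤ))), |r w| :=
        Finset.single_le_sum (fun w _ => abs_nonneg (r w)) (Finset.mem_univ v)
      linarith
    have hzrep : ∀ i, (z i : ℝ) = ∑ v : ((σ : Set (Fin m → ℤ))), r v * ((v : Fin m → ℤ) i : ℝ) := by
      intro i
      have h := bas.sum_repr (fun i => (z i : ℝ))
      rw [hbas, coe_basisOfLinearIndependentOfCardEqFinrank] at h
      have h2 := congrFun h i
      simp only [Finset.sum_apply, Pi.smul_apply, smul_eq_mul] at h2
      exact h2.symm
    -- z + N • S is a lattice point of cone σ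
    have hcone : ConeM (↑σ) (fun i => (((z + (N : ℤ) • S) i : ℤ) : ℝ)) := by
      refine ⟨σ, fun x => if h : x ∈ σ then r ⟨x, h⟩ + N else 0, le_refl _, ?_, ?_⟩
      · intro b
        by_cases h : b ∈ σ
        · simp only [dif_pos h]; exact hNr ⟨b, h⟩
        · simp [h]
      · intro i
        show (((z + (N : ℤ) • S) i : ℤ) : ℝ)
            = ∑ x ∈ σ, (if h : x ∈ σ then r ⟨x, h⟩ + (N:ℝ) else 0) * ((x i : ℤ) : ℝ)
        have hsum : ∑ x ∈ σ, (if h : x ∈ σ then r ⟨x, h⟩ + (N:ℝ) else 0) * ((x i : ℤ) : ℝ)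
            = ∑ v : ((σ : Set (Fin m → ℤ))), (r v + N) * (((v : Fin m → ℤ)) i : ℝ) := by
          rw [← Finset.sum_finset_coe
            (fun x => (if h : x ∈ σ then r ⟨x, h⟩ + (N:ℝ) else 0) * ((x i : ℤ) : ℝ)) σ]
          refine Finset.sum_congr rfl fun v _ => ?_
          rw [dif_pos (show (v : Fin m → ℤ) ∈ σ from v.2)]
        rw [hsum]
        have hSi : ((S i : ℤ) : ℝ) = ∑ v : ((σ : Set (Fin m → ℤ))), (((v : Fin m → ℤ)) i : ℝ) := by
          have hs1 : S i = ∑ b ∈ σ, b i := by rw [hS, Finset.sum_apply]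
          rw [hs1]
          push_cast
          exact (Finset.sum_finset_coe (fun x => ((x i : ℤ) : ℝ)) σ).symm
        have hcast : (((z + (N : ℤ) • S) i : ℤ) : ℝ) = (z i : ℝ) + (N : ℝ) * ((S i : ℤ) : ℝ) := by
          simp only [Pi.add_apply, Pi.smul_apply, smul_eq_mul, Int.cast_add, Int.cast_mul,
            Int.cast_natCast]
        rw [hcast, hzrep i, hSi, Finset.mul_sum, ← Finset.sum_add_distrib]
        exact Finset.sum_congr rfl fun v _ => by ring
    obtain ⟨s', c', hs', heq'⟩ := hNN (z + (N : ℤ) • S) hcone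
    have hmem : z + (N : ℤ) • S ∈ Submodule.span ℤ (↑σ : Set (Fin m → ℤ)) := by
      have hzs : z + (N : ℤ) • S = ∑ b ∈ s', (c' b : ℤ) • b := by
        funext i
        rw [heq' i, Finset.sum_apply]
        exact Finset.sum_congr rfl fun b _ => by simp [smul_eq_mul]
      rw [hzs]
      exact Submodule.sum_mem _ fun b hb =>
        Submodule.smul_mem _ _ (Submodule.subset_span (hs' hb))
    have hzz : z = (z + (N : ℤ) • S) - (N : ℤ) • S := by ring
    rw [hzz]
    exact Submodule.sub_mem _ hmem (Submodule.smul_mem _ _ hSspan)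
end

section
/- Let B = {b_1,...,b_n} ⊆ ℤ^m be supernormal, let c ∈ ℤ^n, and suppose the system b_i·x ≤ c_i (i=1,...,n) is tight. Let F be a face of the polyhedron P_c = {x ∈ ℝ^m : b_i·x ≤ c_i for all i} and let σ = {b_i ∈ B : b_i·x = c_i for all x ∈ F}. Then no vector b_j ∈ B \ σ lies in cone(σ); consequently σ is a Hilbert basis of cone(σ) ∩ ℤ^m. -/
/-- Let `B = {b_1,…,b_n} ⊆ ℤ^m` be supernormal, `c ∈ ℤ^n` with the system `b_i·x ≤ c_i`
tight, and let `F` be a (nonempty, exposed) face of `P_c`, with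
`σ = {b_i : b_i·x = c_i for all x ∈ F}`.  Then no `b_j ∈ B \ σ` lies in `cone(σ)`, and `σ`
is a Hilbert basis: it generates the monoid `cone(σ) ∩ ℤ^m`. -/
theorem stmt16 (m n : ℕ) (b : Fin n → Fin m → ℤ) (c : Fin n → ℤ)
    (hsuper : SupernormalM (Set.range b))
    (htight : ∀ i : Fin n, ∃ x : Fin m → ℤ,
      (∀ k, ∑ j, b k j * x j ≤ c k) ∧ ∑ j, b i j * x j = c i)
    (F : Set (Fin m → ℝ)) (hFne : F.Nonempty) (u : Fin m → ℝ) (β : ℝ)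
    (hsupp : ∀ x : Fin m → ℝ, (∀ i, ∑ j, (b i j : ℝ) * x j ≤ (c i : ℝ)) →
      ∑ j, u j * x j ≤ β)
    (hF : F = {x : Fin m → ℝ |
      (∀ i, ∑ j, (b i j : ℝ) * x j ≤ (c i : ℝ)) ∧ ∑ j, u j * x j = β}) :
    (∀ k : Fin n,
      ConeM {v | ∃ i : Fin n, (∀ x ∈ F, ∑ j, (b i j : ℝ) * x j = (c i : ℝ)) ∧ v = b i}
        (fun j => (b k j : ℝ)) →
      b k ∈ {v | ∃ i : Fin n, (∀ x ∈ F, ∑ j, (b i j : ℝ) * x j = (c i : ℝ)) ∧ v = b i}) ∧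
    (∀ z : Fin m → ℤ,
      ConeM {v | ∃ i : Fin n, (∀ x ∈ F, ∑ j, (b i j : ℝ) * x j = (c i : ℝ)) ∧ v = b i}
        (fun j => (z j : ℝ)) →
      NNCombM {v | ∃ i : Fin n, (∀ x ∈ F, ∑ j, (b i j : ℝ) * x j = (c i : ℝ)) ∧ v = b i} z) := by
  classical
  have hσsub : {v | ∃ i : Fin n, (∀ x ∈ F, ∑ j, (b i j : ℝ) * x j = (c i : ℝ)) ∧ v = b i}
      ⊆ Set.range b := by
    rintro v ⟨i, -, rfl⟩; exact ⟨i, rfl⟩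
  have key : ∀ k : Fin n,
      ConeM {v | ∃ i : Fin n, (∀ x ∈ F, ∑ j, (b i j : ℝ) * x j = (c i : ℝ)) ∧ v = b i}
        (fun j => (b k j : ℝ)) →
      ∀ x ∈ F, ∑ j, (b k j : ℝ) * x j = (c k : ℝ) := by
    intro k hcone
    obtain ⟨s, lam, hsσ, hlam, hrep⟩ := hcone
    obtain ⟨x0, hx0⟩ := hFne
    have hx0c : ∀ i, ∑ j, (b i j : ℝ) * x0 j ≤ (c i : ℝ) := by
      rw [hF] at hx0; exact hx0.1
    obtain ⟨xs, hxsle, hxseq⟩ := htight k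
    have hconst : ∀ v ∈ s, ∀ x ∈ F, ∑ j, (v j : ℝ) * x j = ∑ j, (v j : ℝ) * x0 j := by
      intro v hv x hx
      obtain ⟨i, hi, rfl⟩ := hsσ hv
      rw [hi x hx, hi x0 hx0]
    have hxsle' : ∀ v ∈ s, ∑ j, (v j : ℝ) * (xs j : ℝ) ≤ ∑ j, (v j : ℝ) * x0 j := by
      intro v hv
      obtain ⟨i, hi, rfl⟩ := hsσ hv
      rw [hi x0 hx0]
      exact_mod_cast hxsle i
    have hswap : ∀ x : Fin m → ℝ, ∑ j, (b k j : ℝ) * x j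
        = ∑ v ∈ s, lam v * ∑ j, (v j : ℝ) * x j := by
      intro x
      calc ∑ j, (b k j : ℝ) * x j = ∑ j, (∑ v ∈ s, lam v * (v j : ℝ)) * x j := by
            simp_rw [← hrep]
        _ = ∑ j, ∑ v ∈ s, lam v * ((v j : ℝ) * x j) := by
            simp_rw [Finset.sum_mul, mul_assoc]
        _ = ∑ v ∈ s, ∑ j, lam v * ((v j : ℝ) * x j) := Finset.sum_comm
        _ = ∑ v ∈ s, lam v * ∑ j, (v j : ℝ) * x j := by
            simp_rw [Finset.mul_sum]
    set γ : ℝ := ∑ v ∈ s, lam v * ∑ j, (v j : ℝ) * x0 j with hγ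
    have hFval : ∀ x ∈ F, ∑ j, (b k j : ℝ) * x j = γ := by
      intro x hx
      rw [hswap x, hγ]
      exact Finset.sum_congr rfl fun v hv => by rw [hconst v hv x hx]
    have hle : γ ≤ (c k : ℝ) := by
      rw [← hFval x0 hx0]
      exact hx0c k
    have hge : (c k : ℝ) ≤ γ := by
      have h1 : (c k : ℝ) = ∑ j, (b k j : ℝ) * (xs j : ℝ) := by exact_mod_cast hxseq.symm
      rw [h1, hswap]
      exact Finset.sum_le_sum fun v hv => mul_le_mul_of_nonneg_left (hxsle' v hv) (hlam v)
    intro x hx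
    rw [hFval x hx]
    linarith
  constructor
  · intro k hk
    exact ⟨k, key k hk, rfl⟩
  · intro z hz
    obtain ⟨s, co, hs, hrep⟩ := hsuper _ hσsub z hz
    refine ⟨s, co, ?_, hrep⟩
    intro v hv
    obtain ⟨⟨i, rfl⟩, hcv⟩ := hs hv
    exact ⟨i, key i hcv, rfl⟩
end

section
/- Let B = {b_1,...,b_n} ⊆ ℤ^m and c ∈ ℤ^n, and suppose P_c = {x ∈ ℝ^m : b_i·x ≤ c_i ∀i} is nonempty and equals the convex hull of its lattice points. Let z_1,...,z_r be the vertices of P_c. Then for every lattice point z ∈ P_{rc} = rP_c there exists an index j such that (rc - Bz) ≥ (c - Bz_j) coordinatewise, where Bz denotes the vector (b_1·z, ..., b_n·z). -/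
/-!
Write `P_c = {x | f_i x ≤ c_i}`. A pointed polyhedron is the convex hull of its exposed points
plus its recession cone `P_0`: at a point `x ∈ P_c` whose tight constraints do not pin `x` down,
move along a direction in their common kernel until a new constraint becomes tight, in both
directions if possible (so `x` lies on a segment between two points of smaller kernel), and
otherwise the opposite direction lies in `P_0`. Hence `z / r = ∑ λ_k v_k + w` with `w ∈ P_0`,
and since the `r` weights `λ_k` sum to `1`, some `λ_j ≥ 1 / r`; then
`rc - Bz = r ∑ λ_k (c - Bv_k) - r Bw ≥ r λ_j (c - Bv_j) ≥ c - Bv_j`.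
-/

open Set Finset Module
open scoped Pointwise

lemma Convex.mem_of_add_smul_mem_of_add_smul_neg_mem {E : Type*} [AddCommGroup E] [Module ℝ E]
    {s : Set E} (hs : Convex ℝ s) {x d : E} {t₁ t₂ : ℝ} (ht₁ : 0 < t₁) (ht₂ : 0 < t₂)
    (h₁ : x + t₁ • d ∈ s) (h₂ : x + t₂ • -d ∈ s) : x ∈ s := by
  have hsum : 0 < t₁ + t₂ := add_pos ht₁ ht₂
  convert hs h₁ h₂ (div_pos ht₂ hsum).le (div_pos ht₁ hsum).le (by field_simp; ring) using 1
  match_scalars <;> field_simp <;> ring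

section Polyhedron

variable {ι E : Type*} [AddCommGroup E] [Module ℝ E] (f : ι → Dual ℝ E) (c : ι → ℝ)

def polyhedron : Set E := {x | ∀ i, f i x ≤ c i}

def tightKernel (x : E) : Submodule ℝ E := ⨅ (i) (_ : f i x = c i), LinearMap.ker (f i)

variable {f c}

lemma mem_tightKernel {x d : E} : d ∈ tightKernel f c x ↔ ∀ i, f i x = c i → f i d = 0 := by
  simp [tightKernel]

lemma convex_polyhedron : Convex ℝ (polyhedron f c) := by
  simp only [polyhedron, ofPred_forall]
  exact convex_iInter fun i => convex_halfSpace_le (f i).isLinear (c i)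

lemma add_mem_polyhedron {x d : E} (hx : x ∈ polyhedron f c) (hd : d ∈ polyhedron f 0) :
    x + d ∈ polyhedron f c := fun i => by
  simpa using add_le_add (hx i) (hd i)

lemma add_mem_convexHull_add_polyhedron {V : Set E} {y d : E}
    (hy : y ∈ convexHull ℝ V + polyhedron f 0) (hd : d ∈ polyhedron f 0) :
    y + d ∈ convexHull ℝ V + polyhedron f 0 := by
  obtain ⟨a, ha, w, hw, rfl⟩ := hy
  exact ⟨a, ha, w + d, add_mem_polyhedron hw hd, (add_assoc a w d).symm⟩

lemma exists_pos_add_smul_mem_of_tight [Fintype ι] {x e : E} (hx : x ∈ polyhedron f c)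
    (he : e ∈ tightKernel f c x) (hpos : ∃ i, 0 < f i e) :
    ∃ t : ℝ, 0 < t ∧ x + t • e ∈ polyhedron f c ∧ ∃ i, 0 < f i e ∧ f i (x + t • e) = c i := by
  classical
  set s := univ.filter fun i => 0 < f i e
  have hs : s.Nonempty := by simpa [s, Finset.Nonempty] using hpos
  obtain ⟨i₀, hi₀, hmin⟩ := s.exists_min_image (fun i => (c i - f i x) / f i e) hs
  have hslack : ∀ i ∈ s, 0 < (c i - f i x) / f i e := fun i hi => by
    have hei : 0 < f i e := (mem_filter.1 hi).2
    have hlt : f i x < c i :=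
      (hx i).lt_of_ne fun h => hei.ne' (mem_tightKernel.1 he i h)
    exact div_pos (sub_pos.2 hlt) hei
  have hei₀ : 0 < f i₀ e := (mem_filter.1 hi₀).2
  refine ⟨(c i₀ - f i₀ x) / f i₀ e, hslack i₀ hi₀, fun i => ?_, i₀, hei₀, ?_⟩
  · rw [map_add, map_smul, smul_eq_mul]
    by_cases hei : 0 < f i e
    · have := hmin i (mem_filter.2 ⟨mem_univ i, hei⟩)
      rw [le_div_iff₀ hei] at this
      linarith
    · nlinarith [hx i, hslack i₀ hi₀]
  · rw [map_add, map_smul, smul_eq_mul, div_mul_cancel₀ _ hei₀.ne']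
    ring

lemma tightKernel_le_of_tight {x y : E} (h : ∀ i, f i x = c i → f i y = c i) :
    tightKernel f c y ≤ tightKernel f c x := fun _ hd =>
  mem_tightKernel.2 fun i hi => mem_tightKernel.1 hd i (h i hi)

lemma exists_pos_tightKernel_lt [Fintype ι] {x e : E} (hx : x ∈ polyhedron f c)
    (he : e ∈ tightKernel f c x) (hpos : ∃ i, 0 < f i e) :
    ∃ t : ℝ, 0 < t ∧ x + t • e ∈ polyhedron f c ∧ tightKernel f c (x + t • e) < tightKernel f c x := by
  obtain ⟨t, ht, hxt, i, hei, hti⟩ := exists_pos_add_smul_mem_of_tight hx he hpos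
  refine ⟨t, ht, hxt, SetLike.lt_iff_le_and_exists.2 ⟨?_, e, he, fun he' => ?_⟩⟩
  · refine tightKernel_le_of_tight fun j hj => ?_
    simp [hj, mem_tightKernel.1 he j hj]
  · exact hei.ne' (mem_tightKernel.1 he' i hti)

end Polyhedron

section Exposed

variable {ι E : Type*} [NormedAddCommGroup E] [NormedSpace ℝ E]
  {f : ι → Dual ℝ E} {c : ι → ℝ}

lemma eq_zero_of_forall_apply_eq_zero (hP : ((polyhedron f c).exposedPoints ℝ).Nonempty)
    {d : E} (hd : ∀ i, f i d = 0) : d = 0 := by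
  obtain ⟨x, hx, l, hl⟩ := hP
  have hplus : x + d ∈ polyhedron f c := fun i => by simpa [hd i] using hx i
  have hminus : x + -d ∈ polyhedron f c := fun i => by simpa [hd i] using hx i
  have hld : l d = 0 := by
    linarith [(hl _ hplus).1, (hl _ hminus).1, map_add l x d, map_add l x (-d), map_neg l d]
  exact add_eq_left.1 ((hl _ hplus).2 (by rw [map_add, hld, add_zero]))

variable [FiniteDimensional ℝ E]

lemma mem_exposedPoints_of_tightKernel_eq_bot [Fintype ι] {x : E} (hx : x ∈ polyhedron f c)
    (hK : tightKernel f c x = ⊥) : x ∈ (polyhedron f c).exposedPoints ℝ := by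
  classical
  set T := univ.filter fun i => f i x = c i
  refine ⟨hx, LinearMap.toContinuousLinearMap (∑ i ∈ T, f i), fun y hy => ?_⟩
  have hle : ∀ i ∈ T, f i y ≤ f i x := fun i hi => (mem_filter.1 hi).2 ▸ hy i
  simp only [LinearMap.coe_toContinuousLinearMap', LinearMap.sum_apply]
  refine ⟨sum_le_sum hle, fun hge => ?_⟩
  have heq := (sum_eq_sum_iff_of_le hle).1 (le_antisymm (sum_le_sum hle) hge)
  have hyx : y - x ∈ tightKernel f c x := mem_tightKernel.2 fun i hi => by
    simp [heq i (mem_filter.2 ⟨mem_univ i, hi⟩)]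
  rwa [hK, Submodule.mem_bot, sub_eq_zero] at hyx

theorem mem_convexHull_add_of_exposedPoints_subset [Fintype ι] {V : Set E}
    (hpointed : ∀ d, (∀ i, f i d = 0) → d = 0) (hV : (polyhedron f c).exposedPoints ℝ ⊆ V)
    {x : E} (hx : x ∈ polyhedron f c) : x ∈ convexHull ℝ V + polyhedron f 0 := by
  induction hk : finrank ℝ (tightKernel f c x) using Nat.strong_induction_on generalizing x with
  | _ k ih =>
  subst hk
  by_cases hK : tightKernel f c x = ⊥
  · exact ⟨x, subset_convexHull ℝ V (hV (mem_exposedPoints_of_tightKernel_eq_bot hx hK)),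
      0, fun i => by simp, add_zero x⟩
  obtain ⟨d, hdK, hd0⟩ := Submodule.exists_mem_ne_zero_of_ne_bot hK
  have hmove : ∀ e ∈ tightKernel f c x, (∃ i, 0 < f i e) →
      ∃ t : ℝ, 0 < t ∧ x + t • e ∈ convexHull ℝ V + polyhedron f 0 := fun e he hpos => by
    obtain ⟨t, ht, hxt, hlt⟩ := exists_pos_tightKernel_lt hx he hpos
    exact ⟨t, ht, ih _ (Submodule.finrank_lt_finrank_of_lt hlt) hxt rfl⟩
  have hback : ∀ e ∈ tightKernel f c x, (∃ i, 0 < f i e) → -e ∈ polyhedron f 0 →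
      x ∈ convexHull ℝ V + polyhedron f 0 := fun e he hpos hneg => by
    obtain ⟨t, ht, hxt⟩ := hmove e he hpos
    have hte : t • -e ∈ polyhedron f 0 := fun i => by
      simpa [map_smul] using mul_nonpos_of_nonneg_of_nonpos ht.le (hneg i)
    simpa using add_mem_convexHull_add_polyhedron hxt hte
  have hdK' : -d ∈ tightKernel f c x := neg_mem hdK
  by_cases hp : ∃ i, 0 < f i d <;> by_cases hm : ∃ i, 0 < f i (-d)
  · obtain ⟨t₁, ht₁, hx₁⟩ := hmove d hdK hp
    obtain ⟨t₂, ht₂, hx₂⟩ := hmove (-d) hdK' hm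
    exact ((convex_convexHull ℝ V).add convex_polyhedron).mem_of_add_smul_mem_of_add_smul_neg_mem
      ht₁ ht₂ hx₁ hx₂
  · exact hback d hdK hp fun i => not_lt.1 fun h => hm ⟨i, h⟩
  · exact hback (-d) hdK' hm fun i => by simpa using not_lt.1 fun h => hp ⟨i, h⟩
  · refine absurd (hpointed d fun i => ?_) hd0
    have h₁ := not_lt.1 fun h => hp ⟨i, h⟩
    have h₂ := not_lt.1 fun h => hm ⟨i, h⟩
    rw [map_neg] at h₂
    linarith

end Exposed

lemma exists_slack_le_card_mul_slack {ι κ E : Type*} [Fintype κ] [AddCommGroup E]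
    [Module ℝ E] {f : ι → Dual ℝ E} {c : ι → ℝ} {v : κ → E} (hv : ∀ k, v k ∈ polyhedron f c)
    {x : E} (hx : x ∈ convexHull ℝ (range v) + polyhedron f 0) :
    ∃ k, ∀ i, c i - f i (v k) ≤ Fintype.card κ * (c i - f i x) := by
  classical
  obtain ⟨y, hy, d, hd, rfl⟩ := hx
  rw [convexHull_range_eq_exists_affineCombination] at hy
  obtain ⟨s, w, hw₀, hw₁, rfl⟩ := hy
  have hs : s.Nonempty := nonempty_of_sum_ne_zero (hw₁ ▸ one_ne_zero)
  set N : ℝ := (Fintype.card κ : ℝ)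
  have hsN : (#s : ℝ) ≤ N := Nat.cast_le.2 s.card_le_univ
  have hN : 0 < N := (Nat.cast_pos.2 (card_pos.2 hs)).trans_le hsN
  obtain ⟨k, hk, hwk⟩ : ∃ k ∈ s, N⁻¹ ≤ w k := by
    refine exists_le_of_sum_le hs ?_
    rw [hw₁, sum_const, nsmul_eq_mul, ← div_eq_mul_inv, div_le_one hN]
    exact hsN
  refine ⟨k, fun i => ?_⟩
  have hslack : ∀ j, 0 ≤ c i - f i (v j) := fun j => sub_nonneg.2 (hv j i)
  have hsum : c i - f i (s.affineCombination ℝ v w) = ∑ j ∈ s, w j * (c i - f i (v j)) := by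
    simp only [s.affineCombination_eq_linear_combination v w hw₁, map_sum, map_smul, smul_eq_mul,
      mul_sub, sum_sub_distrib, ← sum_mul, hw₁, one_mul]
  calc c i - f i (v k) ≤ N * w k * (c i - f i (v k)) :=
        le_mul_of_one_le_left (hslack k) (by rw [inv_le_iff_one_le_mul₀ hN] at hwk; linarith)
    _ ≤ N * ∑ j ∈ s, w j * (c i - f i (v j)) := by
        rw [mul_assoc]
        gcongr
        exact single_le_sum (fun j hj => mul_nonneg (hw₀ j hj) (hslack j)) hk
    _ ≤ N * (c i - f i (s.affineCombination ℝ v w + d)) := by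
        rw [← hsum, map_add]
        gcongr
        exact add_le_of_nonpos_right (hd i)

theorem mem_exposedPoints_iff_dotProduct {n : Type*} [Fintype n] [DecidableEq n]
    {A : Set (n → ℝ)} {x : n → ℝ} :
    x ∈ A.exposedPoints ℝ ↔ x ∈ A ∧ ∃ w : n → ℝ, ∀ y ∈ A, y ≠ x → w ⬝ᵥ y < w ⬝ᵥ x := by
  constructor
  · rintro ⟨hx, l, hl⟩
    have hrep : ∀ u, (dotProductEquiv ℝ n).symm l.toLinearMap ⬝ᵥ u = l u := fun u => by
      rw [← dotProductEquiv_apply_apply, LinearEquiv.apply_symm_apply]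
      rfl
    refine ⟨hx, (dotProductEquiv ℝ n).symm l.toLinearMap, fun y hy hyx => ?_⟩
    rw [hrep, hrep]
    exact (hl y hy).1.lt_of_not_ge fun h => hyx ((hl y hy).2 h)
  · rintro ⟨hx, w, hw⟩
    refine ⟨hx, LinearMap.toContinuousLinearMap (dotProductEquiv ℝ n w), fun y hy => ?_⟩
    simp only [LinearMap.coe_toContinuousLinearMap', dotProductEquiv_apply_apply]
    rcases eq_or_ne y x with rfl | hyx
    · exact ⟨le_rfl, fun _ => rfl⟩
    · exact ⟨(hw y hy hyx).le, fun h => absurd h (hw y hy hyx).not_ge⟩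

theorem stmt17_general (m n r : ℕ) (hr : 0 < r) (b : Fin n → Fin m → ℤ) (c : Fin n → ℤ)
    (v : Fin r → Fin m → ℤ)
    (hvert : ∀ x : Fin m → ℝ,
      ((∀ i, ∑ j, (b i j : ℝ) * x j ≤ (c i : ℝ)) ∧
        ∃ w : Fin m → ℝ, ∀ y : Fin m → ℝ,
          (∀ i, ∑ j, (b i j : ℝ) * y j ≤ (c i : ℝ)) → y ≠ x →
            ∑ j, w j * y j < ∑ j, w j * x j) ↔
      ∃ k : Fin r, x = fun j => (v k j : ℝ)) :
    ∀ z : Fin m → ℤ, (∀ i, ∑ j, b i j * z j ≤ (r : ℤ) * c i) →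
      ∃ k : Fin r, ∀ i,
        c i - ∑ j, b i j * v k j ≤ (r : ℤ) * c i - ∑ j, b i j * z j := by
  intro z hz
  have : Nonempty (Fin r) := Fin.pos_iff_nonempty.1 hr
  set f : Fin n → Dual ℝ (Fin m → ℝ) := fun i => dotProductEquiv ℝ (Fin m) fun j => (b i j : ℝ)
  have hf : ∀ i x, f i x = ∑ j, (b i j : ℝ) * x j := fun _ _ => rfl
  have hexp : (polyhedron f fun i => (c i : ℝ)).exposedPoints ℝ = range fun k j => (v k j : ℝ) := by
    ext x
    rw [mem_exposedPoints_iff_dotProduct]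
    exact (hvert x).trans (by simp [eq_comm])
  have hx : (r : ℝ)⁻¹ • (fun j => (z j : ℝ)) ∈ polyhedron f fun i => (c i : ℝ) := fun i => by
    rw [map_smul, smul_eq_mul, hf]
    change (r : ℝ)⁻¹ * ∑ j, (b i j : ℝ) * z j ≤ c i
    rw [inv_mul_le_iff₀ (by exact_mod_cast hr)]
    exact_mod_cast hz i
  obtain ⟨k, hk⟩ := exists_slack_le_card_mul_slack
    (fun k => exposedPoints_subset (hexp ▸ mem_range_self k))
    (mem_convexHull_add_of_exposedPoints_subset
      (fun _ => eq_zero_of_forall_apply_eq_zero (hexp ▸ range_nonempty _)) hexp.subset hx)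
  refine ⟨k, fun i => ?_⟩
  have h := hk i
  rw [Fintype.card_fin, mul_sub, map_smul, smul_eq_mul, mul_inv_cancel_left₀ (by positivity), hf,
    hf] at h
  exact_mod_cast h

/-- Suppose `P_c = {x ∈ ℝ^m : b_i·x ≤ c_i}` is nonempty and equals the convex hull of its
lattice points, and let `v_1,…,v_r` enumerate the vertices of `P_c` (all of which are
lattice points).  Then every lattice point `z` of `P_{rc}` satisfies
`rc - Bz ≥ c - Bv_k` coordinatewise for some `k`. -/
theorem stmt17 (m n r : ℕ) (hr : 0 < r) (b : Fin n → Fin m → ℤ) (c : Fin n → ℤ)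
    (hne : ∃ x : Fin m → ℝ, ∀ i, ∑ j, (b i j : ℝ) * x j ≤ (c i : ℝ))
    (hconv : {x : Fin m → ℝ | ∀ i, ∑ j, (b i j : ℝ) * x j ≤ (c i : ℝ)} =
      convexHull ℝ {x : Fin m → ℝ | (∃ z : Fin m → ℤ, x = fun j => (z j : ℝ)) ∧
        ∀ i, ∑ j, (b i j : ℝ) * x j ≤ (c i : ℝ)})
    (v : Fin r → Fin m → ℤ)
    (hvert : ∀ x : Fin m → ℝ,
      ((∀ i, ∑ j, (b i j : ℝ) * x j ≤ (c i : ℝ)) ∧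
        ∃ w : Fin m → ℝ, ∀ y : Fin m → ℝ,
          (∀ i, ∑ j, (b i j : ℝ) * y j ≤ (c i : ℝ)) → y ≠ x →
            ∑ j, w j * y j < ∑ j, w j * x j) ↔
      ∃ k : Fin r, x = fun j => (v k j : ℝ)) :
    ∀ z : Fin m → ℤ, (∀ i, ∑ j, b i j * z j ≤ (r : ℤ) * c i) →
      ∃ k : Fin r, ∀ i,
        c i - ∑ j, b i j * v k j ≤ (r : ℤ) * c i - ∑ j, b i j * z j :=
  stmt17_general m n r hr b c v hvert
end

section
/- Let π: ℝ^n_{≥0} → cone(A) be the map (λ_1,...,λ_n) ↦ Σ λ_i a_i for a configuration A = {a_1,...,a_n} ⊆ ℤ^{n-m}, and let s: cone(A) → ℝ^n_{≥0} be a section of π (π ∘ s = identity) whose image is an order ideal in ℝ^n_{≥0}. Then s is positively homogeneous: s(rb) = r·s(b) for all b ∈ cone(A) and r ∈ ℝ_{≥0}. -/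
/-- The cone spanned over `ℝ_{≥0}` by the configuration `A = {a_1,…,a_n} ⊆ ℤ^k`. -/
def coneOfA (n k : ℕ) (A : Fin n → Fin k → ℤ) : Set (Fin k → ℝ) :=
  {x | ∃ lam : Fin n → ℝ, (∀ i, 0 ≤ lam i) ∧ ∀ j, x j = ∑ i, lam i * (A i j : ℝ)}

/-- A section `s` of `π : ℝ^n_{≥0} → cone(A)`, `λ ↦ Σ λ_i a_i`, whose image is an order
ideal in `ℝ^n_{≥0}`, is positively homogeneous: `s(r•x) = r•s(x)`. -/
theorem stmt18 (n k : ℕ) (A : Fin n → Fin k → ℤ)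
    (s : (Fin k → ℝ) → (Fin n → ℝ))
    (hnonneg : ∀ x ∈ coneOfA n k A, ∀ i, 0 ≤ s x i)
    (hsec : ∀ x ∈ coneOfA n k A, ∀ j, (∑ i, s x i * (A i j : ℝ)) = x j)
    (hoi : ∀ x ∈ coneOfA n k A, ∀ u : Fin n → ℝ, (∀ i, 0 ≤ u i) → (∀ i, u i ≤ s x i) →
      ∃ y ∈ coneOfA n k A, s y = u) :
    ∀ x ∈ coneOfA n k A, ∀ r : ℝ, 0 ≤ r → s (r • x) = r • s x := by
  have hscale : ∀ x ∈ coneOfA n k A, ∀ r : ℝ, 0 ≤ r → r • x ∈ coneOfA n k A := by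
    rintro x ⟨lam, hlam, hx⟩ r hr
    refine ⟨r • lam, fun i => mul_nonneg hr (hlam i), fun j => ?_⟩
    simp only [Pi.smul_apply, smul_eq_mul, hx j, Finset.mul_sum, mul_assoc]
  have key : ∀ x ∈ coneOfA n k A, ∀ r : ℝ, 0 ≤ r → r ≤ 1 → s (r • x) = r • s x := by
    intro x hx r hr hr1
    obtain ⟨y, hy, hsy⟩ := hoi x hx (r • s x)
      (fun i => mul_nonneg hr (hnonneg x hx i))
      (fun i => by
        have h := hnonneg x hx i
        simp only [Pi.smul_apply, smul_eq_mul]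
        nlinarith)
    have hyx : y = r • x := by
      funext j
      have h1 := hsec y hy j
      rw [hsy] at h1
      have h2 := hsec x hx j
      simp only [Pi.smul_apply, smul_eq_mul] at h1 ⊢
      rw [← h1, ← h2, Finset.mul_sum]
      exact Finset.sum_congr rfl fun i _ => by ring
    rw [← hyx, hsy]
  intro x hx r hr
  rcases le_or_gt r 1 with h1 | h1
  · exact key x hx r hr h1
  · have hrpos : 0 < r := lt_trans one_pos h1
    have h := key (r • x) (hscale x hx r hr) (1/r) (by positivity)
      (by rw [div_le_one hrpos]; linarith)
    rw [smul_smul, one_div, inv_mul_cancel₀ hrpos.ne', one_smul] at h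
    rw [h, smul_smul, mul_inv_cancel₀ hrpos.ne', one_smul]
end

section
/- Let π: ℝ^n_{≥0} → cone(A) be as above and let s be a section of π whose image is an order ideal of ℝ^n_{≥0}. Then for every b ∈ cone(A), the vectors {a_i : i ∈ supp(s(b))} are linearly independent. -/
/-- For a section `s` of `π : ℝ^n_{≥0} → cone(A)` whose image is an order ideal in
`ℝ^n_{≥0}`, the vectors `{a_i : i ∈ supp(s(b))}` are linearly independent for every
`b ∈ cone(A)`. -/
theorem stmt19 (n k : ℕ) (A : Fin n → Fin k → ℤ)
    (s : (Fin k → ℝ) → (Fin n → ℝ))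
    (hnonneg : ∀ x ∈ coneOfA n k A, ∀ i, 0 ≤ s x i)
    (hsec : ∀ x ∈ coneOfA n k A, ∀ j, (∑ i, s x i * (A i j : ℝ)) = x j)
    (hoi : ∀ x ∈ coneOfA n k A, ∀ u : Fin n → ℝ, (∀ i, 0 ≤ u i) → (∀ i, u i ≤ s x i) →
      ∃ y ∈ coneOfA n k A, s y = u) :
    ∀ x ∈ coneOfA n k A,
      LinearIndependent ℝ (fun i : {i : Fin n // 0 < s x i} =>
        (fun j => (A (i : Fin n) j : ℝ))) := by
  classical
  intro x hx
  rw [Fintype.linearIndependent_iff]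
  intro g hg
  -- extend g to all of Fin n by 0
  set c : Fin n → ℝ := fun i => if h : 0 < s x i then g ⟨i, h⟩ else 0 with hc
  have hcsupp : ∀ i, c i ≠ 0 → 0 < s x i := by
    intro i h
    by_contra hcon
    simp [hc, hcon] at h
  have key : ∀ j, ∑ i, c i * (A i j : ℝ) = 0 := by
    intro j
    have h1 := congrFun hg j
    rw [Finset.sum_apply] at h1
    simp only [Pi.smul_apply, smul_eq_mul, Pi.zero_apply] at h1
    have h2 : ∑ i : Fin n, c i * (A i j : ℝ)
        = ∑ i : {i : Fin n // 0 < s x i}, c i.1 * (A i.1 j : ℝ) := by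
      have h3 : ∑ i ∈ Finset.univ.filter (fun i => 0 < s x i), c i * (A i j : ℝ)
          = ∑ i, c i * (A i j : ℝ) :=
        Finset.sum_filter_of_ne (fun i _ h => hcsupp i (fun h0 => by simp [h0] at h))
      rw [← h3]
      exact Finset.sum_subtype _ (by simp) _
    have h4 : ∑ i : {i : Fin n // 0 < s x i}, c i.1 * (A i.1 j : ℝ)
        = ∑ i : {i : Fin n // 0 < s x i}, g i * (A i.1 j : ℝ) :=
      Finset.sum_congr rfl (fun i _ => by simp [hc, i.2])
    rw [h2, h4]
    exact h1
  -- positive and negative parts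
  set cp : Fin n → ℝ := fun i => max (c i) 0 with hcp
  set cm : Fin n → ℝ := fun i => max (-c i) 0 with hcm
  have hcpm : ∀ i, c i = cp i - cm i := by
    intro i
    simp only [hcp, hcm]
    rcases le_total 0 (c i) with h | h
    · rw [max_eq_left h, max_eq_right (by linarith)]; ring
    · rw [max_eq_right h, max_eq_left (by linarith)]; ring
  have habs : ∀ i, cp i ≤ |c i| ∧ cm i ≤ |c i| := by
    intro i
    constructor
    · exact max_le (le_abs_self _) (abs_nonneg _)
    · exact max_le (neg_le_abs _) (abs_nonneg _)
  -- choose ε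
  have hex : ∃ ε : ℝ, 0 < ε ∧ ∀ i, ε * |c i| ≤ s x i := by
    by_cases hn : ∃ i, c i ≠ 0
    · set T : Finset ℝ := insert 1 (Finset.univ.image fun i =>
        if c i = 0 then 1 else s x i / |c i|) with hT
      have hne : T.Nonempty := ⟨1, by simp [hT]⟩
      have hpos : ∀ t ∈ T, 0 < t := by
        intro t ht
        rw [hT] at ht
        simp only [Finset.mem_insert, Finset.mem_image] at ht
        rcases ht with h | ⟨i, _, h⟩
        · rw [h]; norm_num
        · rw [← h]
          by_cases hc0 : c i = 0
          · simp [hc0]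
          · simp only [hc0, if_false]
            exact div_pos (hcsupp i hc0) (abs_pos.mpr hc0)
      refine ⟨T.min' hne, hpos _ (T.min'_mem hne), ?_⟩
      · intro i
        by_cases hc0 : c i = 0
        · simp [hc0]; exact hnonneg x hx i
        · have hmem : s x i / |c i| ∈ T := by
            rw [hT]
            simp only [Finset.mem_insert, Finset.mem_image]
            right; exact ⟨i, Finset.mem_univ i, by simp [hc0]⟩
          have hle := T.min'_le _ hmem
          calc T.min' hne * |c i| ≤ (s x i / |c i|) * |c i| :=
                mul_le_mul_of_nonneg_right hle (abs_nonneg _)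
            _ = s x i := div_mul_cancel₀ _ (abs_ne_zero.mpr hc0)
    · push_neg at hn
      exact ⟨1, one_pos, fun i => by simp [hn i]; exact hnonneg x hx i⟩
  obtain ⟨ε, hε, hεle⟩ := hex
  -- the two perturbed vectors
  set u : Fin n → ℝ := fun i => s x i - ε * cp i with hu
  set w : Fin n → ℝ := fun i => s x i - ε * cm i with hw
  have hcpnn : ∀ i, 0 ≤ cp i := fun i => le_max_right _ _
  have hcmnn : ∀ i, 0 ≤ cm i := fun i => le_max_right _ _
  have hu0 : ∀ i, 0 ≤ u i := fun i => by
    have := (habs i).1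
    have : ε * cp i ≤ ε * |c i| := mul_le_mul_of_nonneg_left this hε.le
    simp [hu]; linarith [hεle i]
  have hule : ∀ i, u i ≤ s x i := fun i => by
    simp [hu]; positivity
  have hw0 : ∀ i, 0 ≤ w i := fun i => by
    have := (habs i).2
    have : ε * cm i ≤ ε * |c i| := mul_le_mul_of_nonneg_left this hε.le
    simp [hw]; linarith [hεle i]
  have hwle : ∀ i, w i ≤ s x i := fun i => by
    simp [hw]; positivity
  obtain ⟨y, hy, hsy⟩ := hoi x hx u hu0 hule
  obtain ⟨y', hy', hsy'⟩ := hoi x hx w hw0 hwle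
  -- y = y'
  have hyy' : y = y' := by
    funext j
    rw [← hsec y hy j, ← hsec y' hy' j, hsy, hsy']
    have : ∑ i, u i * (A i j : ℝ) - ∑ i, w i * (A i j : ℝ) = -ε * ∑ i, c i * (A i j : ℝ) := by
      rw [← Finset.sum_sub_distrib, Finset.mul_sum]
      refine Finset.sum_congr rfl fun i _ => ?_
      rw [hcpm i]; simp [hu, hw]; ring
    rw [key j] at this
    linarith [this]
  have huw : u = w := by rw [← hsy, ← hsy', hyy']
  have hcc : ∀ i, c i = 0 := by
    intro i
    have := congrFun huw i
    simp [hu, hw] at this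
    have h2 : cp i = cm i := by
      rcases this with h | h
      · exact h
      · exact absurd h (ne_of_gt hε)
    rw [hcpm i, h2]; ring
  intro i
  have := hcc i.1
  simpa [hc, i.2] using this
end
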